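/- arXiv:2408.05611 — 4 statements merged into one kernel-verified Lean document; each statement's English description precedes it below -/
import Mathlib

section
/- The number of centrally-symmetric triangulations of a regular (2n+2)-gon is the central binomial coefficient binom(2n, n). -/
open scoped BigOperators

/-- `x` lies strictly inside the (clockwise) arc from `a` to `b` of the regular `m`-gon,
whose vertices are labeled by `ZMod m`. -/
def arcMem (m : ℕ) (a b x : ZMod m) : Prop :=
  0 < (x - a).val ∧ (x - a).val < (b - a).val

/-- Ordered version of the crossing predicate for the chords `{a,b}` and `{c,d}`:
exactly one of `c, d` lies strictly inside the open arc from `a` to `b`. -/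
def crossPairs (m : ℕ) (a b c d : ZMod m) : Prop :=
  (arcMem m a b c ∧ arcMem m b a d) ∨ (arcMem m a b d ∧ arcMem m b a c)

/-- Two chords of the convex `m`-gon cross (in their interiors). -/
def Crosses (m : ℕ) (e f : Sym2 (ZMod m)) : Prop :=
  ∃ a b c d : ZMod m, e = s(a, b) ∧ f = s(c, d) ∧ crossPairs m a b c d

/-- `e` is a diagonal of the convex `m`-gon: its endpoints are distinct and non-adjacent. -/
def IsDiagonal (m : ℕ) (e : Sym2 (ZMod m)) : Prop :=
  ∃ a b : ZMod m, e = s(a, b) ∧ a ≠ b ∧ b ≠ a + 1 ∧ a ≠ b + 1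

/-- A triangulation of the convex `m`-gon: a maximal set of pairwise non-crossing diagonals. -/
def IsTriangulation (m : ℕ) (T : Finset (Sym2 (ZMod m))) : Prop :=
  (∀ e ∈ T, IsDiagonal m e) ∧
  (∀ e ∈ T, ∀ f ∈ T, ¬ Crosses m e f) ∧
  (∀ e, IsDiagonal m e → e ∉ T → ∃ f ∈ T, Crosses m e f)

/-- A diagonal of the regular `(2n+2)`-gon is central if it joins two opposite vertices,
i.e. passes through the center of the polygon. -/
def IsCentral (n : ℕ) (e : Sym2 (ZMod (2 * n + 2))) : Prop :=
  ∃ a : ZMod (2 * n + 2), e = s(a, a + (n : ZMod (2 * n + 2)) + 1)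

/-- The central diagonal of the regular `(2n+2)`-gon with endpoint `a`. -/
def centralDiag (n : ℕ) (a : ZMod (2 * n + 2)) : Sym2 (ZMod (2 * n + 2)) :=
  s(a, a + (n : ZMod (2 * n + 2)) + 1)

/-- A centrally-symmetric triangulation of the regular `(2n+2)`-gon: a triangulation invariant
under 180-degree rotation, i.e. under adding `n+1` to every vertex label. -/
def CSTriangulation (n : ℕ) (T : Finset (Sym2 (ZMod (2 * n + 2)))) : Prop :=
  IsTriangulation (2 * n + 2) T ∧
  ∀ e ∈ T, Sym2.map (· + ((n : ZMod (2 * n + 2)) + 1)) e ∈ T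

namespace CSAux

def NC (c d : ℕ × ℕ) : Prop := c.1 < d.1 ∧ d.1 < c.2 ∧ c.2 < d.2

def XC (c d : ℕ × ℕ) : Prop := NC c d ∨ NC d c

def AbsDiag (k : ℕ) (c : ℕ × ℕ) : Prop :=
  c.1 + 2 ≤ c.2 ∧ c.2 ≤ k ∧ ¬(c.1 = 0 ∧ c.2 = k)

def AbsTri (k : ℕ) (A : Finset (ℕ × ℕ)) : Prop :=
  (∀ c ∈ A, AbsDiag k c) ∧ (∀ c ∈ A, ∀ d ∈ A, ¬ XC c d) ∧
  (∀ c, AbsDiag k c → c ∉ A → ∃ d ∈ A, XC c d)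

def splitJ (A : Finset (ℕ × ℕ)) : ℕ :=
  (insert 1 ((A.filter (fun c => c.1 = 0)).image Prod.snd)).max' (by simp)

lemma splitJ_one_le (A : Finset (ℕ × ℕ)) : 1 ≤ splitJ A :=
  Finset.le_max' _ 1 (Finset.mem_insert_self _ _)

lemma le_splitJ {A : Finset (ℕ × ℕ)} {i : ℕ} (h : (0, i) ∈ A) : i ≤ splitJ A := by
  apply Finset.le_max'
  apply Finset.mem_insert_of_mem
  exact Finset.mem_image.2 ⟨(0, i), Finset.mem_filter.2 ⟨h, rfl⟩, rfl⟩

lemma splitJ_spec (A : Finset (ℕ × ℕ)) : splitJ A = 1 ∨ (0, splitJ A) ∈ A := by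
  have h := Finset.max'_mem (insert 1 ((A.filter (fun c => c.1 = 0)).image Prod.snd)) (by simp)
  rw [Finset.mem_insert] at h
  rcases h with h | h
  · exact Or.inl h
  · right
    obtain ⟨c, hc, hc2⟩ := Finset.mem_image.1 h
    rw [Finset.mem_filter] at hc
    have : c = (0, splitJ A) := by
      ext
      · exact hc.2
      · exact hc2
    exact this ▸ hc.1

lemma splitJ_mem {A : Finset (ℕ × ℕ)} (h : 2 ≤ splitJ A) : (0, splitJ A) ∈ A := by
  rcases splitJ_spec A with h' | h'
  · omega
  · exact h'

lemma splitJ_le {k : ℕ} {A : Finset (ℕ × ℕ)} (hA : AbsTri k A) (hk : 2 ≤ k) :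
    splitJ A ≤ k - 1 := by
  rcases splitJ_spec A with h | h
  · rw [h]; omega
  · have := hA.1 _ h
    unfold AbsDiag at this
    dsimp only at this
    omega

lemma right_mem {k : ℕ} {A : Finset (ℕ × ℕ)} (hA : AbsTri k A)
    (h : splitJ A + 2 ≤ k) : (splitJ A, k) ∈ A := by
  set j := splitJ A with hj
  by_contra h'
  have hd : AbsDiag k (j, k) := by
    unfold AbsDiag
    have := splitJ_one_le A
    dsimp only
    omega
  obtain ⟨d, hdA, hX⟩ := hA.2.2 _ hd h'
  have hdd := hA.1 _ hdA
  unfold AbsDiag at hdd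
  rcases hX with hX | hX
  · unfold NC at hX; dsimp only at hX hdd; omega
  · -- d.1 < j < d.2 < k
    unfold NC at hX
    dsimp only at hX hdd
    by_cases hd1 : d.1 = 0
    · have : (0, d.2) ∈ A := by
        have : d = (0, d.2) := by ext <;> simp [hd1]
        exact this ▸ hdA
      have := le_splitJ this
      omega
    · have hjm : (0, j) ∈ A := splitJ_mem (by omega)
      have := hA.2.1 _ hjm _ hdA
      unfold XC NC at this
      dsimp only at this
      omega

lemma split_side {k : ℕ} {A : Finset (ℕ × ℕ)} (hA : AbsTri k A) {c : ℕ × ℕ}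
    (hc : c ∈ A) : c.2 ≤ splitJ A ∨ splitJ A ≤ c.1 := by
  set j := splitJ A with hj
  by_contra h'
  push_neg at h'
  have hcd := hA.1 _ hc
  unfold AbsDiag at hcd
  by_cases hd1 : c.1 = 0
  · have : (0, c.2) ∈ A := by
      have : c = (0, c.2) := by ext <;> simp [hd1]
      exact this ▸ hc
    have := le_splitJ this
    omega
  · have hjm : (0, j) ∈ A := splitJ_mem (by omega)
    have := hA.2.1 _ hjm _ hc
    unfold XC NC at this
    dsimp only at this
    omega


def lowerA (j : ℕ) (A : Finset (ℕ × ℕ)) : Finset (ℕ × ℕ) :=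
  A.filter (fun c => c.2 ≤ j ∧ c ≠ (0, j))

def upperA (j k : ℕ) (A : Finset (ℕ × ℕ)) : Finset (ℕ × ℕ) :=
  (A.filter (fun c => j ≤ c.1 ∧ c ≠ (j, k))).image (fun c => (c.1 - j, c.2 - j))

lemma mem_lowerA {j : ℕ} {A : Finset (ℕ × ℕ)} {c : ℕ × ℕ} :
    c ∈ lowerA j A ↔ c ∈ A ∧ c.2 ≤ j ∧ c ≠ (0, j) := by
  simp [lowerA, and_assoc]

lemma mem_upperA {j k : ℕ} {A : Finset (ℕ × ℕ)} {c : ℕ × ℕ} :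
    c ∈ upperA j k A ↔ ∃ d ∈ A, j ≤ d.1 ∧ d ≠ (j, k) ∧ c = (d.1 - j, d.2 - j) := by
  simp only [upperA, Finset.mem_image, Finset.mem_filter]
  constructor
  · rintro ⟨d, ⟨hd, h1, h2⟩, rfl⟩
    exact ⟨d, hd, h1, h2, rfl⟩
  · rintro ⟨d, hd, h1, h2, rfl⟩
    exact ⟨d, ⟨hd, h1, h2⟩, rfl⟩

lemma neq_pair {c : ℕ × ℕ} {a b : ℕ} : c ≠ (a, b) ↔ ¬(c.1 = a ∧ c.2 = b) := by
  constructor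
  · intro h h'
    exact h (by ext <;> simp [h'.1, h'.2])
  · intro h h'
    exact h (by rw [h']; simp)

lemma lower_absTri {k : ℕ} {A : Finset (ℕ × ℕ)} (hA : AbsTri k A) (hk : 2 ≤ k) :
    AbsTri (splitJ A) (lowerA (splitJ A) A) := by
  set j := splitJ A with hj
  have hj1 : 1 ≤ j := splitJ_one_le A
  have hjk : j ≤ k - 1 := splitJ_le hA hk
  refine ⟨?_, ?_, ?_⟩
  · intro c hc
    rw [mem_lowerA] at hc
    have := hA.1 _ hc.1
    unfold AbsDiag at this ⊢
    have hne := neq_pair.1 hc.2.2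
    omega
  · intro c hc d hd
    rw [mem_lowerA] at hc hd
    exact hA.2.1 _ hc.1 _ hd.1
  · intro c hc hcn
    have hcA : c ∉ A := by
      intro h
      apply hcn
      rw [mem_lowerA]
      unfold AbsDiag at hc
      refine ⟨h, hc.2.1, neq_pair.2 (by omega)⟩
    have hcd : AbsDiag k c := by
      unfold AbsDiag at hc ⊢
      omega
    obtain ⟨d, hdA, hX⟩ := hA.2.2 _ hcd hcA
    refine ⟨d, ?_, hX⟩
    rw [mem_lowerA]
    have hside := split_side hA hdA
    rw [← hj] at hside
    have hdd := hA.1 _ hdA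
    unfold AbsDiag at hc hdd
    unfold XC NC at hX
    refine ⟨hdA, by omega, neq_pair.2 (by omega)⟩

lemma upper_absTri {k : ℕ} {A : Finset (ℕ × ℕ)} (hA : AbsTri k A) (hk : 2 ≤ k) :
    AbsTri (k - splitJ A) (upperA (splitJ A) k A) := by
  set j := splitJ A with hj
  have hj1 : 1 ≤ j := splitJ_one_le A
  have hjk : j ≤ k - 1 := splitJ_le hA hk
  refine ⟨?_, ?_, ?_⟩
  · intro c hc
    rw [mem_upperA] at hc
    obtain ⟨d, hdA, h1, h2, rfl⟩ := hc
    have := hA.1 _ hdA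
    unfold AbsDiag at this ⊢
    have hne := neq_pair.1 h2
    dsimp only
    omega
  · intro c hc d hd
    rw [mem_upperA] at hc hd
    obtain ⟨c', hcA, hc1, hc2, rfl⟩ := hc
    obtain ⟨d', hdA, hd1, hd2, rfl⟩ := hd
    have hncross := hA.2.1 _ hcA _ hdA
    have hcd := hA.1 _ hcA
    have hdd := hA.1 _ hdA
    unfold AbsDiag at hcd hdd
    unfold XC NC at hncross ⊢
    dsimp only
    omega
  · intro c hc hcn
    set c' : ℕ × ℕ := (c.1 + j, c.2 + j) with hc'
    have hcd : AbsDiag k c' := by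
      unfold AbsDiag at hc ⊢
      rw [hc']
      dsimp only
      omega
    have hcA : c' ∉ A := by
      intro h
      apply hcn
      rw [mem_upperA]
      unfold AbsDiag at hc
      refine ⟨c', h, by rw [hc']; dsimp only; omega, neq_pair.2 ?_, by rw [hc']; dsimp only; ext <;> dsimp only <;> omega⟩
      rw [hc']
      dsimp only
      omega
    obtain ⟨d, hdA, hX⟩ := hA.2.2 _ hcd hcA
    have hside := split_side hA hdA
    rw [← hj] at hside
    have hdd := hA.1 _ hdA
    unfold AbsDiag at hc hdd
    have hd1 : j ≤ d.1 := by
      unfold XC NC at hX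
      rw [hc'] at hX
      dsimp only at hX
      omega
    have hd2 : d ≠ (j, k) := by
      rw [neq_pair]
      unfold XC NC at hX
      rw [hc'] at hX
      dsimp only at hX
      omega
    refine ⟨(d.1 - j, d.2 - j), mem_upperA.2 ⟨d, hdA, hd1, hd2, rfl⟩, ?_⟩
    unfold XC NC at hX ⊢
    rw [hc'] at hX
    dsimp only at hX ⊢
    omega

def buildA (j k : ℕ) (A1 A2 : Finset (ℕ × ℕ)) : Finset (ℕ × ℕ) :=
  ((A1 ∪ A2.image (fun c => (c.1 + j, c.2 + j))) ∪
    (if 2 ≤ j then {(0, j)} else ∅)) ∪ (if j + 2 ≤ k then {(j, k)} else ∅)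

lemma mem_buildA {j k : ℕ} {A1 A2 : Finset (ℕ × ℕ)} {c : ℕ × ℕ} :
    c ∈ buildA j k A1 A2 ↔
      c ∈ A1 ∨ (∃ d ∈ A2, c = (d.1 + j, d.2 + j)) ∨ (2 ≤ j ∧ c = (0, j)) ∨
        (j + 2 ≤ k ∧ c = (j, k)) := by
  simp only [buildA, Finset.mem_union, Finset.mem_image]
  constructor
  · rintro (((h | ⟨d, hd, rfl⟩) | h) | h)
    · exact Or.inl h
    · exact Or.inr (Or.inl ⟨d, hd, rfl⟩)
    · by_cases h2 : 2 ≤ j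
      · rw [if_pos h2, Finset.mem_singleton] at h
        exact Or.inr (Or.inr (Or.inl ⟨h2, h⟩))
      · rw [if_neg h2] at h; simp at h
    · by_cases h2 : j + 2 ≤ k
      · rw [if_pos h2, Finset.mem_singleton] at h
        exact Or.inr (Or.inr (Or.inr ⟨h2, h⟩))
      · rw [if_neg h2] at h; simp at h
  · rintro (h | ⟨d, hd, rfl⟩ | ⟨h2, rfl⟩ | ⟨h2, rfl⟩)
    · exact Or.inl (Or.inl (Or.inl h))
    · exact Or.inl (Or.inl (Or.inr ⟨d, hd, rfl⟩))
    · exact Or.inl (Or.inr (by rw [if_pos h2]; simp))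
    · exact Or.inr (by rw [if_pos h2]; simp)

section Build

variable {j k : ℕ} {A1 A2 : Finset (ℕ × ℕ)} (h1 : AbsTri j A1) (h2 : AbsTri (k - j) A2)
  (hj1 : 1 ≤ j) (hjk : j ≤ k - 1) (hk : 2 ≤ k)

include h1 h2 hj1 hjk hk

lemma buildA_absTri : AbsTri k (buildA j k A1 A2) := by
  refine ⟨?_, ?_, ?_⟩
  · intro c hc
    rw [mem_buildA] at hc
    unfold AbsDiag
    rcases hc with h | ⟨d, hd, rfl⟩ | ⟨h2', rfl⟩ | ⟨h2', rfl⟩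
    · have := h1.1 _ h
      unfold AbsDiag at this
      omega
    · have := h2.1 _ hd
      unfold AbsDiag at this
      dsimp only
      omega
    · dsimp only; omega
    · dsimp only; omega
  · intro c hc d hd
    rw [mem_buildA] at hc hd
    have key : ∀ e ∈ A1, e.1 + 1 ≤ e.2 ∧ e.2 ≤ j := by
      intro e he
      have := h1.1 _ he
      unfold AbsDiag at this
      omega
    have key2 : ∀ e ∈ A2, e.1 + 1 ≤ e.2 ∧ e.2 ≤ k - j := by
      intro e he
      have := h2.1 _ he
      unfold AbsDiag at this
      omega
    rcases hc with hc | ⟨e, he, rfl⟩ | ⟨hc2, rfl⟩ | ⟨hc2, rfl⟩ <;>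
      rcases hd with hd | ⟨f, hf, rfl⟩ | ⟨hd2, rfl⟩ | ⟨hd2, rfl⟩
    · exact h1.2.1 _ hc _ hd
    · have := key _ hc; have := key2 _ hf
      unfold XC NC; dsimp only; omega
    · have := key _ hc
      unfold XC NC; dsimp only; omega
    · have := key _ hc
      unfold XC NC; dsimp only; omega
    · have := key _ hd; have := key2 _ he
      unfold XC NC; dsimp only; omega
    · have hn := h2.2.1 _ he _ hf
      unfold XC NC at hn ⊢; dsimp only; omega
    · have := key2 _ he
      unfold XC NC; dsimp only; omega
    · have := key2 _ he
      unfold XC NC; dsimp only; omega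
    · have := key _ hd
      unfold XC NC; dsimp only; omega
    · have := key2 _ hf
      unfold XC NC; dsimp only; omega
    · unfold XC NC; dsimp only; omega
    · unfold XC NC; dsimp only; omega
    · have := key _ hd
      unfold XC NC; dsimp only; omega
    · have := key2 _ hf
      unfold XC NC; dsimp only; omega
    · unfold XC NC; dsimp only; omega
    · unfold XC NC; dsimp only; omega
  · intro c hc hcn
    rw [mem_buildA] at hcn
    push_neg at hcn
    obtain ⟨hn1, hn2, hn3, hn4⟩ := hcn
    unfold AbsDiag at hc
    rcases Nat.lt_or_ge c.1 j with hcj | hcj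
    · rcases Nat.lt_or_ge j c.2 with hjc | hjc
      · -- straddles j
        by_cases hc1 : c.1 = 0
        · -- c = (0, q), j < q < k : crosses (j,k)
          refine ⟨(j, k), mem_buildA.2 (Or.inr (Or.inr (Or.inr ⟨by omega, rfl⟩))), ?_⟩
          unfold XC NC; dsimp only; omega
        · -- crosses (0,j)
          refine ⟨(0, j), mem_buildA.2 (Or.inr (Or.inr (Or.inl ⟨by omega, rfl⟩))), ?_⟩
          unfold XC NC; dsimp only; omega
      · -- c within [0,j]
        have hcd : AbsDiag j c := by
          unfold AbsDiag
          constructor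
          · omega
          constructor
          · omega
          · intro hh
            exact hn3 (by omega) (by ext <;> omega)
        have hcA1 : c ∉ A1 := fun h => hn1 h
        obtain ⟨d, hd, hX⟩ := h1.2.2 _ hcd hcA1
        exact ⟨d, mem_buildA.2 (Or.inl hd), hX⟩
    · -- c within [j,k]
      have hcd : AbsDiag (k - j) (c.1 - j, c.2 - j) := by
        unfold AbsDiag
        dsimp only
        constructor
        · omega
        constructor
        · omega
        · intro hh
          exact hn4 (by omega) (by ext <;> dsimp only <;> omega)
      have hcA2 : (c.1 - j, c.2 - j) ∉ A2 := by
        intro h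
        exact hn2 _ h (by ext <;> dsimp only <;> omega)
      obtain ⟨d, hd, hX⟩ := h2.2.2 _ hcd hcA2
      refine ⟨(d.1 + j, d.2 + j), mem_buildA.2 (Or.inr (Or.inl ⟨d, hd, rfl⟩)), ?_⟩
      unfold XC NC at hX ⊢
      dsimp only at hX ⊢
      omega

lemma splitJ_buildA : splitJ (buildA j k A1 A2) = j := by
  apply le_antisymm
  · apply Finset.max'_le
    intro i hi
    rw [Finset.mem_insert] at hi
    rcases hi with rfl | hi
    · omega
    · obtain ⟨c, hc, rfl⟩ := Finset.mem_image.1 hi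
      rw [Finset.mem_filter] at hc
      obtain ⟨hc, hc1⟩ := hc
      rw [mem_buildA] at hc
      rcases hc with h | ⟨d, hd, rfl⟩ | ⟨h2', rfl⟩ | ⟨h2', rfl⟩
      · have := h1.1 _ h
        unfold AbsDiag at this
        omega
      · have := h2.1 _ hd
        dsimp only at hc1
        omega
      · dsimp only
        omega
      · dsimp only at hc1
        omega
  · by_cases h2' : 2 ≤ j
    · apply Finset.le_max'
      apply Finset.mem_insert_of_mem
      refine Finset.mem_image.2 ⟨(0, j), Finset.mem_filter.2 ⟨?_, rfl⟩, rfl⟩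
      exact mem_buildA.2 (Or.inr (Or.inr (Or.inl ⟨h2', rfl⟩)))
    · have := splitJ_one_le (buildA j k A1 A2)
      omega

lemma lower_buildA : lowerA j (buildA j k A1 A2) = A1 := by
  ext c
  rw [mem_lowerA, mem_buildA]
  constructor
  · rintro ⟨h | ⟨d, hd, rfl⟩ | ⟨h2', rfl⟩ | ⟨h2', rfl⟩, hc2, hc3⟩
    · exact h
    · have := h2.1 _ hd
      unfold AbsDiag at this
      dsimp only at hc2
      omega
    · exact absurd rfl hc3
    · dsimp only at hc2
      omega
  · intro h
    have := h1.1 _ h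
    unfold AbsDiag at this
    exact ⟨Or.inl h, this.2.1, neq_pair.2 (by omega)⟩

lemma upper_buildA : upperA j k (buildA j k A1 A2) = A2 := by
  ext c
  rw [mem_upperA]
  constructor
  · rintro ⟨d, hd, hd1, hd2, rfl⟩
    rw [mem_buildA] at hd
    rcases hd with h | ⟨e, he, rfl⟩ | ⟨h2', rfl⟩ | ⟨h2', rfl⟩
    · have := h1.1 _ h
      unfold AbsDiag at this
      omega
    · have : (e.1 + j - j, e.2 + j - j) = e := by ext <;> dsimp only <;> omega
      rw [this]
      exact he
    · dsimp only at hd1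
      omega
    · exact absurd rfl hd2
  · intro h
    have := h2.1 _ h
    unfold AbsDiag at this
    refine ⟨(c.1 + j, c.2 + j), mem_buildA.2 (Or.inr (Or.inl ⟨c, h, rfl⟩)), by dsimp only; omega,
      neq_pair.2 (by dsimp only; omega), by ext <;> dsimp only <;> omega⟩

end Build

lemma buildA_split {k : ℕ} {A : Finset (ℕ × ℕ)} (hA : AbsTri k A) (hk : 2 ≤ k) :
    buildA (splitJ A) k (lowerA (splitJ A) A) (upperA (splitJ A) k A) = A := by
  set j := splitJ A with hj
  ext c
  rw [mem_buildA]
  constructor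
  · rintro (h | ⟨d, hd, rfl⟩ | ⟨h2', rfl⟩ | ⟨h2', rfl⟩)
    · exact (mem_lowerA.1 h).1
    · obtain ⟨e, he, he1, he2, hee⟩ := mem_upperA.1 hd
      have := hA.1 _ he
      unfold AbsDiag at this
      have : (d.1 + j, d.2 + j) = e := by
        rw [hee]; ext <;> dsimp only <;> omega
      rw [this]
      exact he
    · exact splitJ_mem (by omega)
    · exact right_mem hA (by omega)
  · intro hc
    have hside := split_side hA hc
    rw [← hj] at hside
    have hcd := hA.1 _ hc
    unfold AbsDiag at hcd
    by_cases hc1 : c = (0, j)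
    · refine Or.inr (Or.inr (Or.inl ⟨?_, hc1⟩))
      rw [hc1] at hcd
      dsimp only at hcd
      omega
    · by_cases hc2 : c = (j, k)
      · refine Or.inr (Or.inr (Or.inr ⟨?_, hc2⟩))
        rw [hc2] at hcd
        dsimp only at hcd
        omega
      · rcases hside with h | h
        · exact Or.inl (mem_lowerA.2 ⟨hc, h, hc1⟩)
        · refine Or.inr (Or.inl ⟨(c.1 - j, c.2 - j), mem_upperA.2 ⟨c, hc, h, hc2, rfl⟩, ?_⟩)
          ext <;> dsimp only <;> omega

lemma absTri_subset {k : ℕ} {A : Finset (ℕ × ℕ)} (h : AbsTri k A) :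
    A ⊆ Finset.range (k+1) ×ˢ Finset.range (k+1) := by
  intro c hc
  have := h.1 c hc
  simp only [Finset.mem_product, Finset.mem_range]
  unfold AbsDiag at this
  omega

instance absTriFinite (k : ℕ) : Finite {A : Finset (ℕ × ℕ) // AbsTri k A} := by
  apply Finite.of_injective
    (fun A => (⟨A.1, Finset.mem_powerset.2 (absTri_subset A.2)⟩ :
      ((Finset.range (k+1) ×ˢ Finset.range (k+1)).powerset : Finset _)))
  intro A B h
  simpa [Subtype.ext_iff] using h

lemma absTri_le_two {k : ℕ} (hk : k ≤ 2) {A : Finset (ℕ × ℕ)} : AbsTri k A ↔ A = ∅ := by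
  constructor
  · intro h
    rw [Finset.eq_empty_iff_forall_notMem]
    intro c hc
    have := h.1 c hc
    unfold AbsDiag at this; omega
  · rintro rfl
    refine ⟨by simp, by simp, ?_⟩
    intro c hc _
    unfold AbsDiag at hc; omega

lemma card_absTri_le_two {k : ℕ} (hk : k ≤ 2) :
    Nat.card {A : Finset (ℕ × ℕ) // AbsTri k A} = 1 := by
  have : Unique {A : Finset (ℕ × ℕ) // AbsTri k A} :=
    { default := ⟨∅, (absTri_le_two hk).2 rfl⟩
      uniq := fun A => Subtype.ext ((absTri_le_two hk).1 A.2) }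
  exact Nat.card_unique

lemma nat_card_sigma {ι : Type*} [Fintype ι] (F : ι → Type*) [∀ i, Finite (F i)] :
    Nat.card (Σ i, F i) = ∑ i, Nat.card (F i) := by
  letI : ∀ i, Fintype (F i) := fun i => Fintype.ofFinite _
  rw [Nat.card_eq_fintype_card, Fintype.card_sigma]
  exact Finset.sum_congr rfl fun i _ => (Nat.card_eq_fintype_card).symm

theorem absTri_card : ∀ k : ℕ, 1 ≤ k →
    Nat.card {A : Finset (ℕ × ℕ) // AbsTri k A} = catalan (k - 1) := by
  intro k
  induction k using Nat.strong_induction_on with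
  | _ k ih =>
    intro hk
    by_cases hk2 : k ≤ 2
    · rw [card_absTri_le_two hk2]
      interval_cases k
      · simp [catalan_zero]
      · simp [catalan_one]
    · push_neg at hk2
      have hk2' : 2 ≤ k := by omega
      set S := Σ i : Fin (k-1), {B : Finset (ℕ×ℕ) // AbsTri (↑i+1) B} ×
        {C : Finset (ℕ×ℕ) // AbsTri (k-(↑i+1)) C} with hS
      have hfin : ∀ i : Fin (k-1), (↑i : ℕ) + 1 ≤ k - 1 := fun i => by
        have := i.2; omega
      let G : S → {A : Finset (ℕ × ℕ) // AbsTri k A} := fun x =>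
        ⟨buildA (↑x.1+1) k x.2.1.1 x.2.2.1,
          buildA_absTri x.2.1.2 x.2.2.2 (by omega) (hfin x.1) hk2'⟩
      have hGval : ∀ x : S, (G x).1 = buildA (↑x.1+1) k x.2.1.1 x.2.2.1 := fun _ => rfl
      have hinj : Function.Injective G := by
        rintro ⟨i, ⟨B, hB⟩, ⟨C, hC⟩⟩ ⟨i', ⟨B', hB'⟩, ⟨C', hC'⟩⟩ h
        have hval : buildA (↑i+1) k B C = buildA (↑i'+1) k B' C' := by
          have := congrArg Subtype.val h
          simpa [G] using this
        have hi : (↑i : ℕ) + 1 = ↑i' + 1 := by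
          rw [← splitJ_buildA hB hC (by omega) (hfin i) hk2', hval,
            splitJ_buildA hB' hC' (by omega) (hfin i') hk2']
        obtain rfl : i = i' := Fin.ext (by omega)
        have hBB : B = B' := by
          rw [← lower_buildA hB hC (by omega) (hfin i) hk2', hval,
            lower_buildA hB' hC' (by omega) (hfin i) hk2']
        have hCC : C = C' := by
          rw [← upper_buildA hB hC (by omega) (hfin i) hk2', hval,
            upper_buildA hB' hC' (by omega) (hfin i) hk2']
        subst hBB; subst hCC; rfl
      have hsurj : Function.Surjective G := by
        rintro ⟨A, hA⟩
        have hj1 := splitJ_one_le A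
        have hjk := splitJ_le hA hk2'
        have hjj : splitJ A - 1 + 1 = splitJ A := by omega
        refine ⟨⟨⟨splitJ A - 1, by omega⟩, ⟨⟨lowerA (splitJ A) A, ?_⟩,
          ⟨upperA (splitJ A) k A, ?_⟩⟩⟩, ?_⟩
        · show AbsTri (splitJ A - 1 + 1) _
          rw [hjj]
          exact lower_absTri hA hk2'
        · show AbsTri (k - (splitJ A - 1 + 1)) _
          rw [hjj]
          exact upper_absTri hA hk2'
        · apply Subtype.ext
          show buildA (splitJ A - 1 + 1) k (lowerA (splitJ A) A) (upperA (splitJ A) k A) = A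
          rw [hjj]
          exact buildA_split hA hk2'
      have hcard := Nat.card_eq_of_bijective G ⟨hinj, hsurj⟩
      rw [← hcard, hS, nat_card_sigma]
      have hsum : ∀ i : Fin (k-1),
          Nat.card ({B : Finset (ℕ×ℕ) // AbsTri (↑i+1) B} ×
            {C : Finset (ℕ×ℕ) // AbsTri (k-(↑i+1)) C}) =
          catalan ↑i * catalan (k - 2 - ↑i) := by
        intro i
        have h2 := i.2
        rw [Nat.card_prod, ih (↑i+1) (by omega) (by omega),
          ih (k - (↑i+1)) (by omega) (by omega)]
        have he : k - (↑i + 1) - 1 = k - 2 - ↑i := by omega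
        rw [he]
        simp
      rw [Finset.sum_congr rfl (fun i _ => hsum i)]
      rw [Fin.sum_univ_eq_sum_range (fun i => catalan i * catalan (k - 2 - i)) (k-1)]
      have hcat : catalan (k - 1) = ∑ i ∈ Finset.range (k-1),
          catalan i * catalan (k - 2 - i) := by
        rw [show k - 1 = (k - 2) + 1 from by omega, catalan_succ,
          Fin.sum_univ_eq_sum_range (fun i => catalan i * catalan (k - 2 - i)) ((k-2)+1)]
      rw [hcat]

end CSAux

section Glue

open CSAux

variable {m : ℕ} [NeZero m]

def NArc (i j x : ℕ) : Prop := (i < x ∧ x < j) ∨ (j < i ∧ (i < x ∨ x < j))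

def NX (i j r s : ℕ) : Prop := (NArc i j r ∧ NArc j i s) ∨ (NArc i j s ∧ NArc j i r)

lemma mod_helper {m x i : ℕ} (hx : x < m) (hi : i < m) :
    (x + m - i) % m = if i ≤ x then x - i else x + m - i := by
  rcases le_or_gt i x with h | h
  · rw [if_pos h]
    have he : x + m - i = (x - i) + m := by omega
    rw [he, Nat.add_mod_right]
    exact Nat.mod_eq_of_lt (by omega)
  · rw [if_neg (by omega)]
    exact Nat.mod_eq_of_lt (by omega)

lemma sub_val (a : ZMod m) {i j : ℕ} (hi : i < m) (hj : j < m) :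
    ((a + (i : ZMod m)) - (a + (j : ZMod m))).val = (i + m - j) % m := by
  have h1 : (a + (i : ZMod m)) - (a + (j : ZMod m)) = ((i + m - j : ℕ) : ZMod m) := by
    have hc : ((i + m - j : ℕ) : ZMod m) = (i : ZMod m) + m - j := by
      push_cast [Nat.cast_sub (show j ≤ i + m by omega)]
      ring
    rw [hc, ZMod.natCast_self]
    ring
  rw [h1, ZMod.val_natCast]

lemma arcMem_nat (a : ZMod m) {i j x : ℕ} (hi : i < m) (hj : j < m) (hx : x < m) :
    arcMem m (a + (i : ZMod m)) (a + (j : ZMod m)) (a + (x : ZMod m)) ↔ NArc i j x := by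
  unfold arcMem NArc
  rw [sub_val a hx hi, sub_val a hj hi, mod_helper hx hi, mod_helper hj hi]
  split_ifs <;> omega

lemma crossPairs_swap_left {a b c d : ZMod m} :
    crossPairs m a b c d ↔ crossPairs m b a c d := by
  unfold crossPairs; tauto

lemma crossPairs_swap_right {a b c d : ZMod m} :
    crossPairs m a b c d ↔ crossPairs m a b d c := by
  unfold crossPairs; tauto

lemma crosses_iff {a b c d : ZMod m} :
    Crosses m s(a, b) s(c, d) ↔ crossPairs m a b c d := by
  constructor
  · rintro ⟨a', b', c', d', he, hf, hcp⟩
    rw [Sym2.eq_iff] at he hf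
    rcases he with ⟨rfl, rfl⟩ | ⟨rfl, rfl⟩ <;> rcases hf with ⟨rfl, rfl⟩ | ⟨rfl, rfl⟩ <;>
      [skip; rw [crossPairs_swap_right] at hcp;
       rw [crossPairs_swap_left] at hcp;
       rw [crossPairs_swap_left, crossPairs_swap_right] at hcp] <;> exact hcp
  · intro h
    exact ⟨a, b, c, d, rfl, rfl, h⟩

lemma crosses_nat (a : ZMod m) {i j r s : ℕ} (hi : i < m) (hj : j < m) (hr : r < m)
    (hs : s < m) :
    Crosses m s(a + (i : ZMod m), a + (j : ZMod m)) s(a + (r : ZMod m), a + (s : ZMod m)) ↔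
      NX i j r s := by
  rw [crosses_iff]
  unfold crossPairs NX
  rw [arcMem_nat a hi hj hr, arcMem_nat a hj hi hs, arcMem_nat a hi hj hs,
    arcMem_nat a hj hi hr]

lemma vtx_inj (a : ZMod m) {i j : ℕ} (hi : i < m) (hj : j < m) :
    a + (i : ZMod m) = a + (j : ZMod m) ↔ i = j := by
  rw [add_right_inj]
  constructor
  · intro h
    have := congrArg ZMod.val h
    rwa [ZMod.val_natCast, ZMod.val_natCast, Nat.mod_eq_of_lt hi, Nat.mod_eq_of_lt hj] at this
  · rintro rfl; rfl

lemma vtx_succ (a : ZMod m) {i j : ℕ} (hi : i < m) (hj : j < m) :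
    a + (j : ZMod m) = a + (i : ZMod m) + 1 ↔ j = (i + 1) % m := by
  have h1 : a + (i : ZMod m) + 1 = a + ((((i + 1) % m : ℕ)) : ZMod m) := by
    rw [ZMod.natCast_mod]
    push_cast
    ring
  rw [h1, vtx_inj a hj (Nat.mod_lt _ (NeZero.pos m))]

lemma isDiag_iff {x y : ZMod m} :
    IsDiagonal m s(x, y) ↔ (x ≠ y ∧ y ≠ x + 1 ∧ x ≠ y + 1) := by
  constructor
  · rintro ⟨a, b, he, h1, h2, h3⟩
    rw [Sym2.eq_iff] at he
    rcases he with ⟨rfl, rfl⟩ | ⟨rfl, rfl⟩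
    · exact ⟨h1, h2, h3⟩
    · exact ⟨h1.symm, fun h => h3 h, fun h => h2 h⟩
  · rintro ⟨h1, h2, h3⟩
    exact ⟨x, y, rfl, h1, h2, h3⟩

lemma isDiag_nat (a : ZMod m) {i j : ℕ} (hij : i < j) (hj : j < m) :
    IsDiagonal m s(a + (i : ZMod m), a + (j : ZMod m)) ↔ (i + 2 ≤ j ∧ j + 2 ≤ i + m) := by
  rw [isDiag_iff]
  rw [Ne, vtx_inj a (by omega) hj, Ne, vtx_succ a (by omega) hj, Ne, vtx_succ a hj (by omega)]
  have h1 : (i + 1) % m = if i + 1 = m then 0 else i + 1 := by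
    split_ifs with h
    · rw [h, Nat.mod_self]
    · exact Nat.mod_eq_of_lt (by omega)
  have h2 : (j + 1) % m = if j + 1 = m then 0 else j + 1 := by
    split_ifs with h
    · rw [h, Nat.mod_self]
    · exact Nat.mod_eq_of_lt (by omega)
  rw [h1, h2]
  split_ifs <;> omega

lemma vtx_decomp (a x : ZMod m) : x = a + (((x - a).val : ℕ) : ZMod m) := by
  rw [ZMod.natCast_rightInverse (x - a)]
  ring

lemma vch_eq_iff (a : ZMod m) {u v u' v' : ℕ} (hu : u < m) (hv : v < m) (hu' : u' < m)
    (hv' : v' < m) :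
    s(a + (u : ZMod m), a + (v : ZMod m)) = s(a + (u' : ZMod m), a + (v' : ZMod m)) ↔
      (u = u' ∧ v = v') ∨ (u = v' ∧ v = u') := by
  rw [Sym2.eq_iff, vtx_inj a hu hu', vtx_inj a hv hv', vtx_inj a hu hv', vtx_inj a hv hu']

end Glue

section MainGlue

open CSAux

instance instNZ (n : ℕ) : NeZero (2 * n + 2) := ⟨by omega⟩

/-- chord of the polygon given by offsets from a base vertex -/
def vch (n : ℕ) (a : ZMod (2 * n + 2)) (c : ℕ × ℕ) : Sym2 (ZMod (2 * n + 2)) :=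
  s(a + (c.1 : ZMod (2 * n + 2)), a + (c.2 : ZMod (2 * n + 2)))

/-- antipodal index pair -/
def aidx (n : ℕ) (c : ℕ × ℕ) : ℕ × ℕ :=
  ((c.1 + (n + 1)) % (2 * n + 2), (c.2 + (n + 1)) % (2 * n + 2))

def buildT (n : ℕ) (a : ZMod (2 * n + 2)) (A : Finset (ℕ × ℕ)) :
    Finset (Sym2 (ZMod (2 * n + 2))) :=
  insert (centralDiag n a) (A.image (vch n a) ∪ A.image (fun c => vch n a (aidx n c)))

variable {n : ℕ}

lemma add_half_mod {x : ℕ} (hx : x < 2 * n + 2) :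
    (x + (n + 1)) % (2 * n + 2) = if x < n + 1 then x + (n + 1) else x + (n + 1) - (2 * n + 2) := by
  split_ifs with h
  · exact Nat.mod_eq_of_lt (by omega)
  · have h2 : x + (n + 1) - (2 * n + 2) < 2 * n + 2 := by omega
    conv_lhs => rw [show x + (n + 1) = (x + (n + 1) - (2 * n + 2)) + (2 * n + 2) from by omega]
    rw [Nat.add_mod_right]
    exact Nat.mod_eq_of_lt h2

lemma aidx_lt {c : ℕ × ℕ} (h1 : c.1 < 2 * n + 2) (h2 : c.2 < 2 * n + 2) :
    (aidx n c).1 < 2 * n + 2 ∧ (aidx n c).2 < 2 * n + 2 := by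
  unfold aidx
  constructor <;> exact Nat.mod_lt _ (by omega)

lemma aidx_aidx {c : ℕ × ℕ} (h1 : c.1 < 2 * n + 2) (h2 : c.2 < 2 * n + 2) :
    aidx n (aidx n c) = c := by
  unfold aidx
  have e1 := add_half_mod (n := n) h1
  have e2 := add_half_mod (n := n) h2
  ext
  · show ((c.1 + (n+1)) % (2*n+2) + (n + 1)) % (2 * n + 2) = c.1
    rw [e1]
    split_ifs with h
    · rw [add_half_mod (by omega)]
      split_ifs <;> omega
    · rw [add_half_mod (by omega)]
      split_ifs <;> omega
  · show ((c.2 + (n+1)) % (2*n+2) + (n + 1)) % (2 * n + 2) = c.2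
    rw [e2]
    split_ifs with h
    · rw [add_half_mod (by omega)]
      split_ifs <;> omega
    · rw [add_half_mod (by omega)]
      split_ifs <;> omega

lemma vtx_rot (a : ZMod (2 * n + 2)) (t : ℕ) :
    a + (t : ZMod (2 * n + 2)) + ((n : ZMod (2 * n + 2)) + 1) =
      a + ((((t + (n + 1)) % (2 * n + 2) : ℕ)) : ZMod (2 * n + 2)) := by
  rw [ZMod.natCast_mod]
  push_cast
  ring

lemma map_vch (a : ZMod (2 * n + 2)) (c : ℕ × ℕ) :
    Sym2.map (· + ((n : ZMod (2 * n + 2)) + 1)) (vch n a c) = vch n a (aidx n c) := by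
  unfold vch aidx
  simp only [Sym2.map_pair_eq]
  rw [vtx_rot a c.1, vtx_rot a c.2]

lemma vch_swap (a : ZMod (2 * n + 2)) (p q : ℕ) : vch n a (p, q) = vch n a (q, p) := by
  unfold vch
  exact Sym2.eq_swap

lemma central_eq (a : ZMod (2 * n + 2)) : centralDiag n a = vch n a (0, n + 1) := by
  unfold centralDiag vch
  dsimp only
  rw [show a + (((0:ℕ)) : ZMod (2*n+2)) = a from by simp,
    show a + (((n+1 : ℕ)) : ZMod (2*n+2)) = a + (n : ZMod (2*n+2)) + 1 from by push_cast; ring]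

lemma mem_buildT {a : ZMod (2 * n + 2)} {A : Finset (ℕ × ℕ)} {e : Sym2 (ZMod (2 * n + 2))} :
    e ∈ buildT n a A ↔
      e = centralDiag n a ∨ (∃ c ∈ A, e = vch n a c) ∨ (∃ c ∈ A, e = vch n a (aidx n c)) := by
  simp only [buildT, Finset.mem_insert, Finset.mem_union, Finset.mem_image]
  constructor
  · rintro (h | (⟨c, hc, rfl⟩ | ⟨c, hc, rfl⟩))
    · exact Or.inl h
    · exact Or.inr (Or.inl ⟨c, hc, rfl⟩)
    · exact Or.inr (Or.inr ⟨c, hc, rfl⟩)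
  · rintro (h | (⟨c, hc, rfl⟩ | ⟨c, hc, rfl⟩))
    · exact Or.inl h
    · exact Or.inr (Or.inl ⟨c, hc, rfl⟩)
    · exact Or.inr (Or.inr ⟨c, hc, rfl⟩)

def dshort (n : ℕ) (e : Sym2 (ZMod (2 * n + 2))) : ℕ :=
  Sym2.lift ⟨fun u v => min (v - u).val (u - v).val, fun u v => by simp [min_comm]⟩ e

lemma dshort_vch (a : ZMod (2 * n + 2)) {p q : ℕ} (hp : p < q) (hq : q < 2 * n + 2) :
    dshort n (vch n a (p, q)) = min (q - p) (p + (2 * n + 2) - q) := by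
  unfold dshort vch
  rw [Sym2.lift_mk]
  dsimp only
  rw [sub_val a hq (by omega), sub_val a (by omega : p < 2*n+2) hq,
    mod_helper hq (by omega), mod_helper (by omega : p < 2*n+2) hq]
  split_ifs <;> omega

lemma crosses_vch (a : ZMod (2 * n + 2)) {c d : ℕ × ℕ} (h1 : c.1 < 2*n+2) (h2 : c.2 < 2*n+2)
    (h3 : d.1 < 2*n+2) (h4 : d.2 < 2*n+2) :
    Crosses (2 * n + 2) (vch n a c) (vch n a d) ↔ NX c.1 c.2 d.1 d.2 := by
  unfold vch
  exact crosses_nat a h1 h2 h3 h4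

lemma vch_isDiag_iff (a : ZMod (2 * n + 2)) {c : ℕ × ℕ} (h1 : c.1 < c.2) (h2 : c.2 < 2*n+2) :
    IsDiagonal (2 * n + 2) (vch n a c) ↔ (c.1 + 2 ≤ c.2 ∧ c.2 + 2 ≤ c.1 + (2*n+2)) := by
  unfold vch
  exact isDiag_nat a h1 h2

lemma chord_decomp (a : ZMod (2 * n + 2)) {e : Sym2 (ZMod (2 * n + 2))}
    (he : IsDiagonal (2 * n + 2) e) :
    ∃ p q : ℕ, p < q ∧ q < 2 * n + 2 ∧ e = vch n a (p, q) ∧ 2 ≤ q - p ∧ q ≤ p + 2 * n := by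
  have hd := he
  obtain ⟨x, y, rfl, hxy, -, -⟩ := he
  set p0 := (x - a).val with hp0
  set q0 := (y - a).val with hq0
  have hx : x = a + ((p0 : ℕ) : ZMod (2*n+2)) := vtx_decomp a x
  have hy : y = a + ((q0 : ℕ) : ZMod (2*n+2)) := vtx_decomp a y
  have hpm : p0 < 2*n+2 := ZMod.val_lt _
  have hqm : q0 < 2*n+2 := ZMod.val_lt _
  have hne : p0 ≠ q0 := by
    intro h
    apply hxy
    rw [hx, hy, h]
  rcases Nat.lt_or_ge p0 q0 with h | h
  · have heq : s(x, y) = vch n a (p0, q0) := by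
      unfold vch
      rw [← hx, ← hy]
    refine ⟨p0, q0, h, hqm, heq, ?_, ?_⟩ <;>
    · have := (vch_isDiag_iff a h hqm).1 (heq ▸ hd)
      omega
  · have hlt : q0 < p0 := by omega
    have heq : s(x, y) = vch n a (q0, p0) := by
      unfold vch
      rw [← hx, ← hy]
      exact Sym2.eq_swap
    refine ⟨q0, p0, hlt, hpm, heq, ?_, ?_⟩ <;>
    · have := (vch_isDiag_iff a hlt hpm).1 (heq ▸ hd)
      omega

lemma central_isDiag (hn : 1 ≤ n) (a : ZMod (2 * n + 2)) :
    IsDiagonal (2 * n + 2) (centralDiag n a) := by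
  rw [central_eq]
  rw [vch_isDiag_iff a (by omega : (((0:ℕ),n+1) : ℕ × ℕ).1 < ((0:ℕ),n+1).2) (by omega)]
  omega

lemma neg_cast (t : ℕ) (ht : t ≤ 2 * n + 2) :
    (((2 * n + 2 - t : ℕ)) : ZMod (2 * n + 2)) = -(t : ZMod (2 * n + 2)) := by
  have : ((2*n+2 - t : ℕ) : ZMod (2*n+2)) + (t : ZMod (2*n+2)) = 0 := by
    rw [← Nat.cast_add]
    rw [show 2*n+2 - t + t = 2*n+2 from by omega]
    exact ZMod.natCast_self _
  linear_combination this

lemma max_chord_decomp {f : Sym2 (ZMod (2 * n + 2))} (hd : IsDiagonal (2 * n + 2) f)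
    (hnotc : ∀ a, f ≠ centralDiag n a) :
    ∃ x w, f = vch n x (0, w) ∧ dshort n f = w ∧ 2 ≤ w ∧ w ≤ n := by
  have hd' := hd
  obtain ⟨x, y, rfl, hxy, -, -⟩ := hd
  set t := (y - x).val with ht
  have htm : t < 2 * n + 2 := ZMod.val_lt _
  have ht0 : 0 < t := by
    rcases Nat.eq_zero_or_pos t with h | h
    · exfalso
      apply hxy
      exact (sub_eq_zero.mp ((ZMod.val_eq_zero _).1 h)).symm
    · exact h
  have hy : y = x + ((t : ℕ) : ZMod (2*n+2)) := vtx_decomp x y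
  have hfx : s(x, y) = vch n x (0, t) := by
    unfold vch
    dsimp only
    rw [show x + (((0:ℕ)) : ZMod (2*n+2)) = x from by simp, ← hy]
  have hdiag := (vch_isDiag_iff x (show ((0,t) : ℕ × ℕ).1 < ((0,t) : ℕ × ℕ).2 from ht0)
    htm).1 (hfx ▸ hd')
  have htc : t ≠ n + 1 := by
    intro h
    apply hnotc x
    rw [central_eq, hfx, h]
  have hds : dshort n s(x, y) = min t (2*n+2 - t) := by
    rw [hfx, dshort_vch x ht0 htm]
    omega
  rcases Nat.lt_or_ge t (n+1) with hc | hc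
  · exact ⟨x, t, hfx, by rw [hds]; omega, by omega, by omega⟩
  · have hx : x = y + (((2*n+2 - t : ℕ)) : ZMod (2*n+2)) := by
      rw [neg_cast t (by omega)]
      rw [hy]
      ring
    have hfy : s(x, y) = vch n y (0, 2*n+2 - t) := by
      unfold vch
      dsimp only
      rw [show y + (((0:ℕ)) : ZMod (2*n+2)) = y from by simp, ← hx]
      exact Sym2.eq_swap
    exact ⟨y, 2*n+2 - t, hfy, by rw [hds]; omega, by omega, by omega⟩

lemma diameter_free (hn : 1 ≤ n) {T : Finset (Sym2 (ZMod (2 * n + 2)))}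
    (hdiag : ∀ e ∈ T, IsDiagonal (2 * n + 2) e)
    (hnc : ∀ e ∈ T, ∀ f ∈ T, ¬ Crosses (2 * n + 2) e f)
    (hsym : ∀ e ∈ T, Sym2.map (· + ((n : ZMod (2 * n + 2)) + 1)) e ∈ T)
    {x : ZMod (2 * n + 2)} {w : ℕ} (hf : vch n x (0, w) ∈ T) (hw2 : 2 ≤ w) (hwn : w ≤ n)
    (hwmax : ∀ g ∈ T, dshort n g ≤ w) :
    ∀ g ∈ T, ¬ Crosses (2 * n + 2) (centralDiag n x) g := by
  intro g hg hcross
  obtain ⟨p, q, hpq, hq, rfl, h2, h2n⟩ := chord_decomp x (hdiag g hg)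
  have hp : p < 2 * n + 2 := by omega
  have hg' : vch n x (aidx n (p, q)) ∈ T := by
    rw [← map_vch]
    exact hsym _ hg
  have hnc1 : ¬ Crosses (2*n+2) (vch n x (0, w)) (vch n x (p, q)) := hnc _ hf _ hg
  have hnc2 : ¬ Crosses (2*n+2) (vch n x (0, w)) (vch n x (aidx n (p, q))) := hnc _ hf _ hg'
  have hwid : dshort n (vch n x (p, q)) ≤ w := hwmax _ hg
  rw [dshort_vch x hpq hq] at hwid
  rw [central_eq] at hcross
  rw [crosses_vch x (by omega) (by omega) hp hq] at hcross
  rw [crosses_vch x (by omega) (by omega) hp hq] at hnc1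
  unfold aidx at hnc2
  rw [add_half_mod hp, add_half_mod hq] at hnc2
  split_ifs at hnc2 with hc1 hc2 hc2 <;>
    rw [crosses_vch x (by omega) (by omega) (by omega) (by omega)] at hnc2 <;>
    unfold NX NArc at hcross hnc1 hnc2 <;>
    dsimp only at hcross hnc1 hnc2 <;>
    omega

lemma central_exists (hn : 1 ≤ n) {T : Finset (Sym2 (ZMod (2 * n + 2)))}
    (hT : CSTriangulation n T) : ∃ a, centralDiag n a ∈ T := by
  by_contra hno
  push_neg at hno
  obtain ⟨⟨hdiag, hnc, hmax⟩, hsym⟩ := hT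
  rcases Finset.eq_empty_or_nonempty T with rfl | hne
  · obtain ⟨f, hf, -⟩ := hmax _ (central_isDiag hn 0) (Finset.notMem_empty _)
    exact absurd hf (Finset.notMem_empty _)
  · obtain ⟨f, hfT, hfmax⟩ := Finset.exists_max_image T (dshort n) hne
    obtain ⟨x, w, hfeq, hfd, hw2, hwn⟩ :=
      max_chord_decomp (hdiag f hfT) (fun a h => hno a (h ▸ hfT))
    have hwmax : ∀ g ∈ T, dshort n g ≤ w := fun g hg => hfd ▸ hfmax g hg
    obtain ⟨g, hgT, hcr⟩ := hmax _ (central_isDiag hn x) (hno x)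
    exact diameter_free hn hdiag hnc hsym (hfeq ▸ hfT) hw2 hwn hwmax g hgT hcr

lemma central_unique {T : Finset (Sym2 (ZMod (2 * n + 2)))}
    (hnc : ∀ e ∈ T, ∀ f ∈ T, ¬ Crosses (2 * n + 2) e f)
    {a c : ZMod (2 * n + 2)} (ha : centralDiag n a ∈ T) (hc : centralDiag n c ∈ T) :
    centralDiag n c = centralDiag n a := by
  set t := (c - a).val with ht
  have hceq : c = a + ((t : ℕ) : ZMod (2*n+2)) := vtx_decomp a c
  have htm : t < 2 * n + 2 := ZMod.val_lt _
  rcases Nat.eq_zero_or_pos t with ht0 | ht0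
  · rw [hceq, ht0]
    norm_num
  rcases Nat.lt_trichotomy t (n + 1) with htc | htc | htc
  · exfalso
    have hcc : centralDiag n c = vch n a (t, t + (n+1)) := by
      unfold centralDiag vch
      dsimp only
      rw [hceq]
      push_cast
      rw [show a + (t : ZMod (2*n+2)) + (n : ZMod (2*n+2)) + 1 =
        a + ((t : ZMod (2*n+2)) + ((n : ZMod (2*n+2)) + 1)) from by ring]
    have := hnc _ ha _ hc
    rw [central_eq, hcc, crosses_vch a (by omega) (by omega) (by omega) (by omega)] at this
    unfold NX NArc at this
    dsimp only at this
    omega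
  · -- c = a + (n+1) : same diagonal
    have hca : c + (n : ZMod (2*n+2)) + 1 = a := by
      rw [hceq, htc]
      push_cast
      rw [show a + ((n : ZMod (2*n+2)) + 1) + (n : ZMod (2*n+2)) + 1 =
        a + (((2*n+2 : ℕ)) : ZMod (2*n+2)) from by push_cast; ring, ZMod.natCast_self]
      ring
    unfold centralDiag
    rw [hca, hceq, htc]
    push_cast
    rw [show a + ((n : ZMod (2*n+2)) + 1) = a + (n : ZMod (2*n+2)) + 1 from by ring]
    exact Sym2.eq_swap
  · exfalso
    have hcast : ((t : ZMod (2*n+2)) + ((n : ZMod (2*n+2)) + 1)) =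
        (((t - (n+1) : ℕ)) : ZMod (2*n+2)) := by
      have : (((t + (n+1) : ℕ)) : ZMod (2*n+2)) = (((t - (n+1) : ℕ)) : ZMod (2*n+2)) := by
        rw [show t + (n+1) = (t - (n+1)) + (2*n+2) from by omega, Nat.cast_add,
          ZMod.natCast_self, add_zero]
      push_cast at this
      rw [← this]
    have hcc : centralDiag n c = vch n a (t - (n+1), t) := by
      unfold centralDiag vch
      dsimp only
      rw [hceq]
      rw [show a + (t : ZMod (2*n+2)) + (n : ZMod (2*n+2)) + 1 =
        a + ((t : ZMod (2*n+2)) + ((n : ZMod (2*n+2)) + 1)) from by ring, hcast]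
      exact Sym2.eq_swap
    have := hnc _ ha _ hc
    rw [central_eq, hcc, crosses_vch a (by omega) (by omega) (by omega) (by omega)] at this
    unfold NX NArc at this
    dsimp only at this
    omega

lemma crosses_map {m : ℕ} [NeZero m] (r : ZMod m) (e f : Sym2 (ZMod m)) :
    Crosses m (Sym2.map (· + r) e) (Sym2.map (· + r) f) ↔ Crosses m e f := by
  induction e using Sym2.ind with
  | _ u v =>
    induction f using Sym2.ind with
    | _ p q =>
      rw [Sym2.map_pair_eq, Sym2.map_pair_eq, crosses_iff, crosses_iff]
      unfold crossPairs arcMem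
      have hs : ∀ z w : ZMod m, (z + r) - (w + r) = z - w := by intros; ring
      simp only [hs]

lemma crosses_fh (a : ZMod (2*n+2)) {c d : ℕ × ℕ} (hc1 : c.1 < c.2) (hc2 : c.2 ≤ n+1)
    (hd1 : d.1 < d.2) (hd2 : d.2 ≤ n+1) :
    Crosses (2*n+2) (vch n a c) (vch n a d) ↔ XC c d := by
  rw [crosses_vch a (by omega) (by omega) (by omega) (by omega)]
  unfold NX NArc XC NC
  omega

lemma not_crosses_central_fh (a : ZMod (2*n+2)) {c : ℕ × ℕ} (hc1 : c.1 < c.2)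
    (hc2 : c.2 ≤ n+1) :
    ¬ Crosses (2*n+2) (centralDiag n a) (vch n a c) ∧
      ¬ Crosses (2*n+2) (vch n a c) (centralDiag n a) := by
  rw [central_eq]
  rw [crosses_vch a (by omega) (by omega) (by omega) (by omega),
    crosses_vch a (by omega) (by omega) (by omega) (by omega)]
  unfold NX NArc
  dsimp only
  omega

lemma not_crosses_fh_sh (a : ZMod (2*n+2)) {c d : ℕ × ℕ} (hc1 : c.1 < c.2) (hc2 : c.2 ≤ n+1)
    (hd1 : d.1 < d.2) (hd2 : d.2 < 2*n+2) (hd3 : d.1 = 0 ∧ n+1 ≤ d.2 ∨ n+1 ≤ d.1) :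
    ¬ Crosses (2*n+2) (vch n a c) (vch n a d) ∧
      ¬ Crosses (2*n+2) (vch n a d) (vch n a c) := by
  rw [crosses_vch a (by omega) (by omega) (by omega) (by omega),
    crosses_vch a (by omega) (by omega) (by omega) (by omega)]
  unfold NX NArc
  omega

lemma crosses_straddle (a : ZMod (2*n+2)) {p q : ℕ} (hp : 0 < p) (hp2 : p < n+1)
    (hq : n+1 < q) (hq2 : q < 2*n+2) :
    Crosses (2*n+2) (vch n a (p, q)) (centralDiag n a) := by
  rw [central_eq, crosses_vch a (by omega) (by omega) (by omega) (by omega)]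
  unfold NX NArc
  dsimp only
  omega

lemma central_as_vch (a b : ZMod (2 * n + 2)) :
    ∃ s, s ≤ n ∧ centralDiag n b = vch n a (s, s + (n+1)) := by
  set t := (b - a).val with ht
  have hbeq : b = a + ((t : ℕ) : ZMod (2*n+2)) := vtx_decomp a b
  have htm : t < 2 * n + 2 := ZMod.val_lt _
  have hkey : ∀ s : ℕ, s + (n+1) < 2*n+2 → b = a + ((s : ℕ) : ZMod (2*n+2)) →
      centralDiag n b = vch n a (s, s + (n+1)) := by
    intro s hs hb
    unfold centralDiag vch
    dsimp only
    rw [hb]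
    rw [show a + ((s : ℕ) : ZMod (2*n+2)) + (n : ZMod (2*n+2)) + 1 =
      a + (((s + (n+1) : ℕ)) : ZMod (2*n+2)) from by push_cast; ring]
  rcases Nat.lt_or_ge t (n+1) with hc | hc
  · exact ⟨t, by omega, hkey t (by omega) hbeq⟩
  · refine ⟨t - (n+1), by omega, ?_⟩
    have hb2 : b + (n : ZMod (2*n+2)) + 1 = a + (((t - (n+1) : ℕ)) : ZMod (2*n+2)) := by
      rw [hbeq]
      rw [show a + ((t : ℕ) : ZMod (2*n+2)) + (n : ZMod (2*n+2)) + 1 =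
        a + (((t + (n+1) : ℕ)) : ZMod (2*n+2)) from by push_cast; ring]
      rw [show ((t + (n+1) : ℕ) : ZMod (2*n+2)) = (((t - (n+1) : ℕ)) : ZMod (2*n+2)) from by
        rw [show t + (n+1) = (t - (n+1)) + (2*n+2) from by omega, Nat.cast_add,
          ZMod.natCast_self, add_zero]]
    have hsum : t - (n+1) + (n+1) = t := by omega
    unfold centralDiag vch
    dsimp only
    rw [hb2, hsum, ← hbeq]
    exact Sym2.eq_swap

lemma vch_ne_central (a b : ZMod (2 * n + 2)) {c : ℕ × ℕ} (hc1 : c.1 < c.2) (hc2 : c.2 ≤ n+1)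
    (hc3 : c ≠ (0, n+1)) : vch n a c ≠ centralDiag n b := by
  intro h
  obtain ⟨s, hs, hbs⟩ := central_as_vch a b
  rw [hbs] at h
  unfold vch at h
  rw [vch_eq_iff a (by omega) (by omega) (by omega) (by omega)] at h
  have := neq_pair.1 hc3
  omega

lemma map_central (b : ZMod (2 * n + 2)) :
    Sym2.map (· + ((n : ZMod (2*n+2)) + 1)) (centralDiag n b) = centralDiag n b := by
  rw [central_eq, map_vch]
  rw [show aidx n ((0 : ℕ), n+1) = (n+1, 0) from by
    unfold aidx
    dsimp only
    rw [Nat.zero_add, Nat.mod_eq_of_lt (by omega), show n+1+(n+1) = 2*n+2 from by omega,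
      Nat.mod_self]]
  rw [vch_swap]

lemma vch_aidx_ne_central (a b : ZMod (2 * n + 2)) {c : ℕ × ℕ} (hc1 : c.1 < c.2)
    (hc2 : c.2 ≤ n+1) (hc3 : c ≠ (0, n+1)) : vch n a (aidx n c) ≠ centralDiag n b := by
  intro h
  have := congrArg (Sym2.map (· + ((n : ZMod (2*n+2)) + 1))) h
  rw [map_vch, aidx_aidx (show c.1 < 2*n+2 by omega) (show c.2 < 2*n+2 by omega),
    map_central] at this
  exact vch_ne_central a b hc1 hc2 hc3 this

lemma central_inj {a b : ZMod (2 * n + 2)} (ha : a.val ≤ n) (hb : b.val ≤ n)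
    (h : centralDiag n b = centralDiag n a) : b = a := by
  unfold centralDiag at h
  rw [Sym2.eq_iff] at h
  rcases h with ⟨h1, -⟩ | ⟨h1, h2⟩
  · exact h1
  · exfalso
    have hv : (a + ((n+1 : ℕ) : ZMod (2*n+2))).val = a.val + (n+1) := by
      rw [ZMod.val_add, ZMod.val_natCast, Nat.mod_eq_of_lt (show n+1 < 2*n+2 by omega)]
      exact Nat.mod_eq_of_lt (by omega)
    have hba : b = a + ((n+1 : ℕ) : ZMod (2*n+2)) := by
      rw [h1]
      push_cast
      ring
    rw [hba, hv] at hb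
    omega

lemma aidx_fh_lo {c : ℕ × ℕ} (h1 : c.1 < c.2) (h2 : c.2 ≤ n) :
    aidx n c = (c.1 + (n+1), c.2 + (n+1)) := by
  unfold aidx
  have e1 := add_half_mod (n := n) (x := c.1) (by omega)
  have e2 := add_half_mod (n := n) (x := c.2) (by omega)
  rw [if_pos (by omega)] at e1
  rw [if_pos (by omega)] at e2
  rw [e1, e2]

lemma aidx_fh_hi {c : ℕ × ℕ} (h1 : c.1 < c.2) (h2 : c.2 = n+1) :
    aidx n c = (c.1 + (n+1), 0) := by
  unfold aidx
  have e1 := add_half_mod (n := n) (x := c.1) (by omega)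
  rw [if_pos (by omega)] at e1
  rw [e1, h2, show n+1+(n+1) = 2*n+2 from by omega, Nat.mod_self]

lemma crosses_sh_sh (a : ZMod (2*n+2)) {c d : ℕ × ℕ} (hc1 : c.1 < c.2) (hc2 : c.2 ≤ n+1)
    (hd1 : d.1 < d.2) (hd2 : d.2 ≤ n+1) :
    Crosses (2*n+2) (vch n a (aidx n c)) (vch n a (aidx n d)) ↔ XC c d := by
  rw [← map_vch, ← map_vch, crosses_map, crosses_fh a hc1 hc2 hd1 hd2]

lemma sh_resolve (a : ZMod (2*n+2)) {d : ℕ × ℕ} (h1 : d.1 < d.2) (h2 : d.2 ≤ n+1) :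
    ∃ p q : ℕ, vch n a (aidx n d) = vch n a (p, q) ∧ p < q ∧ q < 2*n+2 ∧
      (p = 0 ∧ n+1 ≤ q ∨ n+1 ≤ p) := by
  rcases Nat.lt_or_ge d.2 (n+1) with hlo | hhi
  · refine ⟨d.1 + (n+1), d.2 + (n+1), ?_, by omega, by omega, by omega⟩
    rw [aidx_fh_lo h1 (by omega)]
  · have h2' : d.2 = n+1 := by omega
    refine ⟨0, d.1 + (n+1), ?_, by omega, by omega, by omega⟩
    rw [aidx_fh_hi h1 h2', vch_swap]

def phiT (n : ℕ) (a : ZMod (2*n+2)) (T : Finset (Sym2 (ZMod (2*n+2)))) : Finset (ℕ × ℕ) :=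
  (Finset.range (n+2) ×ˢ Finset.range (n+2)).filter
    (fun c => c.1 < c.2 ∧ c ≠ (0, n+1) ∧ vch n a c ∈ T)

lemma mem_phiT {a : ZMod (2*n+2)} {T : Finset (Sym2 (ZMod (2*n+2)))} {c : ℕ × ℕ} :
    c ∈ phiT n a T ↔ c.1 < c.2 ∧ c.2 ≤ n+1 ∧ c ≠ (0, n+1) ∧ vch n a c ∈ T := by
  unfold phiT
  rw [Finset.mem_filter, Finset.mem_product, Finset.mem_range, Finset.mem_range]
  constructor
  · rintro ⟨⟨h1, h2⟩, h3, h4, h5⟩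
    exact ⟨h3, by omega, h4, h5⟩
  · rintro ⟨h1, h2, h3, h4⟩
    exact ⟨⟨by omega, by omega⟩, h1, h3, h4⟩

lemma mem_buildT_fh {a : ZMod (2*n+2)} {A : Finset (ℕ × ℕ)} (hA : AbsTri (n+1) A)
    {c : ℕ × ℕ} (hc1 : c.1 < c.2) (hc2 : c.2 ≤ n+1) (hc3 : c ≠ (0, n+1)) :
    vch n a c ∈ buildT n a A ↔ c ∈ A := by
  constructor
  · intro h
    rcases mem_buildT.1 h with h' | ⟨d, hd, hvd⟩ | ⟨d, hd, hvd⟩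
    · exact absurd h' (vch_ne_central a a hc1 hc2 hc3)
    · have hdd := hA.1 _ hd
      unfold AbsDiag at hdd
      unfold vch at hvd
      rw [vch_eq_iff a (by omega) (by omega) (by omega) (by omega)] at hvd
      have hcd : c = d := by
        rcases hvd with ⟨e1, e2⟩ | ⟨e1, e2⟩
        · ext
          · exact e1
          · exact e2
        · exact absurd e1 (by omega)
      rwa [hcd]
    · exfalso
      have hdd := hA.1 _ hd
      unfold AbsDiag at hdd
      rcases Nat.lt_or_ge d.2 (n+1) with hlo | hhi
      · rw [aidx_fh_lo (by omega) (by omega)] at hvd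
        unfold vch at hvd
        dsimp only at hvd
        rw [vch_eq_iff a (by omega) (by omega) (by omega) (by omega)] at hvd
        omega
      · have hd2 : d.2 = n+1 := by omega
        rw [aidx_fh_hi (by omega) hd2] at hvd
        unfold vch at hvd
        dsimp only at hvd
        rw [vch_eq_iff a (by omega) (by omega) (by omega) (by omega)] at hvd
        have hne := neq_pair.1 hc3
        have hdne : ¬(d.1 = 0 ∧ d.2 = n+1) := hdd.2.2
        omega
  · intro h
    exact mem_buildT.2 (Or.inr (Or.inl ⟨c, h, rfl⟩))

lemma buildT_CS (hn : 1 ≤ n) {a : ZMod (2*n+2)} {A : Finset (ℕ × ℕ)}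
    (hA : AbsTri (n+1) A) : CSTriangulation n (buildT n a A) := by
  have hbnd : ∀ c ∈ A, c.1 + 2 ≤ c.2 ∧ c.2 ≤ n+1 ∧ ¬(c.1 = 0 ∧ c.2 = n+1) := by
    intro c hc
    have := hA.1 _ hc
    unfold AbsDiag at this
    exact this
  refine ⟨⟨?_, ?_, ?_⟩, ?_⟩
  · -- diagonals
    intro e he
    rcases mem_buildT.1 he with rfl | ⟨c, hc, rfl⟩ | ⟨c, hc, rfl⟩
    · exact central_isDiag hn a
    · have hb := hbnd _ hc
      rw [vch_isDiag_iff a (show c.1 < c.2 from by omega) (show c.2 < 2*n+2 from by omega)]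
      omega
    · have hb := hbnd _ hc
      rcases Nat.lt_or_ge c.2 (n+1) with hlo | hhi
      · rw [aidx_fh_lo (by omega) (by omega)]
        rw [vch_isDiag_iff a (show c.1 + (n+1) < c.2 + (n+1) from by omega)
          (show c.2 + (n+1) < 2*n+2 from by omega)]
        dsimp only
        omega
      · have hc2 : c.2 = n+1 := by omega
        rw [aidx_fh_hi (by omega) hc2, vch_swap]
        rw [vch_isDiag_iff a (show (0:ℕ) < c.1 + (n+1) from by omega)
          (show c.1 + (n+1) < 2*n+2 from by omega)]
        dsimp only
        omega
  · -- noncrossing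
    intro e he f hf
    rcases mem_buildT.1 he with rfl | ⟨c, hc, rfl⟩ | ⟨c, hc, rfl⟩ <;>
      rcases mem_buildT.1 hf with rfl | ⟨d, hd, rfl⟩ | ⟨d, hd, rfl⟩
    · have h := (not_crosses_central_fh a (show (0:ℕ) < n+1 from by omega)
        (show ((0:ℕ),n+1).2 ≤ n+1 from le_refl _)).1
      rwa [← central_eq] at h
    · have hb := hbnd _ hd
      exact (not_crosses_central_fh a (show d.1 < d.2 from by omega) (by omega)).1
    · have hb := hbnd _ hd
      obtain ⟨p, q, heq, hpq, hq, hsh⟩ := sh_resolve a (show d.1 < d.2 from by omega)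
        (by omega)
      rw [heq, central_eq]
      exact (not_crosses_fh_sh a (show (0:ℕ) < n+1 from by omega)
        (show ((0:ℕ),n+1).2 ≤ n+1 from le_refl _) hpq hq hsh).1
    · have hb := hbnd _ hc
      exact (not_crosses_central_fh a (show c.1 < c.2 from by omega) (by omega)).2
    · have hbc := hbnd _ hc
      have hbd := hbnd _ hd
      rw [crosses_fh a (show c.1 < c.2 from by omega) (by omega)
        (show d.1 < d.2 from by omega) (by omega)]
      exact hA.2.1 _ hc _ hd
    · have hbc := hbnd _ hc
      have hbd := hbnd _ hd
      obtain ⟨p, q, heq, hpq, hq, hsh⟩ := sh_resolve a (show d.1 < d.2 from by omega)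
        (by omega)
      rw [heq]
      exact (not_crosses_fh_sh a (show c.1 < c.2 from by omega) (by omega) hpq hq hsh).1
    · have hb := hbnd _ hc
      obtain ⟨p, q, heq, hpq, hq, hsh⟩ := sh_resolve a (show c.1 < c.2 from by omega)
        (by omega)
      rw [heq, central_eq]
      exact (not_crosses_fh_sh a (show (0:ℕ) < n+1 from by omega)
        (show ((0:ℕ),n+1).2 ≤ n+1 from le_refl _) hpq hq hsh).2
    · have hbc := hbnd _ hc
      have hbd := hbnd _ hd
      obtain ⟨p, q, heq, hpq, hq, hsh⟩ := sh_resolve a (show c.1 < c.2 from by omega)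
        (by omega)
      rw [heq]
      exact (not_crosses_fh_sh a (show d.1 < d.2 from by omega) (by omega) hpq hq hsh).2
    · have hbc := hbnd _ hc
      have hbd := hbnd _ hd
      rw [crosses_sh_sh a (show c.1 < c.2 from by omega) (by omega)
        (show d.1 < d.2 from by omega) (by omega)]
      exact hA.2.1 _ hc _ hd
  · -- maximality
    intro e hd hnot
    obtain ⟨p, q, hpq, hq, rfl, h2, h2n⟩ := chord_decomp a hd
    by_cases hql : q ≤ n+1
    · by_cases hcent : (p, q) = ((0:ℕ), n+1)
      · exfalso
        apply hnot
        have : vch n a (p, q) = centralDiag n a := by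
          rw [hcent, central_eq]
        rw [this]
        exact mem_buildT.2 (Or.inl rfl)
      · have habs : AbsDiag (n+1) (p, q) := by
          unfold AbsDiag
          dsimp only
          have := neq_pair.1 hcent
          omega
        have hnA : (p, q) ∉ A := fun h =>
          hnot (mem_buildT.2 (Or.inr (Or.inl ⟨_, h, rfl⟩)))
        obtain ⟨d, hdA, hX⟩ := hA.2.2 _ habs hnA
        have hb := hbnd _ hdA
        refine ⟨vch n a d, mem_buildT.2 (Or.inr (Or.inl ⟨d, hdA, rfl⟩)), ?_⟩
        rw [crosses_fh a hpq hql (show d.1 < d.2 from by omega) (by omega)]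
        exact hX
    · push_neg at hql
      by_cases hpl : 0 < p ∧ p < n+1
      · exact ⟨centralDiag n a, mem_buildT.2 (Or.inl rfl),
          crosses_straddle a hpl.1 hpl.2 hql hq⟩
      · have hp0 : p = 0 ∨ n+1 ≤ p := by omega
        -- build the first-half mirror pair
        obtain ⟨pair, hpair1, hpair2, hkey, habs⟩ :
            ∃ pair : ℕ × ℕ, pair.1 < pair.2 ∧ pair.2 ≤ n+1 ∧
              vch n a (aidx n pair) = vch n a (p, q) ∧ AbsDiag (n+1) pair := by
          rcases hp0 with rfl | hge
          · refine ⟨(q - (n+1), n+1), by dsimp only; omega, by dsimp only; omega, ?_, ?_⟩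
            · rw [aidx_fh_hi (by dsimp only; omega) rfl]
              dsimp only
              rw [show q - (n+1) + (n+1) = q from by omega, vch_swap]
            · unfold AbsDiag
              dsimp only
              omega
          · refine ⟨(p - (n+1), q - (n+1)), by dsimp only; omega, by dsimp only; omega, ?_, ?_⟩
            · rw [aidx_fh_lo (by dsimp only; omega) (by dsimp only; omega)]
              dsimp only
              rw [show p - (n+1) + (n+1) = p from by omega,
                show q - (n+1) + (n+1) = q from by omega]
            · unfold AbsDiag
              dsimp only
              omega
        have hnpA : pair ∉ A := by
          intro h
          apply hnot
          rw [← hkey]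
          exact mem_buildT.2 (Or.inr (Or.inr ⟨pair, h, rfl⟩))
        obtain ⟨d, hdA, hX⟩ := hA.2.2 _ habs hnpA
        have hb := hbnd _ hdA
        refine ⟨vch n a (aidx n d), mem_buildT.2 (Or.inr (Or.inr ⟨d, hdA, rfl⟩)), ?_⟩
        rw [← hkey, crosses_sh_sh a hpair1 hpair2 (show d.1 < d.2 from by omega) (by omega)]
        exact hX
  · -- symmetry
    intro e he
    rcases mem_buildT.1 he with rfl | ⟨c, hc, rfl⟩ | ⟨c, hc, rfl⟩
    · rw [map_central]
      exact mem_buildT.2 (Or.inl rfl)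
    · rw [map_vch]
      exact mem_buildT.2 (Or.inr (Or.inr ⟨c, hc, rfl⟩))
    · have hb := hbnd _ hc
      rw [map_vch, aidx_aidx (show c.1 < 2*n+2 from by omega) (show c.2 < 2*n+2 from by omega)]
      exact mem_buildT.2 (Or.inr (Or.inl ⟨c, hc, rfl⟩))

lemma mirror_pair (a : ZMod (2*n+2)) {p q : ℕ} (hpq : p < q) (hq : q < 2*n+2)
    (h2 : 2 ≤ q - p) (h2n : q ≤ p + 2*n) (hsh : p = 0 ∧ n+2 ≤ q ∨ n+1 ≤ p) :
    ∃ pair : ℕ × ℕ, pair.1 < pair.2 ∧ pair.2 ≤ n+1 ∧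
      vch n a (aidx n pair) = vch n a (p, q) ∧ AbsDiag (n+1) pair := by
  rcases hsh with ⟨rfl, hge⟩ | hge
  · refine ⟨(q - (n+1), n+1), by dsimp only; omega, by dsimp only; omega, ?_, ?_⟩
    · rw [aidx_fh_hi (by dsimp only; omega) rfl]
      dsimp only
      rw [show q - (n+1) + (n+1) = q from by omega, vch_swap]
    · unfold AbsDiag
      dsimp only
      omega
  · refine ⟨(p - (n+1), q - (n+1)), by dsimp only; omega, by dsimp only; omega, ?_, ?_⟩
    · rw [aidx_fh_lo (by dsimp only; omega) (by dsimp only; omega)]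
      dsimp only
      rw [show p - (n+1) + (n+1) = p from by omega,
        show q - (n+1) + (n+1) = q from by omega]
    · unfold AbsDiag
      dsimp only
      omega

lemma phiT_absTri (hn : 1 ≤ n) {a : ZMod (2*n+2)} {T : Finset (Sym2 (ZMod (2*n+2)))}
    (hT : CSTriangulation n T) (hcen : centralDiag n a ∈ T) : AbsTri (n+1) (phiT n a T) := by
  obtain ⟨⟨hdiag, hnc, hmax⟩, hsym⟩ := hT
  refine ⟨?_, ?_, ?_⟩
  · intro c hc
    rw [mem_phiT] at hc
    obtain ⟨h1, h2, h3, h4⟩ := hc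
    have := (vch_isDiag_iff a h1 (by omega)).1 (hdiag _ h4)
    unfold AbsDiag
    have := neq_pair.1 h3
    omega
  · intro c hc d hd
    rw [mem_phiT] at hc hd
    have h := hnc _ hc.2.2.2 _ hd.2.2.2
    rwa [crosses_fh a hc.1 hc.2.1 hd.1 hd.2.1] at h
  · intro c hc hcn
    unfold AbsDiag at hc
    have h1 : c.1 < c.2 := by omega
    have h3 : c ≠ (0, n+1) := neq_pair.2 (by omega)
    have hvT : vch n a c ∉ T := fun h => hcn (mem_phiT.2 ⟨h1, by omega, h3, h⟩)
    have hvd : IsDiagonal (2*n+2) (vch n a c) := by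
      rw [vch_isDiag_iff a h1 (by omega)]
      omega
    obtain ⟨f, hfT, hcr⟩ := hmax _ hvd hvT
    obtain ⟨p, q, hpq, hq, rfl, hd2, hd2n⟩ := chord_decomp a (hdiag _ hfT)
    by_cases hql : q ≤ n+1
    · by_cases hcent : (p, q) = ((0:ℕ), n+1)
      · exfalso
        have : vch n a (p, q) = centralDiag n a := by rw [hcent, central_eq]
        rw [this] at hcr
        exact (not_crosses_central_fh a h1 (by omega)).2 hcr
      · refine ⟨(p, q), mem_phiT.2 ⟨hpq, hql, hcent, hfT⟩, ?_⟩
        rwa [crosses_fh a h1 (by omega) hpq hql] at hcr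
    · push_neg at hql
      by_cases hpl : 0 < p ∧ p < n+1
      · exfalso
        exact hnc _ hfT _ hcen (crosses_straddle a hpl.1 hpl.2 hql hq)
      · exfalso
        have hsh : p = 0 ∧ n+1 ≤ q ∨ n+1 ≤ p := by omega
        exact (not_crosses_fh_sh a h1 (by omega) hpq hq hsh).1 hcr

lemma buildT_phiT (hn : 1 ≤ n) {a : ZMod (2*n+2)} {T : Finset (Sym2 (ZMod (2*n+2)))}
    (hT : CSTriangulation n T) (hcen : centralDiag n a ∈ T) :
    buildT n a (phiT n a T) = T := by
  obtain ⟨⟨hdiag, hnc, hmax⟩, hsym⟩ := hT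
  ext e
  constructor
  · intro he
    rcases mem_buildT.1 he with rfl | ⟨c, hc, rfl⟩ | ⟨c, hc, rfl⟩
    · exact hcen
    · exact (mem_phiT.1 hc).2.2.2
    · rw [← map_vch]
      exact hsym _ (mem_phiT.1 hc).2.2.2
  · intro he
    obtain ⟨p, q, hpq, hq, rfl, hd2, hd2n⟩ := chord_decomp a (hdiag _ he)
    by_cases hql : q ≤ n+1
    · by_cases hcent : (p, q) = ((0:ℕ), n+1)
      · apply mem_buildT.2
        left
        rw [hcent, central_eq]
      · exact mem_buildT.2 (Or.inr (Or.inl ⟨(p, q),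
          mem_phiT.2 ⟨hpq, hql, hcent, he⟩, rfl⟩))
    · push_neg at hql
      by_cases hpl : 0 < p ∧ p < n+1
      · exact absurd (crosses_straddle a hpl.1 hpl.2 hql hq) (hnc _ he _ hcen)
      · have hsh : p = 0 ∧ n+2 ≤ q ∨ n+1 ≤ p := by omega
        obtain ⟨pair, hp1, hp2, hkey, habs⟩ := mirror_pair a hpq hq hd2 hd2n hsh
        have hpairT : vch n a pair ∈ T := by
          have h1 : Sym2.map (· + ((n : ZMod (2*n+2)) + 1)) (vch n a (aidx n pair)) =
              vch n a pair := by
            rw [map_vch, aidx_aidx (show pair.1 < 2*n+2 from by omega)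
              (show pair.2 < 2*n+2 from by omega)]
          rw [← h1, hkey]
          exact hsym _ he
        have hpmem : pair ∈ phiT n a T := by
          unfold AbsDiag at habs
          exact mem_phiT.2 ⟨hp1, hp2, neq_pair.2 (by omega), hpairT⟩
        rw [← hkey]
        exact mem_buildT.2 (Or.inr (Or.inr ⟨pair, hpmem, rfl⟩))

lemma phiT_buildT {a : ZMod (2*n+2)} {A : Finset (ℕ × ℕ)} (hA : AbsTri (n+1) A) :
    phiT n a (buildT n a A) = A := by
  ext c
  rw [mem_phiT]
  constructor
  · rintro ⟨h1, h2, h3, h4⟩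
    exact (mem_buildT_fh hA h1 h2 h3).1 h4
  · intro h
    have hb := hA.1 _ h
    unfold AbsDiag at hb
    refine ⟨by omega, by omega, neq_pair.2 (by omega), ?_⟩
    exact mem_buildT.2 (Or.inr (Or.inl ⟨c, h, rfl⟩))

lemma central_in_buildT {a b : ZMod (2*n+2)} {A : Finset (ℕ × ℕ)} (hA : AbsTri (n+1) A)
    (h : centralDiag n b ∈ buildT n a A) : centralDiag n b = centralDiag n a := by
  rcases mem_buildT.1 h with h' | ⟨c, hc, hv⟩ | ⟨c, hc, hv⟩
  · exact h'
  · exfalso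
    have hb := hA.1 _ hc
    unfold AbsDiag at hb
    exact vch_ne_central a b (by omega) (by omega) (neq_pair.2 (by omega)) hv.symm
  · exfalso
    have hb := hA.1 _ hc
    unfold AbsDiag at hb
    exact vch_aidx_ne_central a b (by omega) (by omega) (neq_pair.2 (by omega)) hv.symm

lemma central_shift (b : ZMod (2*n+2)) :
    centralDiag n (b + ((n : ZMod (2*n+2)) + 1)) = centralDiag n b := by
  unfold centralDiag
  rw [show b + ((n : ZMod (2*n+2)) + 1) + (n : ZMod (2*n+2)) + 1 = b from by
    rw [show b + ((n : ZMod (2*n+2)) + 1) + (n : ZMod (2*n+2)) + 1 =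
      b + (((2*n+2 : ℕ)) : ZMod (2*n+2)) from by push_cast; ring, ZMod.natCast_self, add_zero]]
  rw [show b + ((n : ZMod (2*n+2)) + 1) = b + (n : ZMod (2*n+2)) + 1 from by ring]
  exact Sym2.eq_swap

lemma central_rep (hn : 1 ≤ n) {T : Finset (Sym2 (ZMod (2*n+2)))}
    (hT : CSTriangulation n T) : ∃ a : ZMod (2*n+2), a.val ≤ n ∧ centralDiag n a ∈ T := by
  obtain ⟨a0, ha0⟩ := central_exists hn hT
  have hv : a0.val < 2*n+2 := ZMod.val_lt _
  rcases le_or_gt a0.val n with h | h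
  · exact ⟨a0, h, ha0⟩
  · refine ⟨a0 + ((n : ZMod (2*n+2)) + 1), ?_, by rw [central_shift]; exact ha0⟩
    have hc : ((n : ZMod (2*n+2)) + 1) = (((n+1 : ℕ)) : ZMod (2*n+2)) := by push_cast; ring
    rw [hc, ZMod.val_add, ZMod.val_natCast, Nat.mod_eq_of_lt (show n+1 < 2*n+2 by omega)]
    rw [add_half_mod hv]
    split_ifs <;> omega

lemma card_reps : Nat.card {a : ZMod (2*n+2) // a.val ≤ n} = n + 1 := by
  have e : {a : ZMod (2*n+2) // a.val ≤ n} ≃ Fin (n+1) :=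
    { toFun := fun x => ⟨x.1.val, by have := x.2; omega⟩
      invFun := fun i => ⟨((i : ℕ) : ZMod (2*n+2)), by
        rw [ZMod.val_natCast, Nat.mod_eq_of_lt (by omega)]
        omega⟩
      left_inv := fun x => Subtype.ext (ZMod.natCast_rightInverse x.1)
      right_inv := fun i => Fin.ext (by
        simp only [ZMod.val_natCast]
        exact Nat.mod_eq_of_lt (by omega)) }
  rw [Nat.card_congr e, Nat.card_eq_fintype_card, Fintype.card_fin]

lemma key_count (hn : 1 ≤ n) :
    Nat.card {T : Finset (Sym2 (ZMod (2 * n + 2))) // CSTriangulation n T} =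
      (n + 1) * catalan n := by
  let D := {a : ZMod (2*n+2) // a.val ≤ n} × {A : Finset (ℕ × ℕ) // AbsTri (n+1) A}
  let F : D → {T : Finset (Sym2 (ZMod (2 * n + 2))) // CSTriangulation n T} :=
    fun x => ⟨buildT n x.1.1 x.2.1, buildT_CS hn x.2.2⟩
  have hinj : Function.Injective F := by
    rintro ⟨⟨a, ha⟩, ⟨A, hA⟩⟩ ⟨⟨a', ha'⟩, ⟨A', hA'⟩⟩ h
    have hval : buildT n a A = buildT n a' A' := by
      have := congrArg Subtype.val h
      simpa [F] using this
    have hc : centralDiag n a' ∈ buildT n a A := by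
      rw [hval]
      exact mem_buildT.2 (Or.inl rfl)
    have haa : a' = a := central_inj ha ha' (central_in_buildT hA hc)
    have hAA : A = A' := by
      rw [← phiT_buildT (a := a) hA, hval, haa, phiT_buildT (a := a) hA']
    exact Prod.ext (Subtype.ext haa.symm) (Subtype.ext hAA)
  have hsurj : Function.Surjective F := by
    rintro ⟨T, hT⟩
    obtain ⟨a, ha, hcen⟩ := central_rep hn hT
    exact ⟨⟨⟨a, ha⟩, ⟨phiT n a T, phiT_absTri hn hT hcen⟩⟩,
      Subtype.ext (buildT_phiT hn hT hcen)⟩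
  rw [← Nat.card_eq_of_bijective F ⟨hinj, hsurj⟩]
  show Nat.card D = (n + 1) * catalan n
  rw [Nat.card_prod, card_reps, absTri_card (n+1) (by omega)]
  simp

end MainGlue


/-- The number of centrally-symmetric triangulations of a regular `(2n+2)`-gon
is the central binomial coefficient `binom(2n, n)`. -/
theorem csTriangulation_count (n : ℕ) :
    Nat.card {T : Finset (Sym2 (ZMod (2 * n + 2))) // CSTriangulation n T} =
      Nat.choose (2 * n) n := by
  rcases Nat.eq_zero_or_pos n with rfl | hn
  · have hnd : ∀ e : Sym2 (ZMod (2 * 0 + 2)), ¬ IsDiagonal (2 * 0 + 2) e := by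
      intro e he
      obtain ⟨x, y, rfl, h1, h2, h3⟩ := he
      have hz : ∀ x y : ZMod (2 * 0 + 2), x ≠ y → y = x + 1 := by decide
      exact h2 (hz x y h1)
    have hiff : ∀ T : Finset (Sym2 (ZMod (2 * 0 + 2))), CSTriangulation 0 T ↔ T = ∅ := by
      intro T
      constructor
      · intro hT
        rw [Finset.eq_empty_iff_forall_notMem]
        intro e he
        exact hnd e (hT.1.1 e he)
      · rintro rfl
        exact ⟨⟨fun e he => absurd he (Finset.notMem_empty _),
          fun e he => absurd he (Finset.notMem_empty _),
          fun e hd h' => absurd hd (hnd e)⟩,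
          fun e he => absurd he (Finset.notMem_empty _)⟩
    haveI : Unique {T : Finset (Sym2 (ZMod (2 * 0 + 2))) // CSTriangulation 0 T} :=
      { default := ⟨∅, (hiff ∅).2 rfl⟩
        uniq := fun T => Subtype.ext ((hiff T.1).1 T.2) }
    rw [Nat.card_unique]
    rfl
  · rw [key_count hn, succ_mul_catalan_eq_centralBinom]
    rfl
end

section
/- Every centrally-symmetric triangulation of a regular (2n+2)-gon (with n >= 1) contains exactly one central diagonal, i.e., exactly one diagonal passing through the center of the polygon. -/
open scoped BigOperators

namespace CSAux

set_option linter.unusedSectionVars false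

section basic
variable {M : ℕ} [NeZero M]

lemma val_sub_lt {a b : ZMod M} (h : a.val < b.val) :
    (a - b).val = M + a.val - b.val := by
  have hb : b ≠ 0 := by
    intro h0; rw [h0] at h; simp [ZMod.val_zero] at h
  have : NeZero b := ⟨hb⟩
  rw [sub_eq_add_neg, ZMod.val_add, ZMod.val_neg_of_ne_zero]
  have hbl := ZMod.val_lt b
  have hal := ZMod.val_lt a
  have h2 : a.val + (M - b.val) < M := by omega
  rw [Nat.mod_eq_of_lt h2]
  omega

lemma val_inj {a b : ZMod M} : a.val = b.val ↔ a = b :=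
  ⟨fun h => ZMod.val_injective M h, fun h => by rw [h]⟩

lemma arcMem_iff (a b x : ZMod M) :
    arcMem M a b x ↔ ((a.val < x.val ∧ x.val < b.val) ∨ (b.val < a.val ∧ a.val < x.val)
      ∨ (x.val < b.val ∧ b.val < a.val)) := by
  have ha := ZMod.val_lt a; have hb := ZMod.val_lt b; have hx := ZMod.val_lt x
  unfold arcMem
  rcases le_or_gt a.val x.val with h1 | h1 <;>
    rcases le_or_gt a.val b.val with h2 | h2
  · rw [ZMod.val_sub h1, ZMod.val_sub h2]; omega
  · rw [ZMod.val_sub h1, val_sub_lt h2]; omega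
  · rw [val_sub_lt h1, ZMod.val_sub h2]; omega
  · rw [val_sub_lt h1, val_sub_lt h2]; omega

lemma val_add_cast (a : ZMod M) (k : ℕ) (hk : k < M) :
    (a + (k : ZMod M)).val = if a.val + k < M then a.val + k else a.val + k - M := by
  rw [ZMod.val_add, ZMod.val_cast_of_lt hk]
  have := ZMod.val_lt a
  split_ifs with h
  · exact Nat.mod_eq_of_lt h
  · have h2 : a.val + k - M < M := by omega
    have h3 : a.val + k = (a.val + k - M) + M := by omega
    rw [h3, Nat.add_mod_right, Nat.mod_eq_of_lt h2]; omega

lemma arcMem_shift (c a b x : ZMod M) :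
    arcMem M (a - c) (b - c) (x - c) ↔ arcMem M a b x := by
  unfold arcMem
  rw [sub_sub_sub_cancel_right, sub_sub_sub_cancel_right]

lemma crossPairs_swap₁ (a b c d : ZMod M) : crossPairs M a b c d ↔ crossPairs M b a c d := by
  unfold crossPairs; tauto

lemma crossPairs_swap₂ (a b c d : ZMod M) : crossPairs M a b c d ↔ crossPairs M a b d c := by
  unfold crossPairs; tauto

lemma crosses_mk (a b c d : ZMod M) :
    Crosses M s(a, b) s(c, d) ↔ crossPairs M a b c d := by
  constructor
  · rintro ⟨a', b', c', d', he, hf, hcp⟩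
    rw [Sym2.eq_iff] at he hf
    rcases he with ⟨rfl, rfl⟩ | ⟨rfl, rfl⟩ <;> rcases hf with ⟨rfl, rfl⟩ | ⟨rfl, rfl⟩ <;>
      unfold crossPairs at hcp ⊢ <;> tauto
  · intro h; exact ⟨a, b, c, d, rfl, rfl, h⟩

end basic

section poly

variable {n : ℕ}

instance instNZ : NeZero (2 * n + 2) := ⟨by omega⟩

/-- position of `x` relative to basepoint `c` -/
def pos (c x : ZMod (2 * n + 2)) : ℕ := (x - c).val

lemma pos_lt (c x : ZMod (2 * n + 2)) : pos c x < 2 * n + 2 := ZMod.val_lt _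

lemma pos_inj {c x y : ZMod (2 * n + 2)} (h : pos c x = pos c y) : x = y := by
  have h1 : x - c = y - c := val_inj.mp h
  have h2 : x - c + c = y - c + c := by rw [h1]
  simpa using h2

lemma pos_add_k (c : ZMod (2 * n + 2)) (k : ℕ) (hk : k < 2 * n + 2) :
    pos c (c + (k : ZMod (2 * n + 2))) = k := by
  unfold pos
  rw [add_sub_cancel_left, ZMod.val_cast_of_lt hk]

lemma pos_self (c : ZMod (2 * n + 2)) : pos c c = 0 := by
  simpa using pos_add_k c 0 (by omega)

lemma eq_of_pos {c x : ZMod (2 * n + 2)} {k : ℕ} (hk : k < 2 * n + 2)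
    (h : pos c x = k) : x = c + (k : ZMod (2 * n + 2)) :=
  pos_inj (by rw [h, pos_add_k c k hk])

lemma arcMem_pos (c a b x : ZMod (2 * n + 2)) :
    arcMem (2 * n + 2) a b x ↔
      ((pos c a < pos c x ∧ pos c x < pos c b) ∨
       (pos c b < pos c a ∧ pos c a < pos c x) ∨
       (pos c x < pos c b ∧ pos c b < pos c a)) := by
  rw [← arcMem_shift c a b x, arcMem_iff]; rfl

lemma pos_add_cast (c x : ZMod (2 * n + 2)) (k : ℕ) (hk : k < 2 * n + 2) :
    pos c (x + (k : ZMod (2 * n + 2))) =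
      if pos c x + k < 2 * n + 2 then pos c x + k else pos c x + k - (2 * n + 2) := by
  unfold pos
  rw [show x + (k : ZMod (2 * n + 2)) - c = (x - c) + (k : ZMod (2 * n + 2)) by ring]
  exact val_add_cast _ k hk

lemma succ_iff_pos {c a b : ZMod (2 * n + 2)} :
    b = a + 1 ↔ ((pos c b = pos c a + 1 ∧ pos c a + 1 < 2 * n + 2) ∨
      (pos c a = 2 * n + 1 ∧ pos c b = 0)) := by
  have h1 : a + 1 = a + ((1 : ℕ) : ZMod (2 * n + 2)) := by norm_cast
  have hpa := pos_lt c a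
  have hpb := pos_lt c b
  constructor
  · rintro rfl
    rw [h1, pos_add_cast c a 1 (by omega)]
    split_ifs with h <;> omega
  · intro h
    have h2 : pos c b = pos c (a + 1) := by
      rw [h1, pos_add_cast c a 1 (by omega)]
      split_ifs with hh <;> omega
    exact pos_inj h2

lemma pos_eq_zero {c x : ZMod (2 * n + 2)} (h : pos c x = 0) : x = c := by
  have := eq_of_pos (k := 0) (by omega) h
  simpa using this

lemma pos_eq_one {c x : ZMod (2 * n + 2)} (h : pos c x = 1) : x = c + 1 := by
  have := eq_of_pos (k := 1) (by omega) h
  simpa using this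

lemma pos_eq_two (hn : 1 ≤ n) {c x : ZMod (2 * n + 2)} (h : pos c x = 2) : x = c + 2 := by
  have := eq_of_pos (k := 2) (by omega) h
  simpa using this

lemma two_cast : (2 : ZMod (2 * n + 2)) = ((2 : ℕ) : ZMod (2 * n + 2)) := by norm_cast

lemma one_cast : (1 : ZMod (2 * n + 2)) = ((1 : ℕ) : ZMod (2 * n + 2)) := by norm_cast

lemma diag_conds {T : Finset (Sym2 (ZMod (2 * n + 2)))}
    (hT : IsTriangulation (2 * n + 2) T) {c d : ZMod (2 * n + 2)}
    (h : s(c, d) ∈ T) : d ≠ c ∧ d ≠ c + 1 ∧ c ≠ d + 1 := by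
  obtain ⟨a, b, hab, hne, hadj1, hadj2⟩ := hT.1 _ h
  rw [Sym2.eq_iff] at hab
  rcases hab with ⟨h1, h2⟩ | ⟨h1, h2⟩ <;> subst h1 <;> subst h2
  · exact ⟨hne.symm, hadj1, hadj2⟩
  · exact ⟨hne, hadj2, hadj1⟩

/-- No chord of a triangulation `T` containing the ear `s(c, c+2)` has the tip `c+1`
as an endpoint. -/
lemma tip_free (hn : 1 ≤ n) {T : Finset (Sym2 (ZMod (2 * n + 2)))}
    (hT : IsTriangulation (2 * n + 2) T) {c : ZMod (2 * n + 2)}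
    (hg : s(c, c + 2) ∈ T) {h : Sym2 (ZMod (2 * n + 2))} (hh : h ∈ T)
    {y : ZMod (2 * n + 2)} (hhy : h = s(c + 1, y)) : False := by
  have hd := diag_conds hT (hhy ▸ hh)
  obtain ⟨hy1, hy2, hy3⟩ := hd
  have p0 : pos c c = 0 := pos_self c
  have p1 : pos c (c + 1) = 1 := by rw [one_cast]; exact pos_add_k c 1 (by omega)
  have p2 : pos c (c + 2) = 2 := by rw [two_cast]; exact pos_add_k c 2 (by omega)
  have hq0 : pos c y ≠ 0 := fun hq => hy3 (by rw [pos_eq_zero hq])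
  have hq1 : pos c y ≠ 1 := fun hq => hy1 (pos_eq_one hq)
  have hq2 : pos c y ≠ 2 := fun hq => hy2 (by rw [pos_eq_two hn hq]; ring)
  have hqlt := pos_lt c y
  have cp : crossPairs (2 * n + 2) c (c + 2) (c + 1) y := by
    left
    constructor
    · rw [arcMem_pos c, p0, p1, p2]; omega
    · rw [arcMem_pos c, p0, p2]; omega
  exact hT.2.1 _ hg _ hh (by rw [hhy]; exact (crosses_mk _ _ _ _).mpr cp)

/-- A triangulation without central diagonals contains an ear. -/
lemma ear_exists (hn : 1 ≤ n) {T : Finset (Sym2 (ZMod (2 * n + 2)))}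
    (hT : IsTriangulation (2 * n + 2) T)
    (hnc : ∀ e ∈ T, ¬ IsCentral n e) : ∃ c, s(c, c + 2) ∈ T := by
  have key : ∀ t, ∀ c d : ZMod (2 * n + 2), s(c, d) ∈ T → pos c d = t → t ≤ n + 1 →
      ∃ c', s(c', c' + 2) ∈ T := by
    intro t
    induction t using Nat.strong_induction_on with
    | _ t IH =>
      intro c d hmem hpos hle
      obtain ⟨hd1, hd2, hd3⟩ := diag_conds hT hmem
      have p0 : pos c c = 0 := pos_self c
      have p1 : pos c (c + 1) = 1 := by rw [one_cast]; exact pos_add_k c 1 (by omega)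
      have p2 : pos c (c + 2) = 2 := by rw [two_cast]; exact pos_add_k c 2 (by omega)
      have ht0 : t ≠ 0 := fun h => hd1 (pos_eq_zero (hpos.trans h))
      have ht1 : t ≠ 1 := fun h => hd2 (pos_eq_one (hpos.trans h))
      have htn : t ≠ n + 1 := by
        intro h
        refine hnc _ hmem ⟨c, ?_⟩
        have hd : d = c + ((n + 1 : ℕ) : ZMod (2 * n + 2)) :=
          eq_of_pos (by omega) (hpos.trans h)
        rw [hd]; push_cast; rw [add_assoc]
      by_cases ht2 : t = 2
      · refine ⟨c, ?_⟩
        have hd : d = c + 2 := pos_eq_two hn (hpos.trans ht2)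
        rwa [← hd]
      · have ht3 : 3 ≤ t := by omega
        by_cases hin : s(c, c + 2) ∈ T
        · exact ⟨c, hin⟩
        · have hdiag : IsDiagonal (2 * n + 2) s(c, c + 2) := by
            refine ⟨c, c + 2, rfl, ?_, ?_, ?_⟩
            · intro h; have := congrArg (pos c) h; rw [p0, p2] at this; omega
            · intro h; have := congrArg (pos c) h; rw [p2, p1] at this; omega
            · intro h
              have p3 : pos c (c + 2 + 1) = 3 := by
                rw [show c + 2 + 1 = c + ((3 : ℕ) : ZMod (2 * n + 2)) by push_cast; ring]
                exact pos_add_k c 3 (by omega)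
              have := congrArg (pos c) h; rw [p0, p3] at this; omega
          obtain ⟨f, hf, hcr⟩ := hT.2.2 _ hdiag hin
          obtain ⟨a', b', x, y, he, hf', hcp⟩ := hcr
          rw [Sym2.eq_iff] at he
          have hcp2 : crossPairs (2 * n + 2) c (c + 2) x y := by
            rcases he with ⟨h1, h2⟩ | ⟨h1, h2⟩
            · rwa [← h1, ← h2] at hcp
            · rw [crossPairs_swap₁]; rwa [← h1, ← h2] at hcp
          have main : ∀ x y : ZMod (2 * n + 2), f = s(x, y) →
              arcMem (2 * n + 2) c (c + 2) x → arcMem (2 * n + 2) (c + 2) c y →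
              ∃ c', s(c', c' + 2) ∈ T := by
            intro x y hfxy hx hy
            have hqltx := pos_lt c x
            have hx1 : pos c x = 1 := by
              rw [arcMem_pos c, p0, p2] at hx; omega
            have hxe : x = c + 1 := pos_eq_one hx1
            have hqlt := pos_lt c y
            have hq : 2 < pos c y ∧ pos c y < 2 * n + 2 := by
              rw [arcMem_pos c, p0, p2] at hy
              exact ⟨by omega, hqlt⟩
            have hq1 : pos (c + 1) y = pos c y - 1 := by
              show (y - (c + 1)).val = pos c y - 1
              rw [show y - (c + 1) = (y - c) - ((1 : ℕ) : ZMod (2 * n + 2)) by push_cast; ring,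
                ZMod.val_sub]
              · rfl
              · rw [ZMod.val_cast_of_lt (by omega : 1 < 2 * n + 2)]
                show 1 ≤ pos c y
                omega
            rcases le_or_gt (pos c y) t with hcase | hcase
            · exact IH (pos c y - 1) (by omega) (c + 1) y (by rw [← hxe, ← hfxy]; exact hf)
                hq1 (by omega)
            · -- y beyond d : f crosses s(c,d), contradiction
              have hdpos : pos c d = t := hpos
              have cp : crossPairs (2 * n + 2) c d x y := by
                left
                constructor
                · rw [arcMem_pos c, p0, hdpos, hx1]; omega
                · rw [arcMem_pos c, p0, hdpos]; omega
              exact absurd ((crosses_mk _ _ _ _).mpr cp)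
                (by rw [← hfxy]; exact hT.2.1 _ hmem _ hf)
          rcases hcp2 with ⟨hx, hy⟩ | ⟨hy, hx⟩
          · exact main x y hf' hx hy
          · exact main y x (by rw [hf', Sym2.eq_swap]) hy hx
  -- kickoff : T is nonempty
  have p0 : pos (0 : ZMod (2 * n + 2)) 0 = 0 := pos_self 0
  have hcast : (0 : ZMod (2 * n + 2)) + (n : ZMod (2 * n + 2)) + 1
      = 0 + ((n + 1 : ℕ) : ZMod (2 * n + 2)) := by push_cast; ring
  have pn : pos (0 : ZMod (2 * n + 2)) (0 + (n : ZMod (2 * n + 2)) + 1) = n + 1 := by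
    rw [hcast]; exact pos_add_k 0 (n + 1) (by omega)
  have hd0 : IsDiagonal (2 * n + 2) s(0, 0 + (n : ZMod (2 * n + 2)) + 1) := by
    refine ⟨0, 0 + (n : ZMod (2 * n + 2)) + 1, rfl, ?_, ?_, ?_⟩
    · intro h; have := congrArg (pos 0) h; rw [p0, pn] at this; omega
    · intro h
      have p1 : pos (0 : ZMod (2 * n + 2)) (0 + 1) = 1 := by
        rw [show (0 : ZMod (2 * n + 2)) + 1 = 0 + ((1 : ℕ) : ZMod (2 * n + 2)) by push_cast; ring]
        exact pos_add_k 0 1 (by omega)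
      have := congrArg (pos 0) h; rw [pn, p1] at this; omega
    · intro h
      have p1 : pos (0 : ZMod (2 * n + 2)) (0 + (n : ZMod (2 * n + 2)) + 1 + 1) = n + 2 := by
        rw [show (0 : ZMod (2 * n + 2)) + (n : ZMod (2 * n + 2)) + 1 + 1
          = 0 + ((n + 2 : ℕ) : ZMod (2 * n + 2)) by push_cast; ring]
        exact pos_add_k 0 (n + 2) (by omega)
      have := congrArg (pos 0) h; rw [p0, p1] at this; omega
  have hnmem : s(0, 0 + (n : ZMod (2 * n + 2)) + 1) ∉ T := fun h => hnc _ h ⟨0, rfl⟩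
  obtain ⟨f, hf, -⟩ := hT.2.2 _ hd0 hnmem
  obtain ⟨a, b, hab, hne, hadj1, hadj2⟩ := hT.1 _ hf
  have hfab : s(a, b) ∈ T := hab ▸ hf
  have hu0 : pos a b ≠ 0 := fun h => hne (pos_inj (by rw [h, pos_self])).symm
  have hu1 : pos a b ≠ 1 := fun h => hadj1 (pos_eq_one h)
  have huM : pos a b ≠ 2 * n + 1 :=
    fun h => hadj2 ((succ_iff_pos (c := a) (a := b) (b := a)).mpr (Or.inr ⟨h, pos_self a⟩))
  have hun : pos a b ≠ n + 1 := by
    intro h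
    refine hnc _ hfab ⟨a, ?_⟩
    have hb : b = a + ((n + 1 : ℕ) : ZMod (2 * n + 2)) := eq_of_pos (by omega) h
    rw [hb]; push_cast; rw [add_assoc]
  have hulk := pos_lt a b
  rcases le_or_gt (pos a b) (n + 1) with hc | hc
  · exact key _ a b hfab rfl hc
  · have hba : pos b a = 2 * n + 2 - pos a b := by
      show (a - b).val = 2 * n + 2 - pos a b
      have hz : b - a ≠ 0 := fun h => hu0 (by unfold pos; rw [h, ZMod.val_zero])
      haveI : NeZero (b - a) := ⟨hz⟩
      rw [show a - b = -(b - a) by ring, ZMod.val_neg_of_ne_zero]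
      rfl
    exact key _ b a (by rw [Sym2.eq_swap]; exact hfab) hba (by rw [hba] at *; omega)

end poly

section red

variable {n : ℕ}

def psiF (n p : ℕ) : ℕ := if p = 0 then 0 else if p ≤ n + 1 then p - 1 else p - 2

def chiF (n q : ℕ) : ℕ := if q = 0 then 0 else if q ≤ n then q + 1 else q + 2

def okp (n p : ℕ) : Prop := p < 2 * n + 2 ∧ p ≠ 1 ∧ p ≠ n + 2

def phiF (n : ℕ) (c x : ZMod (2 * n + 2)) : ZMod (2 * (n - 1) + 2) :=
  ((psiF n (pos c x) : ℕ) : ZMod (2 * (n - 1) + 2))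

def phiInvF (n : ℕ) (c : ZMod (2 * n + 2)) (y : ZMod (2 * (n - 1) + 2)) : ZMod (2 * n + 2) :=
  c + ((chiF n y.val : ℕ) : ZMod (2 * n + 2))

lemma psi_bound (hn : 1 ≤ n) {p : ℕ} (hp : p < 2 * n + 2) : psiF n p < 2 * (n - 1) + 2 := by
  unfold psiF; split_ifs <;> first | exact False.elim ‹False› | (simp only [false_and, and_false, false_or, or_false, true_and, and_true, or_self_iff, false_iff, iff_false, true_iff, iff_true] <;> omega) | omega

lemma psi_lt {p q : ℕ} (hp : okp n p) (hq : okp n q) : psiF n p < psiF n q ↔ p < q := by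
  obtain ⟨h1, h2, h3⟩ := hp; obtain ⟨h4, h5, h6⟩ := hq
  unfold psiF; split_ifs <;> first | exact False.elim ‹False› | (simp only [false_and, and_false, false_or, or_false, true_and, and_true, or_self_iff, false_iff, iff_false, true_iff, iff_true] <;> omega) | omega

lemma psi_inj {p q : ℕ} (hp : okp n p) (hq : okp n q) (h : psiF n p = psiF n q) : p = q := by
  obtain ⟨h1, h2, h3⟩ := hp; obtain ⟨h4, h5, h6⟩ := hq
  unfold psiF at h; split_ifs at h <;> omega

lemma phi_val (hn : 1 ≤ n) (c x : ZMod (2 * n + 2)) :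
    (phiF n c x).val = psiF n (pos c x) :=
  ZMod.val_cast_of_lt (psi_bound hn (pos_lt c x))

lemma pos_zero {m : ℕ} (z : ZMod (2 * m + 2)) : pos 0 z = z.val := by
  unfold pos; rw [sub_zero]

lemma phi_inj (hn : 1 ≤ n) {c a b : ZMod (2 * n + 2)} (ha : okp n (pos c a))
    (hb : okp n (pos c b)) (h : phiF n c a = phiF n c b) : a = b := by
  have hv : (phiF n c a).val = (phiF n c b).val := by rw [h]
  rw [phi_val hn, phi_val hn] at hv
  exact pos_inj (psi_inj ha hb hv)

lemma arc_transfer (hn : 1 ≤ n) (c a b x : ZMod (2 * n + 2)) (ha : okp n (pos c a))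
    (hb : okp n (pos c b)) (hx : okp n (pos c x)) :
    arcMem (2 * (n - 1) + 2) (phiF n c a) (phiF n c b) (phiF n c x) ↔
      arcMem (2 * n + 2) a b x := by
  rw [arcMem_iff, phi_val hn, phi_val hn, phi_val hn,
    psi_lt ha hx, psi_lt hx hb, psi_lt hb ha, ← arcMem_pos c]

lemma cross_transfer (hn : 1 ≤ n) (c a b x y : ZMod (2 * n + 2)) (ha : okp n (pos c a))
    (hb : okp n (pos c b)) (hx : okp n (pos c x)) (hy : okp n (pos c y)) :
    crossPairs (2 * (n - 1) + 2) (phiF n c a) (phiF n c b) (phiF n c x) (phiF n c y) ↔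
      crossPairs (2 * n + 2) a b x y := by
  unfold crossPairs
  rw [arc_transfer hn c a b x ha hb hx, arc_transfer hn c b a y hb ha hy,
    arc_transfer hn c a b y ha hb hy, arc_transfer hn c b a x hb ha hx]

lemma succ_transfer (hn : 2 ≤ n) {c a b : ZMod (2 * n + 2)} (ha : okp n (pos c a))
    (hb : okp n (pos c b)) :
    phiF n c b = phiF n c a + 1 ↔
      (b = a + 1 ∨ (pos c a = 0 ∧ pos c b = 2) ∨ (pos c a = n + 1 ∧ pos c b = n + 3)) := by
  rw [succ_iff_pos (c := (0 : ZMod (2 * (n - 1) + 2))), succ_iff_pos (c := c),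
    pos_zero, pos_zero, phi_val (by omega) c a, phi_val (by omega) c b]
  obtain ⟨h1, h2, h3⟩ := ha; obtain ⟨h4, h5, h6⟩ := hb
  unfold psiF; split_ifs <;> first | exact False.elim ‹False› | (simp only [false_and, and_false, false_or, or_false, true_and, and_true, or_self_iff, false_iff, iff_false, true_iff, iff_true] <;> omega) | omega

lemma sigma_pos (c x : ZMod (2 * n + 2)) :
    pos c (x + (n : ZMod (2 * n + 2)) + 1) =
      if pos c x + (n + 1) < 2 * n + 2 then pos c x + (n + 1)
      else pos c x + (n + 1) - (2 * n + 2) := by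
  rw [show x + (n : ZMod (2 * n + 2)) + 1 = x + ((n + 1 : ℕ) : ZMod (2 * n + 2)) by
    push_cast; ring]
  exact pos_add_cast c x (n + 1) (by omega)

lemma sigma_okp (hn : 1 ≤ n) {c x : ZMod (2 * n + 2)} (hx : okp n (pos c x)) :
    okp n (pos c (x + (n : ZMod (2 * n + 2)) + 1)) := by
  obtain ⟨h1, h2, h3⟩ := hx
  rw [sigma_pos]
  unfold okp; split_ifs <;> first | exact False.elim ‹False› | (simp only [false_and, and_false, false_or, or_false, true_and, and_true, or_self_iff, false_iff, iff_false, true_iff, iff_true] <;> omega) | omega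

lemma phi_sigma (hn : 2 ≤ n) {c x : ZMod (2 * n + 2)} (hx : okp n (pos c x)) :
    phiF n c (x + (n : ZMod (2 * n + 2)) + 1) =
      phiF n c x + ((n - 1 : ℕ) : ZMod (2 * (n - 1) + 2)) + 1 := by
  have hcast : phiF n c x + ((n - 1 : ℕ) : ZMod (2 * (n - 1) + 2)) + 1
      = phiF n c x + ((n : ℕ) : ZMod (2 * (n - 1) + 2)) := by
    have h1 : ((n - 1 : ℕ) : ZMod (2 * (n - 1) + 2)) + 1
        = ((n - 1 + 1 : ℕ) : ZMod (2 * (n - 1) + 2)) := by push_cast; ring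
    rw [add_assoc, h1, show n - 1 + 1 = n by omega]
  apply val_inj.mp
  rw [hcast, phi_val (by omega), val_add_cast _ n (by omega), phi_val (by omega), sigma_pos]
  obtain ⟨h1, h2, h3⟩ := hx
  unfold psiF; split_ifs <;> first | exact False.elim ‹False› | (simp only [false_and, and_false, false_or, or_false, true_and, and_true, or_self_iff, false_iff, iff_false, true_iff, iff_true] <;> omega) | omega

lemma chi_okp (hn : 2 ≤ n) {q : ℕ} (hq : q < 2 * (n - 1) + 2) : okp n (chiF n q) := by
  unfold okp chiF; split_ifs <;> first | exact False.elim ‹False› | (simp only [false_and, and_false, false_or, or_false, true_and, and_true, or_self_iff, false_iff, iff_false, true_iff, iff_true] <;> omega) | omega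

lemma pos_phiInv (hn : 2 ≤ n) (c : ZMod (2 * n + 2)) (y : ZMod (2 * (n - 1) + 2)) :
    pos c (phiInvF n c y) = chiF n y.val := by
  have hy := ZMod.val_lt y
  exact pos_add_k c _ (by have := chi_okp hn hy; exact this.1)

lemma phi_phiInv (hn : 2 ≤ n) (c : ZMod (2 * n + 2)) (y : ZMod (2 * (n - 1) + 2)) :
    phiF n c (phiInvF n c y) = y := by
  have hy := ZMod.val_lt y
  apply val_inj.mp
  rw [phi_val (by omega), pos_phiInv hn]
  unfold psiF chiF; split_ifs <;> first | exact False.elim ‹False› | (simp only [false_and, and_false, false_or, or_false, true_and, and_true, or_self_iff, false_iff, iff_false, true_iff, iff_true] <;> omega) | omega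

lemma okp_phiInv (hn : 2 ≤ n) (c : ZMod (2 * n + 2)) (y : ZMod (2 * (n - 1) + 2)) :
    okp n (pos c (phiInvF n c y)) := by
  rw [pos_phiInv hn]; exact chi_okp hn (ZMod.val_lt y)

lemma nat_cp_comm (a b x y : ℕ) :
    (a < x ∧ x < b ∨ b < a ∧ a < x ∨ x < b ∧ b < a) ∧
        (b < y ∧ y < a ∨ a < b ∧ b < y ∨ y < a ∧ a < b) ∨
      (a < y ∧ y < b ∨ b < a ∧ a < y ∨ y < b ∧ b < a) ∧
        (b < x ∧ x < a ∨ a < b ∧ b < x ∨ x < a ∧ a < b) ↔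
    (x < a ∧ a < y ∨ y < x ∧ x < a ∨ a < y ∧ y < x) ∧
        (y < b ∧ b < x ∨ x < y ∧ y < b ∨ b < x ∧ x < y) ∨
      (x < b ∧ b < y ∨ y < x ∧ x < b ∨ b < y ∧ y < x) ∧
        (y < a ∧ a < x ∨ x < y ∧ y < a ∨ a < x ∧ x < y) := by omega

lemma crossPairs_comm {M : ℕ} [NeZero M] (a b x y : ZMod M) :
    crossPairs M a b x y ↔ crossPairs M x y a b := by
  have h1 := ZMod.val_lt a; have h2 := ZMod.val_lt b
  have h3 := ZMod.val_lt x; have h4 := ZMod.val_lt y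
  unfold crossPairs
  simp only [arcMem_iff]
  exact nat_cp_comm a.val b.val x.val y.val

/-- crossing an ear forces the tip as an endpoint -/
lemma cross_with_ear (hn : 1 ≤ n) {u : ZMod (2 * n + 2)} {e : Sym2 (ZMod (2 * n + 2))}
    (hcr : Crosses (2 * n + 2) e s(u, u + 2)) {a b : ZMod (2 * n + 2)} (heq : e = s(a, b)) :
    a = u + 1 ∨ b = u + 1 := by
  obtain ⟨p, q, r, s, hepq, hgrs, hcp⟩ := hcr
  rw [heq, Sym2.eq_iff] at hepq
  rw [Sym2.eq_iff] at hgrs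
  have p0 : pos u u = 0 := pos_self u
  have p2 : pos u (u + 2) = 2 := by rw [two_cast]; exact pos_add_k u 2 (by omega)
  have harc : ∀ z : ZMod (2 * n + 2), arcMem (2 * n + 2) u (u + 2) z → z = u + 1 := by
    intro z hz
    rw [arcMem_pos u, p0, p2] at hz
    exact pos_eq_one (by omega)
  have hcp2 : crossPairs (2 * n + 2) u (u + 2) p q := by
    rw [← crossPairs_comm]
    rcases hgrs with ⟨hr, hs⟩ | ⟨hr, hs⟩
    · rwa [← hr, ← hs] at hcp
    · rw [crossPairs_swap₂]; rwa [← hr, ← hs] at hcp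
  have : p = u + 1 ∨ q = u + 1 := by
    rcases hcp2 with ⟨h1, _⟩ | ⟨h1, _⟩
    · exact Or.inl (harc p h1)
    · exact Or.inr (harc q h1)
  rcases hepq with ⟨ha, hb⟩ | ⟨ha, hb⟩ <;> rw [ha, hb] <;> tauto

end red

set_option maxHeartbeats 1000000 in
theorem central_exists : ∀ n : ℕ, 1 ≤ n → ∀ T : Finset (Sym2 (ZMod (2 * n + 2))),
    CSTriangulation n T → ∃ e ∈ T, IsCentral n e := by
  intro n
  induction n using Nat.strong_induction_on with
  | _ n IH =>
  intro hn T hT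
  by_contra hncex
  push_neg at hncex
  obtain ⟨c, hg⟩ := ear_exists hn hT.1 hncex
  rcases eq_or_lt_of_le hn with h1 | hn2
  · -- n = 1 : the ear itself is central
    apply hncex _ hg
    refine ⟨c, ?_⟩
    have h2 : (2 : ZMod (2 * n + 2)) = (n : ZMod (2 * n + 2)) + 1 := by
      rw [← h1]; norm_num
    rw [h2, ← add_assoc]
  · have hn2 : 2 ≤ n := hn2
    set u2 : ZMod (2 * n + 2) := c + (n : ZMod (2 * n + 2)) + 1 with hu2
    have hg2mem : s(u2, u2 + 2) ∈ T := by
      have h := hT.2 _ hg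
      rw [Sym2.map_pair_eq] at h
      have e1 : c + ((n : ZMod (2 * n + 2)) + 1) = u2 := by rw [hu2]; ring
      have e2 : c + 2 + ((n : ZMod (2 * n + 2)) + 1) = u2 + 2 := by rw [hu2]; ring
      rwa [e1, e2] at h
    -- position facts
    have pc1 : pos c (c + 1) = 1 := by
      rw [one_cast]; exact pos_add_k c 1 (by omega)
    have pc2 : pos c (c + 2) = 2 := by
      rw [two_cast]; exact pos_add_k c 2 (by omega)
    have hu2cast : u2 = c + ((n + 1 : ℕ) : ZMod (2 * n + 2)) := by
      rw [hu2]; push_cast; ring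
    have pu2 : pos c u2 = n + 1 := by
      rw [hu2cast]; exact pos_add_k c (n + 1) (by omega)
    have pu22 : pos c (u2 + 2) = n + 3 := by
      rw [show u2 + 2 = c + ((n + 3 : ℕ) : ZMod (2 * n + 2)) by rw [hu2]; push_cast; ring]
      exact pos_add_k c (n + 3) (by omega)
    have pu21 : pos c (u2 + 1) = n + 2 := by
      rw [show u2 + 1 = c + ((n + 2 : ℕ) : ZMod (2 * n + 2)) by rw [hu2]; push_cast; ring]
      exact pos_add_k c (n + 2) (by omega)
    have hu2eq : ∀ x : ZMod (2 * n + 2), pos c x = n + 1 → x = u2 := by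
      intro x hx
      rw [eq_of_pos (k := n + 1) (by omega) hx, hu2cast]
    have hu22eq : ∀ x : ZMod (2 * n + 2), pos c x = n + 3 → x = u2 + 2 := by
      intro x hx
      rw [eq_of_pos (k := n + 3) (by omega) hx,
        show u2 + 2 = c + ((n + 3 : ℕ) : ZMod (2 * n + 2)) by rw [hu2]; push_cast; ring]
    -- all endpoints avoid the two tips
    have hok : ∀ h ∈ T, ∀ x y : ZMod (2 * n + 2), h = s(x, y) → okp n (pos c x) := by
      intro h hh x y hxy
      refine ⟨pos_lt c x, ?_, ?_⟩
      · intro h1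
        exact tip_free hn hT.1 hg hh (by rw [hxy, pos_eq_one h1])
      · intro h1
        have hx : x = u2 + 1 := by
          rw [eq_of_pos (k := n + 2) (by omega) h1,
            show u2 + 1 = c + ((n + 2 : ℕ) : ZMod (2 * n + 2)) by rw [hu2]; push_cast; ring]
        exact tip_free hn hT.1 hg2mem hh (by rw [hxy, hx])
    have rep : ∀ e ∈ T, ∃ a b : ZMod (2 * n + 2), e = s(a, b) ∧ okp n (pos c a) ∧
        okp n (pos c b) ∧ a ≠ b ∧ b ≠ a + 1 ∧ a ≠ b + 1 := by
      intro e he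
      obtain ⟨a, b, heq, hne, h1, h2⟩ := hT.1.1 _ he
      exact ⟨a, b, heq, hok _ he a b heq, hok _ he b a (by rw [heq, Sym2.eq_swap]),
        hne, h1, h2⟩
    set T' : Finset (Sym2 (ZMod (2 * (n - 1) + 2))) :=
      (T \ {s(c, c + 2), s(u2, u2 + 2)}).image (Sym2.map (phiF n c)) with hT'def
    have memsd : ∀ e, e ∈ T \ ({s(c, c + 2), s(u2, u2 + 2)} : Finset _) ↔
        e ∈ T ∧ e ≠ s(c, c + 2) ∧ e ≠ s(u2, u2 + 2) := by
      intro e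
      rw [Finset.mem_sdiff, Finset.mem_insert, Finset.mem_singleton]
      tauto
    -- (1) diagonals
    have prop1 : ∀ e' ∈ T', IsDiagonal (2 * (n - 1) + 2) e' := by
      intro e' he'
      obtain ⟨e, he, rfl⟩ := Finset.mem_image.mp he'
      rw [memsd] at he
      obtain ⟨heT, heg, heg2⟩ := he
      obtain ⟨a, b, heq, ha, hb, hne, hadj1, hadj2⟩ := rep e heT
      subst heq
      rw [Sym2.map_pair_eq]
      refine ⟨phiF n c a, phiF n c b, rfl, ?_, ?_, ?_⟩
      · intro h; exact hne (phi_inj (by omega) ha hb h)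
      · intro h
        rcases (succ_transfer hn2 ha hb).mp h with h | ⟨h1, h2⟩ | ⟨h1, h2⟩
        · exact hadj1 h
        · exact heg (by rw [pos_eq_zero h1, pos_eq_two hn h2])
        · exact heg2 (by rw [hu2eq a h1, hu22eq b h2])
      · intro h
        rcases (succ_transfer hn2 hb ha).mp h with h | ⟨h1, h2⟩ | ⟨h1, h2⟩
        · exact hadj2 h
        · exact heg (by rw [pos_eq_zero h1, pos_eq_two hn h2]; exact Sym2.eq_swap)
        · exact heg2 (by rw [hu2eq b h1, hu22eq a h2]; exact Sym2.eq_swap)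
    -- (2) non-crossing
    have prop2 : ∀ e' ∈ T', ∀ f' ∈ T', ¬ Crosses (2 * (n - 1) + 2) e' f' := by
      intro e' he' f' hf' hcr
      obtain ⟨e, he, rfl⟩ := Finset.mem_image.mp he'
      rw [memsd] at he
      obtain ⟨f, hf, rfl⟩ := Finset.mem_image.mp hf'
      rw [memsd] at hf
      obtain ⟨a, b, heq, ha, hb, -, -, -⟩ := rep e he.1
      subst heq
      obtain ⟨x, y, heq, hx, hy, -, -, -⟩ := rep f hf.1
      subst heq
      rw [Sym2.map_pair_eq, Sym2.map_pair_eq] at hcr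
      have hcp := (crosses_mk _ _ _ _).mp hcr
      have hcp2 := (cross_transfer (by omega) c a b x y ha hb hx hy).mp hcp
      exact hT.1.2.1 _ he.1 _ hf.1 ((crosses_mk _ _ _ _).mpr hcp2)
    -- (3) maximality
    have prop3 : ∀ e', IsDiagonal (2 * (n - 1) + 2) e' → e' ∉ T' →
        ∃ f' ∈ T', Crosses (2 * (n - 1) + 2) e' f' := by
      intro e' hd' hne'
      obtain ⟨a', b', heq', hne, hadj1, hadj2⟩ := hd'
      subst heq'
      have hpa := okp_phiInv hn2 c a'
      have hpb := okp_phiInv hn2 c b'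
      have hfa : phiF n c (phiInvF n c a') = a' := phi_phiInv hn2 c a'
      have hfb : phiF n c (phiInvF n c b') = b' := phi_phiInv hn2 c b'
      set a := phiInvF n c a' with hadef
      set b := phiInvF n c b' with hbdef
      have hab : a ≠ b := fun h => hne (by rw [← hfa, ← hfb, h])
      have hba1 : b ≠ a + 1 := fun h =>
        hadj1 (by rw [← hfa, ← hfb]; exact (succ_transfer hn2 hpa hpb).mpr (Or.inl h))
      have hab1 : a ≠ b + 1 := fun h =>
        hadj2 (by rw [← hfa, ← hfb]; exact (succ_transfer hn2 hpb hpa).mpr (Or.inl h))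
      have hdiag : IsDiagonal (2 * n + 2) s(a, b) := ⟨a, b, rfl, hab, hba1, hab1⟩
      have hnotmem : s(a, b) ∉ T := by
        intro hmem
        have hne_g : s(a, b) ≠ s(c, c + 2) := by
          intro h
          rw [Sym2.eq_iff] at h
          rcases h with ⟨h1, h2⟩ | ⟨h1, h2⟩
          · refine hadj1 ?_
            rw [← hfa, ← hfb]
            exact (succ_transfer hn2 hpa hpb).mpr
              (Or.inr (Or.inl ⟨by rw [h1, pos_self], by rw [h2, pc2]⟩))
          · refine hadj2 ?_
            rw [← hfa, ← hfb]
            exact (succ_transfer hn2 hpb hpa).mpr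
              (Or.inr (Or.inl ⟨by rw [h2, pos_self], by rw [h1, pc2]⟩))
        have hne_g2 : s(a, b) ≠ s(u2, u2 + 2) := by
          intro h
          rw [Sym2.eq_iff] at h
          rcases h with ⟨h1, h2⟩ | ⟨h1, h2⟩
          · refine hadj1 ?_
            rw [← hfa, ← hfb]
            exact (succ_transfer hn2 hpa hpb).mpr
              (Or.inr (Or.inr ⟨by rw [h1, pu2], by rw [h2, pu22]⟩))
          · refine hadj2 ?_
            rw [← hfa, ← hfb]
            exact (succ_transfer hn2 hpb hpa).mpr
              (Or.inr (Or.inr ⟨by rw [h2, pu2], by rw [h1, pu22]⟩))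
        exact hne' (Finset.mem_image.mpr ⟨s(a, b), (memsd _).mpr ⟨hmem, hne_g, hne_g2⟩,
          by rw [Sym2.map_pair_eq, hfa, hfb]⟩)
      obtain ⟨f, hfT, hcrs⟩ := hT.1.2.2 _ hdiag hnotmem
      have hfg : f ≠ s(c, c + 2) := by
        intro h
        subst h
        rcases cross_with_ear hn hcrs rfl with h | h
        · exact hpa.2.1 (by rw [h]; exact pc1)
        · exact hpb.2.1 (by rw [h]; exact pc1)
      have hfg2 : f ≠ s(u2, u2 + 2) := by
        intro h
        subst h
        rcases cross_with_ear hn hcrs rfl with h | h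
        · exact hpa.2.2 (by rw [h]; exact pu21)
        · exact hpb.2.2 (by rw [h]; exact pu21)
      obtain ⟨x, y, heq, hx, hy, -, -, -⟩ := rep f hfT
      subst heq
      have hcp := (crosses_mk _ _ _ _).mp hcrs
      have hcp2 := (cross_transfer (by omega) c a b x y hpa hpb hx hy).mpr hcp
      rw [hfa, hfb] at hcp2
      refine ⟨Sym2.map (phiF n c) s(x, y),
        Finset.mem_image.mpr ⟨_, (memsd _).mpr ⟨hfT, hfg, hfg2⟩, rfl⟩, ?_⟩
      rw [Sym2.map_pair_eq]
      exact ⟨a', b', phiF n c x, phiF n c y, rfl, rfl, hcp2⟩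
    -- (4) central symmetry
    have h00 : ((n : ZMod (2 * n + 2)) + 1) + ((n : ZMod (2 * n + 2)) + 1) = 0 := by
      have h := ZMod.natCast_self (2 * n + 2)
      push_cast at h
      linear_combination h
    have key : ∀ z w : ZMod (2 * n + 2), z + (n : ZMod (2 * n + 2)) + 1 = w →
        z = w + (n : ZMod (2 * n + 2)) + 1 := by
      intro z w hzw
      rw [← hzw]
      linear_combination -h00
    have prop4 : ∀ e' ∈ T',
        Sym2.map (· + (((n - 1 : ℕ) : ZMod (2 * (n - 1) + 2)) + 1)) e' ∈ T' := by
      intro e' he'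
      obtain ⟨e, he, rfl⟩ := Finset.mem_image.mp he'
      rw [memsd] at he
      obtain ⟨heT, heg, heg2⟩ := he
      obtain ⟨a, b, heq, ha, hb, -, -, -⟩ := rep e heT
      subst heq
      have hσmem : s(a + (n : ZMod (2 * n + 2)) + 1, b + (n : ZMod (2 * n + 2)) + 1) ∈ T := by
        have h := hT.2 _ heT
        rw [Sym2.map_pair_eq] at h
        rwa [show a + ((n : ZMod (2 * n + 2)) + 1) = a + (n : ZMod (2 * n + 2)) + 1 by ring,
          show b + ((n : ZMod (2 * n + 2)) + 1) = b + (n : ZMod (2 * n + 2)) + 1 by ring] at h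
      have hσg : s(a + (n : ZMod (2 * n + 2)) + 1, b + (n : ZMod (2 * n + 2)) + 1)
          ≠ s(c, c + 2) := by
        intro h
        rw [Sym2.eq_iff] at h
        rcases h with ⟨h1, h2⟩ | ⟨h1, h2⟩
        · refine heg2 ?_
          have ha' : a = u2 := by rw [hu2]; have := key a c h1; rw [this]
          have hb' : b = u2 + 2 := by
            have := key b (c + 2) h2
            rw [this, hu2]; ring
          rw [ha', hb']
        · refine heg2 ?_
          have ha' : a = u2 + 2 := by
            have := key a (c + 2) h1
            rw [this, hu2]; ring
          have hb' : b = u2 := by rw [hu2]; have := key b c h2; rw [this]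
          rw [ha', hb']
          exact Sym2.eq_swap
      have hσg2 : s(a + (n : ZMod (2 * n + 2)) + 1, b + (n : ZMod (2 * n + 2)) + 1)
          ≠ s(u2, u2 + 2) := by
        intro h
        rw [Sym2.eq_iff] at h
        rcases h with ⟨h1, h2⟩ | ⟨h1, h2⟩
        · refine heg ?_
          have ha' : a = c := by
            have := key a u2 h1
            rw [this, hu2]
            linear_combination h00
          have hb' : b = c + 2 := by
            have := key b (u2 + 2) h2
            rw [this, hu2]
            linear_combination h00
          rw [ha', hb']
        · refine heg ?_
          have ha' : a = c + 2 := by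
            have := key a (u2 + 2) h1
            rw [this, hu2]
            linear_combination h00
          have hb' : b = c := by
            have := key b u2 h2
            rw [this, hu2]
            linear_combination h00
          rw [ha', hb']
          exact Sym2.eq_swap
      rw [Sym2.map_pair_eq, Sym2.map_pair_eq]
      refine Finset.mem_image.mpr ⟨s(a + (n : ZMod (2 * n + 2)) + 1,
        b + (n : ZMod (2 * n + 2)) + 1), (memsd _).mpr ⟨hσmem, hσg, hσg2⟩, ?_⟩
      rw [Sym2.map_pair_eq, phi_sigma hn2 ha, phi_sigma hn2 hb]
      rw [show phiF n c a + ((n - 1 : ℕ) : ZMod (2 * (n - 1) + 2)) + 1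
          = phiF n c a + (((n - 1 : ℕ) : ZMod (2 * (n - 1) + 2)) + 1) by ring,
        show phiF n c b + ((n - 1 : ℕ) : ZMod (2 * (n - 1) + 2)) + 1
          = phiF n c b + (((n - 1 : ℕ) : ZMod (2 * (n - 1) + 2)) + 1) by ring]
    have hT' : CSTriangulation (n - 1) T' := ⟨⟨prop1, prop2, prop3⟩, prop4⟩
    obtain ⟨e', he', hc'⟩ := IH (n - 1) (by omega) (by omega) T' hT'
    obtain ⟨a', hea'⟩ := hc'
    obtain ⟨e, he, hmape⟩ := Finset.mem_image.mp he'
    rw [memsd] at he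
    obtain ⟨a, b, heq, ha, hb, -, -, -⟩ := rep e he.1
    subst heq
    rw [Sym2.map_pair_eq, hea', Sym2.eq_iff] at hmape
    rcases hmape with ⟨h1, h2⟩ | ⟨h1, h2⟩
    · have hφ : phiF n c b = phiF n c (a + (n : ZMod (2 * n + 2)) + 1) := by
        rw [phi_sigma hn2 ha, h1, h2]
      have hbs : b = a + (n : ZMod (2 * n + 2)) + 1 :=
        phi_inj (by omega) hb (sigma_okp hn ha) hφ
      exact hncex _ he.1 ⟨a, by rw [hbs]⟩
    · have hφ : phiF n c a = phiF n c (b + (n : ZMod (2 * n + 2)) + 1) := by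
        rw [phi_sigma hn2 hb, h2, h1]
      have has : a = b + (n : ZMod (2 * n + 2)) + 1 :=
        phi_inj (by omega) ha (sigma_okp hn hb) hφ
      exact hncex _ he.1 ⟨b, by rw [has]; exact Sym2.eq_swap⟩

end CSAux

open CSAux

/-- Every centrally-symmetric triangulation of a regular `(2n+2)`-gon (with `n ≥ 1`) contains
exactly one central diagonal. -/
theorem csTriangulation_unique_central (n : ℕ) (hn : 1 ≤ n)
    (T : Finset (Sym2 (ZMod (2 * n + 2)))) (hT : CSTriangulation n T) :
    ∃! e : Sym2 (ZMod (2 * n + 2)), e ∈ T ∧ IsCentral n e := by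
  obtain ⟨e, he, hc⟩ := CSAux.central_exists n hn T hT
  refine ⟨e, ⟨he, hc⟩, ?_⟩
  rintro f ⟨hf, hcf⟩
  obtain ⟨b, hb⟩ := hc
  obtain ⟨a, ha⟩ := hcf
  subst hb; subst ha
  -- goal : s(a, a + ↑n + 1) = s(b, b + ↑n + 1)
  have hlt := pos_lt b a
  have pσb : pos b (b + (n : ZMod (2 * n + 2)) + 1) = n + 1 := by
    rw [show b + (n : ZMod (2 * n + 2)) + 1 = b + ((n + 1 : ℕ) : ZMod (2 * n + 2)) by
      push_cast; ring]
    exact pos_add_k b (n + 1) (by omega)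
  have p0 : pos b b = 0 := pos_self b
  by_cases h0 : pos b a = 0
  · rw [pos_eq_zero h0]
  by_cases hmid : pos b a = n + 1
  · have ha' : a = b + (n : ZMod (2 * n + 2)) + 1 := by
      rw [eq_of_pos (k := n + 1) (by omega) hmid]; push_cast; ring
    have h00 : ((n : ZMod (2 * n + 2)) + 1) + ((n : ZMod (2 * n + 2)) + 1) = 0 := by
      have h := ZMod.natCast_self (2 * n + 2)
      push_cast at h
      linear_combination h
    have ha2 : a + (n : ZMod (2 * n + 2)) + 1 = b := by
      rw [ha']
      linear_combination h00
    rw [ha2, ha']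
    exact Sym2.eq_swap
  · -- the two central diagonals cross : contradiction
    have cp : crossPairs (2 * n + 2) b (b + (n : ZMod (2 * n + 2)) + 1)
        a (a + (n : ZMod (2 * n + 2)) + 1) := by
      rcases lt_or_ge (pos b a) (n + 1) with hcase | hcase
      · have pσa : pos b (a + (n : ZMod (2 * n + 2)) + 1) = pos b a + (n + 1) := by
          rw [sigma_pos b a, if_pos (by omega)]
        left
        constructor
        · rw [arcMem_pos b, p0, pσb]; omega
        · rw [arcMem_pos b, p0, pσb, pσa]; omega
      · have pσa : pos b (a + (n : ZMod (2 * n + 2)) + 1)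
            = pos b a + (n + 1) - (2 * n + 2) := by
          rw [sigma_pos b a, if_neg (by omega)]
        right
        constructor
        · rw [arcMem_pos b, p0, pσb, pσa]; omega
        · rw [arcMem_pos b, p0, pσb]; omega
    exact (hT.1.2.1 _ he _ hf ((crosses_mk _ _ _ _).mpr cp)).elim
end

section
/- For a fixed central diagonal D of a regular (2n+2)-gon, the set of centrally-symmetric triangulations containing D is in bijection with the set of triangulations of a convex (n+2)-gon; in particular its cardinality is the Catalan number C_n. -/
open scoped BigOperators
open Finset

section NatWorld

def NCross (p q : ℕ × ℕ) : Prop :=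
  (p.1 < q.1 ∧ q.1 < p.2 ∧ p.2 < q.2) ∨ (q.1 < p.1 ∧ p.1 < q.2 ∧ q.2 < p.2)

def NDiag (a b : ℕ) (p : ℕ × ℕ) : Prop :=
  a ≤ p.1 ∧ p.1 + 1 < p.2 ∧ p.2 ≤ b ∧ ¬(p.1 = a ∧ p.2 = b)

def NTri (a b : ℕ) (T : Finset (ℕ × ℕ)) : Prop :=
  (∀ p ∈ T, NDiag a b p) ∧ (∀ p ∈ T, ∀ q ∈ T, ¬ NCross p q) ∧
  (∀ p, NDiag a b p → p ∉ T → ∃ q ∈ T, NCross p q)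

lemma NCross_comm {p q : ℕ × ℕ} : NCross p q ↔ NCross q p := by
  unfold NCross; omega

lemma NCross_irrefl (p : ℕ × ℕ) : ¬ NCross p p := by unfold NCross; omega

instance NTri_finite (a b : ℕ) : Finite {T : Finset (ℕ × ℕ) // NTri a b T} := by
  have : ∀ T : {T : Finset (ℕ × ℕ) // NTri a b T},
      T.1 ∈ (Finset.range (b+1) ×ˢ Finset.range (b+1)).powerset := by
    rintro ⟨T, hT⟩
    simp only [Finset.mem_powerset]
    intro p hp
    have := hT.1 p hp
    simp only [Finset.mem_product, Finset.mem_range]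
    unfold NDiag at this
    omega
  exact Finite.of_injective
    (fun T => (⟨T.1, this T⟩ : ((Finset.range (b+1) ×ˢ Finset.range (b+1)).powerset : Finset _)))
    (by intro x y h; exact Subtype.ext (by simpa using congrArg Subtype.val h))

/-- The apex property. -/
def IsApex (a b k : ℕ) (T : Finset (ℕ × ℕ)) : Prop :=
  a < k ∧ k < b ∧ (k = a + 1 ∨ (a, k) ∈ T) ∧ (k + 1 = b ∨ (k, b) ∈ T)

lemma apex_unique {a b : ℕ} {T : Finset (ℕ × ℕ)} (h : NTri a b T) {k₁ k₂ : ℕ}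
    (h₁ : IsApex a b k₁ T) (h₂ : IsApex a b k₂ T) : k₁ = k₂ := by
  by_contra hne
  wlog hlt : k₁ < k₂ generalizing k₁ k₂
  · exact this h₂ h₁ (Ne.symm hne) (by omega)
  obtain ⟨ha1, hb1, hc1, hd1⟩ := h₁
  obtain ⟨ha2, hb2, hc2, hd2⟩ := h₂
  have hak₂ : (a, k₂) ∈ T := by rcases hc2 with h | h; · omega
                                exact h
  have hk₁b : (k₁, b) ∈ T := by rcases hd1 with h | h; · omega
                                exact h
  exact h.2.1 _ hak₂ _ hk₁b (Or.inl ⟨by omega, by omega, by omega⟩)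

open Classical in
lemma apex_exists {a b : ℕ} {T : Finset (ℕ × ℕ)} (h : NTri a b T) (hab : a + 1 < b) :
    ∃ k, IsApex a b k T := by
  classical
  set S : Finset ℕ := (Finset.Ioc a (b-1)).filter (fun j => j = a + 1 ∨ (a, j) ∈ T) with hS
  have haS : a + 1 ∈ S := by
    rw [hS, Finset.mem_filter, Finset.mem_Ioc]
    exact ⟨⟨by omega, by omega⟩, Or.inl rfl⟩
  set k := S.max' ⟨a+1, haS⟩ with hk
  have hkS : k ∈ S := S.max'_mem _
  simp only [hS, Finset.mem_filter, Finset.mem_Ioc] at hkS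
  refine ⟨k, by omega, by omega, hkS.2, ?_⟩
  by_cases hkb : k + 1 = b
  · exact Or.inl hkb
  right
  by_contra hkbT
  have hdiag : NDiag a b (k, b) := ⟨by omega, by omega, le_rfl, by omega⟩
  obtain ⟨q, hqT, hcr⟩ := h.2.2 _ hdiag hkbT
  have hqd := h.1 q hqT
  obtain ⟨u, v⟩ := q
  unfold NDiag at hqd
  simp only at hqd
  have huv : u < k ∧ k < v ∧ v < b := by
    rcases hcr with ⟨h1, h2, h3⟩ | ⟨h1, h2, h3⟩ <;> simp_all <;> omega
  rcases Nat.eq_or_lt_of_le hqd.1 with hu | hu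
  · -- u = a, so v ∈ S with v > k, contradiction with maximality
    have hvS : v ∈ S := by
      simp only [hS, Finset.mem_filter, Finset.mem_Ioc]
      exact ⟨⟨by omega, by omega⟩, Or.inr (by rw [hu]; exact hqT)⟩
    have := S.le_max' v hvS
    omega
  · -- u > a, so (a,k) ∈ T crosses (u,v)
    have hak : (a, k) ∈ T := by rcases hkS.2 with h | h; · omega
                                exact h
    exact h.2.1 _ hak _ hqT (Or.inl ⟨by omega, by omega, by omega⟩)

lemma no_straddle {a b k : ℕ} {T : Finset (ℕ × ℕ)} (h : NTri a b T) (hk : IsApex a b k T)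
    {p : ℕ × ℕ} (hp : p ∈ T) : p.2 ≤ k ∨ k ≤ p.1 := by
  obtain ⟨x, y⟩ := p
  simp only
  by_contra hc
  push_neg at hc
  obtain ⟨hy, hx⟩ := hc
  have hd := h.1 _ hp
  unfold NDiag at hd; simp only at hd
  obtain ⟨hka, hkb, hak, hkbT⟩ := hk
  rcases Nat.eq_or_lt_of_le hd.1 with hxa | hxa
  · -- x = a
    have hyb : y < b := by
      rcases Nat.eq_or_lt_of_le hd.2.2.1 with h' | h'
      · exfalso; exact hd.2.2.2 ⟨hxa.symm, h'⟩
      · exact h'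
    rcases hkbT with h' | h'
    · omega
    · exact h.2.1 _ hp _ h' (Or.inl ⟨by omega, by omega, by omega⟩)
  · -- x > a
    have hak' : (a, k) ∈ T := by rcases hak with h' | h'; · omega
                                 exact h'
    exact h.2.1 _ hp _ hak' (Or.inr ⟨by omega, by omega, by omega⟩)

open Classical in
noncomputable def leftT (a k : ℕ) (T : Finset (ℕ × ℕ)) : Finset (ℕ × ℕ) :=
  T.filter (fun p => p.2 ≤ k ∧ p ≠ (a, k))

open Classical in
noncomputable def rightT (k b : ℕ) (T : Finset (ℕ × ℕ)) : Finset (ℕ × ℕ) :=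
  T.filter (fun p => k ≤ p.1 ∧ p ≠ (k, b))

lemma recon {a b k : ℕ} {T : Finset (ℕ × ℕ)} (h : NTri a b T) (hk : IsApex a b k T) :
    T = leftT a k T ∪ rightT k b T ∪ (if a + 1 < k then {(a, k)} else ∅)
        ∪ (if k + 1 < b then {(k, b)} else ∅) := by
  classical
  ext p
  simp only [leftT, rightT, Finset.mem_union, Finset.mem_filter]
  constructor
  · intro hp
    have hs := no_straddle h hk hp
    by_cases hp1 : p = (a, k)
    · have : a + 1 < k := by
        have := h.1 p hp; unfold NDiag at this; rw [hp1] at this; simp only at this; omega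
      simp [this, hp1]
    by_cases hp2 : p = (k, b)
    · have : k + 1 < b := by
        have := h.1 p hp; unfold NDiag at this; rw [hp2] at this; simp only at this; omega
      simp [this, hp2]
    rcases hs with hs | hs
    · exact Or.inl (Or.inl (Or.inl ⟨hp, hs, hp1⟩))
    · exact Or.inl (Or.inl (Or.inr ⟨hp, hs, hp2⟩))
  · intro hp
    rcases hp with ((⟨h1, _⟩ | ⟨h1, _⟩) | h1) | h1
    · exact h1
    · exact h1
    · split at h1
      · rcases hk.2.2.1 with h' | h'
        · omega
        · simpa using (Finset.mem_singleton.mp h1) ▸ h'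
      · simp at h1
    · split at h1
      · rcases hk.2.2.2 with h' | h'
        · omega
        · simpa using (Finset.mem_singleton.mp h1) ▸ h'
      · simp at h1

lemma split_left {a b k : ℕ} {T : Finset (ℕ × ℕ)} (h : NTri a b T) (hk : IsApex a b k T) :
    NTri a k (leftT a k T) := by
  classical
  obtain ⟨hka, hkb, hak, hkbT⟩ := hk
  refine ⟨?_, ?_, ?_⟩
  · rintro p hp
    simp only [leftT, Finset.mem_filter] at hp
    have := h.1 p hp.1
    unfold NDiag at this ⊢
    obtain ⟨x, y⟩ := p
    have : ¬(x = a ∧ y = k) := by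
      intro hc; exact hp.2.2 (by rw [Prod.ext_iff]; exact ⟨hc.1, hc.2⟩)
    unfold NDiag at *
    simp only at *
    omega
  · intro p hp q hq
    simp only [leftT, Finset.mem_filter] at hp hq
    exact h.2.1 p hp.1 q hq.1
  · intro p hpd hpn
    have hpdb : NDiag a b p := by unfold NDiag at *; omega
    have hpT : p ∉ T := by
      intro hc
      apply hpn
      simp only [leftT, Finset.mem_filter]
      exact ⟨hc, hpd.2.2.1, by rintro rfl; exact hpd.2.2.2 ⟨rfl, rfl⟩⟩
    obtain ⟨q, hqT, hcr⟩ := h.2.2 p hpdb hpT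
    refine ⟨q, ?_, hcr⟩
    simp only [leftT, Finset.mem_filter]
    have hs := no_straddle h ⟨hka, hkb, hak, hkbT⟩ hqT
    obtain ⟨x, y⟩ := p; obtain ⟨u, v⟩ := q
    unfold NDiag at hpd; unfold NCross at hcr
    simp only at *
    have hv : v ≤ k := by omega
    refine ⟨hqT, hv, ?_⟩
    intro hc
    rw [Prod.ext_iff] at hc
    simp only at hc
    omega

lemma split_right {a b k : ℕ} {T : Finset (ℕ × ℕ)} (h : NTri a b T) (hk : IsApex a b k T) :
    NTri k b (rightT k b T) := by
  classical
  obtain ⟨hka, hkb, hak, hkbT⟩ := hk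
  refine ⟨?_, ?_, ?_⟩
  · rintro p hp
    simp only [rightT, Finset.mem_filter] at hp
    have := h.1 p hp.1
    obtain ⟨x, y⟩ := p
    have : ¬(x = k ∧ y = b) := by
      intro hc; exact hp.2.2 (by rw [Prod.ext_iff]; exact ⟨hc.1, hc.2⟩)
    unfold NDiag at *
    simp only at *
    omega
  · intro p hp q hq
    simp only [rightT, Finset.mem_filter] at hp hq
    exact h.2.1 p hp.1 q hq.1
  · intro p hpd hpn
    have hpdb : NDiag a b p := by unfold NDiag at *; omega
    have hpT : p ∉ T := by
      intro hc
      apply hpn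
      simp only [rightT, Finset.mem_filter]
      exact ⟨hc, hpd.1, by rintro rfl; exact hpd.2.2.2 ⟨rfl, rfl⟩⟩
    obtain ⟨q, hqT, hcr⟩ := h.2.2 p hpdb hpT
    refine ⟨q, ?_, hcr⟩
    simp only [rightT, Finset.mem_filter]
    have hs := no_straddle h ⟨hka, hkb, hak, hkbT⟩ hqT
    obtain ⟨x, y⟩ := p; obtain ⟨u, v⟩ := q
    unfold NDiag at hpd; unfold NCross at hcr
    simp only at *
    have hu : k ≤ u := by omega
    refine ⟨hqT, hu, ?_⟩
    intro hc
    rw [Prod.ext_iff] at hc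
    simp only at hc
    omega

noncomputable def mergeT (a b k : ℕ) (T₁ T₂ : Finset (ℕ × ℕ)) : Finset (ℕ × ℕ) :=
  T₁ ∪ T₂ ∪ (if a + 1 < k then {(a, k)} else ∅) ∪ (if k + 1 < b then {(k, b)} else ∅)

lemma merge_NTri {a b k : ℕ} {T₁ T₂ : Finset (ℕ × ℕ)} (hak : a < k) (hkb : k < b)
    (h₁ : NTri a k T₁) (h₂ : NTri k b T₂) : NTri a b (mergeT a b k T₁ T₂) := by
  classical
  have mem_iff : ∀ p, p ∈ mergeT a b k T₁ T₂ ↔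
      p ∈ T₁ ∨ p ∈ T₂ ∨ (a + 1 < k ∧ p = (a, k)) ∨ (k + 1 < b ∧ p = (k, b)) := by
    intro p
    unfold mergeT
    simp only [Finset.mem_union]
    constructor
    · rintro (((h | h) | h) | h)
      · exact Or.inl h
      · exact Or.inr (Or.inl h)
      · split at h
        · exact Or.inr (Or.inr (Or.inl ⟨by assumption, Finset.mem_singleton.mp h⟩))
        · simp at h
      · split at h
        · exact Or.inr (Or.inr (Or.inr ⟨by assumption, Finset.mem_singleton.mp h⟩))
        · simp at h
    · rintro (h | h | ⟨h1, rfl⟩ | ⟨h1, rfl⟩)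
      · exact Or.inl (Or.inl (Or.inl h))
      · exact Or.inl (Or.inl (Or.inr h))
      · exact Or.inl (Or.inr (by simp [h1]))
      · exact Or.inr (by simp [h1])
  -- bounds for members
  have bd : ∀ p ∈ mergeT a b k T₁ T₂, NDiag a b p ∧ (p.2 ≤ k ∨ k ≤ p.1) := by
    intro p hp
    rw [mem_iff] at hp
    rcases hp with h | h | ⟨h1, rfl⟩ | ⟨h1, rfl⟩
    · have := h₁.1 p h; unfold NDiag at *; omega
    · have := h₂.1 p h; unfold NDiag at *; omega
    · unfold NDiag; simp only; omega
    · unfold NDiag; simp only; omega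
  refine ⟨fun p hp => (bd p hp).1, ?_, ?_⟩
  · intro p hp q hq
    have hpm := hp; have hqm := hq
    rw [mem_iff] at hpm hqm
    have hpb := bd p hp; have hqb := bd q hq
    -- same-side crossing handled by h₁/h₂; otherwise numeric
    rcases hpm with h1 | h1 | ⟨_, rfl⟩ | ⟨_, rfl⟩ <;>
      rcases hqm with h2 | h2 | ⟨_, rfl⟩ | ⟨_, rfl⟩
    · exact h₁.2.1 p h1 q h2
    all_goals try (exact h₂.2.1 p h1 q h2)
    all_goals
      (first
        | (have d1 := hpb.1; have d2 := hqb.1; have s1 := hpb.2; have s2 := hqb.2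
           have e1 : ∀ r ∈ T₁, NDiag a k r := h₁.1
           have e2 : ∀ r ∈ T₂, NDiag k b r := h₂.1
           first
             | (have f1 := e1 p h1)
             | (have f1 : True := trivial)
           first
             | (have f2 := e1 q h2)
             | (have f2 : True := trivial)
           first
             | (have g1 := e2 p h1)
             | (have g1 : True := trivial)
           first
             | (have g2 := e2 q h2)
             | (have g2 : True := trivial)
           unfold NDiag NCross at *
           omega))
  · intro p hpd hpn
    obtain ⟨x, y⟩ := p
    have hx := hpd.1
    have hd := hpd
    unfold NDiag at hd
    simp only at hd
    by_cases hcase : x < k ∧ k < y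
    · -- p straddles k
      rcases Nat.eq_or_lt_of_le hd.1 with hxa | hxa
      · -- x = a, so y < b and use (k,b)
        have hyb : y < b := by
          rcases Nat.eq_or_lt_of_le hd.2.2.1 with h' | h'
          · exact absurd ⟨hxa.symm, h'⟩ hd.2.2.2
          · exact h'
        have hkb' : k + 1 < b := by omega
        refine ⟨(k, b), ?_, Or.inl ⟨by omega, by omega, by omega⟩⟩
        rw [mem_iff]; exact Or.inr (Or.inr (Or.inr ⟨hkb', rfl⟩))
      · have hak' : a + 1 < k := by omega
        refine ⟨(a, k), ?_, Or.inr ⟨by omega, by omega, by omega⟩⟩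
        rw [mem_iff]; exact Or.inr (Or.inr (Or.inl ⟨hak', rfl⟩))
    · rcases (by omega : y ≤ k ∨ k ≤ x) with hyk | hxk
      · -- inside left polygon
        have hne : (x, y) ≠ (a, k) := by
          intro hc
          rw [Prod.ext_iff] at hc; simp only at hc
          apply hpn; rw [mem_iff]
          exact Or.inr (Or.inr (Or.inl ⟨by omega, by rw [Prod.ext_iff]; exact ⟨hc.1, hc.2⟩⟩))
        have hpd1 : NDiag a k (x, y) := by
          refine ⟨hd.1, hd.2.1, hyk, ?_⟩
          intro hc; exact hne (by rw [Prod.ext_iff]; exact ⟨hc.1, hc.2⟩)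
        have hpn1 : (x, y) ∉ T₁ := fun hc => hpn (by rw [mem_iff]; exact Or.inl hc)
        obtain ⟨q, hq, hcr⟩ := h₁.2.2 _ hpd1 hpn1
        exact ⟨q, by rw [mem_iff]; exact Or.inl hq, hcr⟩
      · have hne : (x, y) ≠ (k, b) := by
          intro hc
          rw [Prod.ext_iff] at hc; simp only at hc
          apply hpn; rw [mem_iff]
          exact Or.inr (Or.inr (Or.inr ⟨by omega, by rw [Prod.ext_iff]; exact ⟨hc.1, hc.2⟩⟩))
        have hpd2 : NDiag k b (x, y) := by
          refine ⟨hxk, hd.2.1, hd.2.2.1, ?_⟩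
          intro hc; exact hne (by rw [Prod.ext_iff]; exact ⟨hc.1, hc.2⟩)
        have hpn2 : (x, y) ∉ T₂ := fun hc => hpn (by rw [mem_iff]; exact Or.inr (Or.inl hc))
        obtain ⟨q, hq, hcr⟩ := h₂.2.2 _ hpd2 hpn2
        exact ⟨q, by rw [mem_iff]; exact Or.inr (Or.inl hq), hcr⟩

lemma merge_apex {a b k : ℕ} {T₁ T₂ : Finset (ℕ × ℕ)} (hak : a < k) (hkb : k < b)
    (h₁ : NTri a k T₁) (h₂ : NTri k b T₂) : IsApex a b k (mergeT a b k T₁ T₂) := by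
  classical
  refine ⟨hak, hkb, ?_, ?_⟩
  · by_cases h : a + 1 < k
    · right; unfold mergeT; simp [h]
    · left; omega
  · by_cases h : k + 1 < b
    · right; unfold mergeT; simp [h]
    · left; omega

lemma merge_left {a b k : ℕ} {T₁ T₂ : Finset (ℕ × ℕ)} (hak : a < k) (hkb : k < b)
    (h₁ : NTri a k T₁) (h₂ : NTri k b T₂) : leftT a k (mergeT a b k T₁ T₂) = T₁ := by
  classical
  ext p
  simp only [leftT, Finset.mem_filter]
  constructor
  · rintro ⟨hp, hpk, hpne⟩
    unfold mergeT at hp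
    simp only [Finset.mem_union] at hp
    rcases hp with ((h | h) | h) | h
    · exact h
    · exfalso; have := h₂.1 p h; unfold NDiag at this; omega
    · exfalso; split at h
      · exact hpne (Finset.mem_singleton.mp h)
      · simp at h
    · exfalso; split at h
      · have := Finset.mem_singleton.mp h; subst this; simp at hpk; omega
      · simp at h
  · intro hp
    have hd := h₁.1 p hp
    unfold NDiag at hd
    refine ⟨?_, hd.2.2.1, ?_⟩
    · unfold mergeT; simp only [Finset.mem_union]; exact Or.inl (Or.inl (Or.inl hp))
    · intro hc; subst hc; simp at hd

lemma merge_right {a b k : ℕ} {T₁ T₂ : Finset (ℕ × ℕ)} (hak : a < k) (hkb : k < b)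
    (h₁ : NTri a k T₁) (h₂ : NTri k b T₂) : rightT k b (mergeT a b k T₁ T₂) = T₂ := by
  classical
  ext p
  simp only [rightT, Finset.mem_filter]
  constructor
  · rintro ⟨hp, hpk, hpne⟩
    unfold mergeT at hp
    simp only [Finset.mem_union] at hp
    rcases hp with ((h | h) | h) | h
    · exfalso; have := h₁.1 p h; unfold NDiag at this; omega
    · exact h
    · exfalso; split at h
      · have := Finset.mem_singleton.mp h; subst this; simp at hpk; omega
      · simp at h
    · exfalso; split at h
      · exact hpne (Finset.mem_singleton.mp h)
      · simp at h
  · intro hp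
    have hd := h₂.1 p hp
    unfold NDiag at hd
    refine ⟨?_, hd.1, ?_⟩
    · unfold mergeT; simp only [Finset.mem_union]; exact Or.inl (Or.inl (Or.inr hp))
    · intro hc; subst hc; simp at hd

lemma nat_card_sigma {ι : Type*} [Fintype ι] (f : ι → Type*) [∀ i, Finite (f i)] :
    Nat.card (Σ i, f i) = ∑ i, Nat.card (f i) := by
  letI : ∀ i, Fintype (f i) := fun i => Fintype.ofFinite _
  simp [Nat.card_eq_fintype_card]

theorem NTri_card : ∀ d a b : ℕ, a < b → b - a = d →
    Nat.card {T : Finset (ℕ × ℕ) // NTri a b T} = catalan (d - 1) := by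
  intro d
  induction d using Nat.strong_induction_on with
  | _ d IH =>
    intro a b hab hd
    rcases Nat.lt_or_ge (a + 1) b with h2 | h1
    swap
    · -- b = a + 1
      have hb : b = a + 1 := by omega
      have hd1 : d = 1 := by omega
      subst hb; subst hd1
      have huniq : ∀ T : Finset (ℕ × ℕ), NTri a (a + 1) T ↔ T = ∅ := by
        intro T
        constructor
        · intro hT
          rw [Finset.eq_empty_iff_forall_notMem]
          intro p hp
          have := hT.1 p hp
          unfold NDiag at this
          omega
        · rintro rfl
          refine ⟨by simp, by simp, ?_⟩
          intro p hpd
          unfold NDiag at hpd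
          omega
      have : Nat.card {T : Finset (ℕ × ℕ) // NTri a (a + 1) T} = 1 := by
        rw [Nat.card_eq_one_iff_unique]
        constructor
        · constructor
          rintro ⟨T, hT⟩ ⟨S, hS⟩
          have := (huniq T).1 hT
          have := (huniq S).1 hS
          subst this; subst this; rfl
        · exact ⟨⟨∅, (huniq ∅).2 rfl⟩⟩
      simpa using this
    · -- recursive case
      have hd2 : 2 ≤ d := by omega
      let Sig := Σ k : {k // k ∈ Finset.Ioo a b},
        {T₁ : Finset (ℕ × ℕ) // NTri a k.1 T₁} × {T₂ : Finset (ℕ × ℕ) // NTri k.1 b T₂}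
      have hmem : ∀ k : {k // k ∈ Finset.Ioo a b}, a < k.1 ∧ k.1 < b := by
        rintro ⟨k, hk⟩; exact Finset.mem_Ioo.mp hk
      let G : Sig → {T : Finset (ℕ × ℕ) // NTri a b T} :=
        fun x => ⟨mergeT a b x.1.1 x.2.1.1 x.2.2.1,
          merge_NTri (hmem x.1).1 (hmem x.1).2 x.2.1.2 x.2.2.2⟩
      have hGbij : Function.Bijective G := by
        constructor
        · rintro ⟨⟨k₁, hk₁⟩, ⟨T₁, h₁⟩, ⟨T₂, h₂⟩⟩ ⟨⟨k₂, hk₂⟩, ⟨S₁, g₁⟩, ⟨S₂, g₂⟩⟩ hxy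
          simp only [G, Subtype.mk.injEq] at hxy
          rw [Finset.mem_Ioo] at hk₁ hk₂
          have hap1 := merge_apex hk₁.1 hk₁.2 h₁ h₂
          have hap2 := merge_apex hk₂.1 hk₂.2 g₁ g₂
          rw [hxy] at hap1
          have hk : k₁ = k₂ := apex_unique (merge_NTri hk₂.1 hk₂.2 g₁ g₂) hap1 hap2
          subst hk
          have e1 : T₁ = S₁ := by
            rw [← merge_left hk₁.1 hk₁.2 h₁ h₂, ← merge_left hk₁.1 hk₁.2 g₁ g₂, hxy]
          have e2 : T₂ = S₂ := by
            rw [← merge_right hk₁.1 hk₁.2 h₁ h₂, ← merge_right hk₁.1 hk₁.2 g₁ g₂, hxy]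
          subst e1; subst e2; rfl
        · rintro ⟨T, hT⟩
          obtain ⟨k, hk⟩ := apex_exists hT h2
          refine ⟨⟨⟨k, Finset.mem_Ioo.mpr ⟨hk.1, hk.2.1⟩⟩,
            ⟨leftT a k T, split_left hT hk⟩, ⟨rightT k b T, split_right hT hk⟩⟩, ?_⟩
          apply Subtype.ext
          show mergeT a b k (leftT a k T) (rightT k b T) = T
          unfold mergeT
          exact (recon hT hk).symm
      have hcard : Nat.card {T : Finset (ℕ × ℕ) // NTri a b T} = Nat.card Sig :=
        (Nat.card_congr (Equiv.ofBijective G hGbij)).symm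
      rw [hcard]
      have := nat_card_sigma (ι := {k // k ∈ Finset.Ioo a b})
        (fun k => ({T₁ : Finset (ℕ × ℕ) // NTri a k.1 T₁} ×
          {T₂ : Finset (ℕ × ℕ) // NTri k.1 b T₂}))
      rw [this]
      have hterm : ∀ k : {k // k ∈ Finset.Ioo a b},
          Nat.card ({T₁ : Finset (ℕ × ℕ) // NTri a k.1 T₁} ×
            {T₂ : Finset (ℕ × ℕ) // NTri k.1 b T₂})
          = catalan (k.1 - a - 1) * catalan (b - k.1 - 1) := by
        rintro ⟨k, hk⟩
        rw [Finset.mem_Ioo] at hk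
        rw [Nat.card_prod]
        rw [IH (k - a) (by omega) a k hk.1 rfl, IH (b - k) (by omega) k b hk.2 rfl]
      rw [Finset.sum_congr rfl (fun k _ => hterm k)]
      rw [Finset.sum_coe_sort (Finset.Ioo a b) (fun k => catalan (k - a - 1) * catalan (b - k - 1))]
      -- now the catalan identity
      have hcat : catalan (d - 1) = ∑ i ∈ Finset.range (d - 1), catalan i * catalan (d - 2 - i) := by
        have : d - 1 = (d - 2) + 1 := by omega
        rw [this, catalan_succ]
        rw [Fin.sum_univ_eq_sum_range (fun i => catalan i * catalan (d - 2 - i)) (d - 2 + 1)]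
      rw [hcat]
      refine Finset.sum_nbij' (fun k => k - a - 1) (fun i => a + 1 + i) ?_ ?_ ?_ ?_ ?_
      · intro k hk
        simp only [Finset.mem_Ioo] at hk
        simp only [Finset.mem_range]
        omega
      · intro i hi
        simp only [Finset.mem_range] at hi
        simp only [Finset.mem_Ioo]
        omega
      · intro k hk
        simp only [Finset.mem_Ioo] at hk
        show a + 1 + (k - a - 1) = k
        omega
      · intro i hi
        simp only [Finset.mem_range] at hi
        show a + 1 + i - a - 1 = i
        omega
      · intro k hk
        simp only [Finset.mem_Ioo] at hk
        show catalan (k - a - 1) * catalan (b - k - 1)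
            = catalan (k - a - 1) * catalan (d - 2 - (k - a - 1))
        have e2 : d - 2 - (k - a - 1) = b - k - 1 := by omega
        rw [e2]

end NatWorld

section ZModWorld

lemma NDiag_mk (a b x y : ℕ) :
    NDiag a b (x, y) ↔ (a ≤ x ∧ x + 1 < y ∧ y ≤ b ∧ ¬(x = a ∧ y = b)) := Iff.rfl

lemma NCross_mk (x y u v : ℕ) :
    NCross (x, y) (u, v) ↔ ((x < u ∧ u < y ∧ y < v) ∨ (u < x ∧ x < v ∧ v < y)) := Iff.rfl

variable {m : ℕ}

lemma val_sub_eq [NeZero m] (a x : ZMod m) :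
    (x - a).val = if a.val ≤ x.val then x.val - a.val else x.val + m - a.val := by
  have hm : 0 < m := Nat.pos_of_ne_zero (NeZero.ne m)
  have hx := ZMod.val_lt x
  have ha := ZMod.val_lt a
  rcases eq_or_ne a 0 with rfl | hane
  · simp [ZMod.val_zero]
  · have h0 : a.val ≠ 0 := fun hc => hane ((ZMod.val_eq_zero a).mp hc)
    rw [sub_eq_add_neg, ZMod.val_add, ZMod.neg_val]
    simp only [hane, if_false]
    rcases le_or_gt a.val x.val with h | h
    · rw [if_pos h]
      have he : x.val + (m - a.val) = (x.val - a.val) + m := by omega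
      rw [he, Nat.add_mod_right, Nat.mod_eq_of_lt (by omega)]
    · rw [if_neg (by omega), Nat.mod_eq_of_lt (by omega)]
      omega

lemma arcMem_iff [NeZero m] (a b x : ZMod m) :
    arcMem m a b x ↔ ((a.val < x.val ∧ x.val < b.val) ∨ (b.val < a.val ∧ a.val < x.val) ∨
      (x.val < b.val ∧ b.val < a.val)) := by
  have hx := ZMod.val_lt x
  have ha := ZMod.val_lt a
  have hb := ZMod.val_lt b
  unfold arcMem
  rw [val_sub_eq, val_sub_eq]
  split_ifs <;> omega

lemma crossPairs_iff [NeZero m] (a b c d : ZMod m) :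
    crossPairs m a b c d ↔
      NCross (min a.val b.val, max a.val b.val) (min c.val d.val, max c.val d.val) := by
  unfold crossPairs
  rw [arcMem_iff, arcMem_iff, arcMem_iff, arcMem_iff, NCross_mk]
  rcases le_total a.val b.val with h1 | h1 <;> rcases le_total c.val d.val with h2 | h2 <;>
    [rw [min_eq_left h1, max_eq_right h1, min_eq_left h2, max_eq_right h2];
     rw [min_eq_left h1, max_eq_right h1, min_eq_right h2, max_eq_left h2];
     rw [min_eq_right h1, max_eq_left h1, min_eq_left h2, max_eq_right h2];
     rw [min_eq_right h1, max_eq_left h1, min_eq_right h2, max_eq_left h2]] <;>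
    omega

noncomputable def toPair : Sym2 (ZMod m) → ℕ × ℕ :=
  Sym2.lift ⟨fun a b => (min a.val b.val, max a.val b.val),
    fun a b => by simp [min_comm, max_comm]⟩

lemma toPair_mk (a b : ZMod m) : toPair s(a, b) = (min a.val b.val, max a.val b.val) := rfl

lemma toPair_injective [NeZero m] : Function.Injective (toPair (m := m)) := by
  intro e f h
  induction e using Sym2.ind with | _ a b => ?_
  induction f using Sym2.ind with | _ c d => ?_
  rw [toPair_mk, toPair_mk, Prod.ext_iff] at h
  obtain ⟨h1, h2⟩ := h
  simp only at h1 h2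
  have hv : (a.val = c.val ∧ b.val = d.val) ∨ (a.val = d.val ∧ b.val = c.val) := by
    simp only [min_def, max_def] at h1 h2
    split_ifs at h1 h2 <;> omega
  have vinj := ZMod.val_injective m
  rcases hv with ⟨h1, h2⟩ | ⟨h1, h2⟩
  · rw [vinj h1, vinj h2]
  · rw [vinj h1, vinj h2, Sym2.eq_swap]

lemma Crosses_iff_NCross [NeZero m] (e f : Sym2 (ZMod m)) :
    Crosses m e f ↔ NCross (toPair e) (toPair f) := by
  induction e using Sym2.ind with | _ a b => ?_
  induction f using Sym2.ind with | _ c d => ?_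
  constructor
  · rintro ⟨a', b', c', d', he, hf, hcp⟩
    rw [crossPairs_iff] at hcp
    have h1 := congrArg (toPair (m := m)) he
    have h2 := congrArg (toPair (m := m)) hf
    rw [toPair_mk, toPair_mk] at h1 h2
    rw [toPair_mk, toPair_mk, h1, h2]
    exact hcp
  · intro h
    rw [toPair_mk, toPair_mk] at h
    exact ⟨a, b, c, d, rfl, rfl, (crossPairs_iff a b c d).mpr h⟩

lemma eq_add_one_iff [NeZero m] (hm : 2 ≤ m) (a b : ZMod m) :
    b = a + 1 ↔ (b.val = a.val + 1 ∨ (a.val = m - 1 ∧ b.val = 0)) := by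
  have ha := ZMod.val_lt a
  have hb := ZMod.val_lt b
  rw [← (ZMod.val_injective m).eq_iff, ZMod.val_add, ZMod.val_one'' (by omega)]
  have hmod : (a.val + 1) % m = if a.val = m - 1 then 0 else a.val + 1 := by
    split_ifs with h
    · rw [h, Nat.sub_add_cancel (by omega), Nat.mod_self]
    · exact Nat.mod_eq_of_lt (by omega)
  rw [hmod]
  split_ifs with h <;> omega

lemma isDiagonal_mk_iff (a b : ZMod m) :
    IsDiagonal m s(a, b) ↔ (a ≠ b ∧ b ≠ a + 1 ∧ a ≠ b + 1) := by
  constructor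
  · rintro ⟨a', b', he, h1, h2, h3⟩
    rw [Sym2.eq_iff] at he
    rcases he with ⟨rfl, rfl⟩ | ⟨rfl, rfl⟩
    · exact ⟨h1, h2, h3⟩
    · exact ⟨Ne.symm h1, h3, h2⟩
  · rintro ⟨h1, h2, h3⟩
    exact ⟨a, b, rfl, h1, h2, h3⟩

lemma IsDiagonal_iff_NDiag (hm : 3 ≤ m) (e : Sym2 (ZMod m)) :
    IsDiagonal m e ↔ NDiag 0 (m - 1) (toPair e) := by
  haveI : NeZero m := ⟨by omega⟩
  induction e using Sym2.ind with | _ a b => ?_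
  rw [isDiagonal_mk_iff, toPair_mk]
  have ha := ZMod.val_lt a
  have hb := ZMod.val_lt b
  rw [Ne, Ne, Ne, ← (ZMod.val_injective m).eq_iff,
      eq_add_one_iff (by omega), eq_add_one_iff (by omega)]
  rcases le_total a.val b.val with h | h <;>
    [rw [min_eq_left h, max_eq_right h, NDiag_mk]; rw [min_eq_right h, max_eq_left h, NDiag_mk]] <;>
    omega

noncomputable def pairToChord (m : ℕ) (p : ℕ × ℕ) : Sym2 (ZMod m) :=
  s((p.1 : ZMod m), (p.2 : ZMod m))

lemma toPair_pairToChord [NeZero m] {p : ℕ × ℕ} (h1 : p.1 ≤ p.2) (h2 : p.2 < m) :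
    toPair (pairToChord m p) = p := by
  obtain ⟨x, y⟩ := p
  simp only at h1 h2
  show toPair s((x : ZMod m), (y : ZMod m)) = (x, y)
  rw [toPair_mk, ZMod.val_cast_of_lt (by omega), ZMod.val_cast_of_lt h2, Prod.ext_iff]
  exact ⟨min_eq_left h1, max_eq_right h1⟩

lemma pairToChord_toPair [NeZero m] (e : Sym2 (ZMod m)) : pairToChord m (toPair e) = e := by
  induction e using Sym2.ind with | _ a b => ?_
  rw [toPair_mk]
  show s(((min a.val b.val : ℕ) : ZMod m), ((max a.val b.val : ℕ) : ZMod m)) = s(a, b)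
  rcases le_total a.val b.val with h | h
  · rw [min_eq_left h, max_eq_right h, ZMod.natCast_zmod_val, ZMod.natCast_zmod_val]
  · rw [min_eq_right h, max_eq_left h, ZMod.natCast_zmod_val, ZMod.natCast_zmod_val, Sym2.eq_swap]

lemma IsTriangulation_iff_NTri (hm : 3 ≤ m) (T : Finset (Sym2 (ZMod m))) :
    IsTriangulation m T ↔ NTri 0 (m - 1) (T.image toPair) := by
  classical
  haveI : NeZero m := ⟨by omega⟩
  constructor
  · rintro ⟨hdiag, hcross, hmax⟩
    refine ⟨?_, ?_, ?_⟩
    · intro p hp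
      rw [Finset.mem_image] at hp
      obtain ⟨e, he, rfl⟩ := hp
      exact (IsDiagonal_iff_NDiag hm e).mp (hdiag e he)
    · intro p hp q hq
      rw [Finset.mem_image] at hp hq
      obtain ⟨e, he, rfl⟩ := hp
      obtain ⟨f, hf, rfl⟩ := hq
      rw [← Crosses_iff_NCross]
      exact hcross e he f hf
    · intro p hpd hpn
      have hp2 : p.2 < m := by have := hpd.2.2.1; omega
      have hp1 : p.1 ≤ p.2 := by have := hpd.2.1; omega
      have htp : toPair (pairToChord m p) = p := toPair_pairToChord hp1 hp2
      have hdiag' : IsDiagonal m (pairToChord m p) := by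
        rw [IsDiagonal_iff_NDiag hm, htp]; exact hpd
      have hnm : pairToChord m p ∉ T := by
        intro hc
        exact hpn (by rw [← htp]; exact Finset.mem_image_of_mem _ hc)
      obtain ⟨f, hf, hcr⟩ := hmax _ hdiag' hnm
      refine ⟨toPair f, Finset.mem_image_of_mem _ hf, ?_⟩
      rw [← htp, ← Crosses_iff_NCross]
      exact hcr
  · rintro ⟨hdiag, hcross, hmax⟩
    refine ⟨?_, ?_, ?_⟩
    · intro e he
      rw [IsDiagonal_iff_NDiag hm]
      exact hdiag _ (Finset.mem_image_of_mem _ he)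
    · intro e he f hf
      rw [Crosses_iff_NCross]
      exact hcross _ (Finset.mem_image_of_mem _ he) _ (Finset.mem_image_of_mem _ hf)
    · intro e hed hen
      have hpd : NDiag 0 (m - 1) (toPair e) := (IsDiagonal_iff_NDiag hm e).mp hed
      have hpn : toPair e ∉ T.image toPair := by
        rw [Finset.mem_image]
        rintro ⟨f, hf, hq⟩
        exact hen (toPair_injective hq ▸ hf)
      obtain ⟨q, hq, hcr⟩ := hmax _ hpd hpn
      rw [Finset.mem_image] at hq
      obtain ⟨f, hf, rfl⟩ := hq
      exact ⟨f, hf, (Crosses_iff_NCross e f).mpr hcr⟩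

lemma image_pairToChord_image (hm : 3 ≤ m) {S : Finset (ℕ × ℕ)} (hS : ∀ p ∈ S, NDiag 0 (m - 1) p) :
    (S.image (pairToChord m)).image toPair = S := by
  classical
  haveI : NeZero m := ⟨by omega⟩
  rw [Finset.image_image]
  have : ∀ p ∈ S, (toPair ∘ pairToChord m) p = id p := by
    intro p hp
    have h := hS p hp
    exact toPair_pairToChord (by have := h.2.1; omega) (by have := h.2.2.1; omega)
  rw [Finset.image_congr this, Finset.image_id]

noncomputable def triEquiv (hm : 3 ≤ m) :
    {T : Finset (Sym2 (ZMod m)) // IsTriangulation m T} ≃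
      {S : Finset (ℕ × ℕ) // NTri 0 (m - 1) S} := by
  classical
  haveI : NeZero m := ⟨by omega⟩
  refine
    { toFun := fun T => ⟨T.1.image toPair, (IsTriangulation_iff_NTri hm T.1).mp T.2⟩
      invFun := fun S => ⟨S.1.image (pairToChord m), ?_⟩
      left_inv := ?_
      right_inv := ?_ }
  · rw [IsTriangulation_iff_NTri hm, image_pairToChord_image hm S.2.1]
    exact S.2
  · rintro ⟨T, hT⟩
    apply Subtype.ext
    show (T.image toPair).image (pairToChord m) = T
    rw [Finset.image_image]
    have : ∀ e ∈ T, (pairToChord m ∘ toPair) e = id e := fun e _ => pairToChord_toPair e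
    rw [Finset.image_congr this, Finset.image_id]
  · rintro ⟨S, hS⟩
    apply Subtype.ext
    show (S.image (pairToChord m)).image toPair = S
    exact image_pairToChord_image hm hS.1

end ZModWorld

section CSPairs

variable {n : ℕ}

def ft (n v : ℕ) : ℕ := if v < n + 1 then v + (n + 1) else v - (n + 1)

def tfun (n : ℕ) (p : ℕ × ℕ) : ℕ × ℕ :=
  (min (ft n p.1) (ft n p.2), max (ft n p.1) (ft n p.2))

def QS (n : ℕ) (S : Finset (ℕ × ℕ)) : Prop :=
  NTri 0 (2 * n + 1) S ∧ (0, n + 1) ∈ S ∧ ∀ p ∈ S, tfun n p ∈ S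

lemma tfun_mk (x y : ℕ) :
    tfun n (x, y) = (min (ft n x) (ft n y), max (ft n x) (ft n y)) := rfl

lemma tfun_eq1 {x y : ℕ} (h1 : x < y) (h2 : y ≤ n) :
    tfun n (x, y) = (x + n + 1, y + n + 1) := by
  simp only [tfun, ft, min_def, max_def]
  split_ifs <;> (rw [Prod.ext_iff]; exact ⟨by omega, by omega⟩)

lemma tfun_eq2 {x : ℕ} (h : x ≤ n) : tfun n (x, n + 1) = (0, x + n + 1) := by
  simp only [tfun, ft, min_def, max_def]
  split_ifs <;> (rw [Prod.ext_iff]; exact ⟨by omega, by omega⟩)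

lemma tfun_eq3 {x y : ℕ} (h1 : n + 1 ≤ x) (h2 : x < y) (h3 : y ≤ 2 * n + 1) :
    tfun n (x, y) = (x - (n + 1), y - (n + 1)) := by
  simp only [tfun, ft, min_def, max_def]
  split_ifs <;> (rw [Prod.ext_iff]; exact ⟨by omega, by omega⟩)

lemma tfun_eq4 {y : ℕ} (h : n + 1 < y) (h2 : y ≤ 2 * n + 1) :
    tfun n (0, y) = (y - (n + 1), n + 1) := by
  simp only [tfun, ft, min_def, max_def]
  split_ifs <;> (rw [Prod.ext_iff]; exact ⟨by omega, by omega⟩)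

lemma tfun_tfun {p : ℕ × ℕ} (h0 : p.1 ≤ p.2) (h2 : p.2 < 2 * n + 2) :
    tfun n (tfun n p) = p := by
  obtain ⟨x, y⟩ := p
  simp only at h0 h2
  simp only [tfun, ft, min_def, max_def]
  split_ifs <;> (rw [Prod.ext_iff]; exact ⟨by omega, by omega⟩)

lemma NCross_tfun {p q : ℕ × ℕ} (hp : p.1 < p.2) (hq : q.1 < q.2)
    (hp2 : p.2 ≤ 2 * n + 1) (hq2 : q.2 ≤ 2 * n + 1) :
    NCross (tfun n p) (tfun n q) ↔ NCross p q := by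
  obtain ⟨x, y⟩ := p
  obtain ⟨u, v⟩ := q
  simp only at hp hq hp2 hq2
  simp only [tfun, ft, min_def, max_def, NCross_mk]
  split_ifs <;> omega

lemma not_NCross_d0_left {p : ℕ × ℕ} (h : p.2 ≤ n + 1) : ¬ NCross p (0, n + 1) := by
  obtain ⟨x, y⟩ := p
  simp only at h
  rw [NCross_mk]
  omega

lemma QS_side {S : Finset (ℕ × ℕ)} (hS : QS n S) {p : ℕ × ℕ} (hp : p ∈ S) :
    p.2 ≤ n + 1 ∨ (n + 1 ≤ p.1) ∨ (p.1 = 0 ∧ n + 1 < p.2) := by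
  have hnc := hS.1.2.1 p hp _ hS.2.1
  have hd := hS.1.1 p hp
  obtain ⟨x, y⟩ := p
  rw [NCross_mk] at hnc
  unfold NDiag at hd
  simp only at *
  omega

lemma QS_split {S : Finset (ℕ × ℕ)} (hn : 1 ≤ n) (hS : QS n S) :
    NTri 0 (n + 1) (S.filter (fun p => p.2 ≤ n + 1 ∧ p ≠ (0, n + 1))) := by
  classical
  obtain ⟨⟨hdiag, hcross, hmax⟩, hd0, hcs⟩ := hS
  refine ⟨?_, ?_, ?_⟩
  · intro p hp
    rw [Finset.mem_filter] at hp
    have := hdiag p hp.1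
    obtain ⟨x, y⟩ := p
    have hne : ¬(x = 0 ∧ y = n + 1) := by
      intro hc; exact hp.2.2 (by rw [Prod.ext_iff]; exact ⟨hc.1, hc.2⟩)
    unfold NDiag at *
    simp only at *
    omega
  · intro p hp q hq
    rw [Finset.mem_filter] at hp hq
    exact hcross p hp.1 q hq.1
  · intro p hpd hpn
    have hpS : p ∉ S := by
      intro hc
      apply hpn
      rw [Finset.mem_filter]
      refine ⟨hc, hpd.2.2.1, ?_⟩
      intro he
      rw [he] at hpd
      exact hpd.2.2.2 ⟨rfl, rfl⟩
    have hpd' : NDiag 0 (2 * n + 1) p := by unfold NDiag at *; omega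
    obtain ⟨q, hq, hcr⟩ := hmax p hpd' hpS
    refine ⟨q, ?_, hcr⟩
    rw [Finset.mem_filter]
    have hside := QS_side ⟨⟨hdiag, hcross, hmax⟩, hd0, hcs⟩ hq
    have hqd := hdiag q hq
    obtain ⟨x, y⟩ := p
    obtain ⟨u, v⟩ := q
    rw [NCross_mk] at hcr
    unfold NDiag at hpd hqd
    simp only at *
    refine ⟨hq, by omega, ?_⟩
    intro hc
    rw [Prod.ext_iff] at hc
    simp only at hc
    omega

lemma QS_recon {S : Finset (ℕ × ℕ)} (hn : 1 ≤ n) (hS : QS n S) :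
    S = insert (0, n + 1) ((S.filter (fun p => p.2 ≤ n + 1 ∧ p ≠ (0, n + 1))) ∪
      (S.filter (fun p => p.2 ≤ n + 1 ∧ p ≠ (0, n + 1))).image (tfun n)) := by
  classical
  ext p
  simp only [Finset.mem_insert, Finset.mem_union, Finset.mem_image, Finset.mem_filter]
  constructor
  · intro hp
    by_cases hpd0 : p = (0, n + 1)
    · exact Or.inl hpd0
    right
    have hside := QS_side hS hp
    have hd := hS.1.1 p hp
    rcases hside with h | h | h
    · exact Or.inl ⟨hp, h, hpd0⟩
    · -- B-chord, first shape
      right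
      refine ⟨tfun n p, ⟨hS.2.2 p hp, ?_, ?_⟩, ?_⟩
      · obtain ⟨x, y⟩ := p
        unfold NDiag at hd
        simp only at *
        rw [tfun_eq3 h (by omega) (by omega)]
        simp only
        omega
      · obtain ⟨x, y⟩ := p
        unfold NDiag at hd
        simp only at *
        rw [tfun_eq3 h (by omega) (by omega)]
        intro hc
        rw [Prod.ext_iff] at hc
        simp only at hc
        omega
      · exact tfun_tfun (by unfold NDiag at hd; omega) (by unfold NDiag at hd; omega)
    · right
      refine ⟨tfun n p, ⟨hS.2.2 p hp, ?_, ?_⟩, ?_⟩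
      · obtain ⟨x, y⟩ := p
        unfold NDiag at hd
        simp only at *
        rw [h.1]
        rw [tfun_eq4 h.2 (by omega)]
        all_goals simp only
        all_goals omega
      · obtain ⟨x, y⟩ := p
        unfold NDiag at hd
        simp only at *
        rw [h.1, tfun_eq4 h.2 (by omega)]
        intro hc
        rw [Prod.ext_iff] at hc
        simp only at hc
        omega
      · exact tfun_tfun (by unfold NDiag at hd; omega) (by unfold NDiag at hd; omega)
  · rintro (rfl | ⟨hp, _, _⟩ | ⟨q, ⟨hq, _, _⟩, rfl⟩)
    · exact hS.2.1
    · exact hp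
    · exact hS.2.2 q hq

lemma QS_merge {U : Finset (ℕ × ℕ)} (hn : 1 ≤ n) (hU : NTri 0 (n + 1) U) :
    QS n (insert (0, n + 1) (U ∪ U.image (tfun n))) := by
  classical
  set S := insert (0, n + 1) (U ∪ U.image (tfun n)) with hSdef
  have hmem : ∀ p, p ∈ S ↔ (p = (0, n + 1) ∨ p ∈ U ∨ ∃ q ∈ U, tfun n q = p) := by
    intro p
    simp [hSdef, Finset.mem_insert, Finset.mem_union, Finset.mem_image]
  have hbU : ∀ r ∈ U, r.1 + 1 < r.2 ∧ r.2 ≤ n + 1 ∧ ¬(r.1 = 0 ∧ r.2 = n + 1) := by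
    intro r hr
    have := hU.1 r hr
    unfold NDiag at this
    exact ⟨this.2.1, this.2.2.1, this.2.2.2⟩
  have himg : ∀ q ∈ U, (tfun n q = (q.1 + n + 1, q.2 + n + 1) ∧ q.2 ≤ n) ∨
      (tfun n q = (0, q.1 + n + 1) ∧ q.2 = n + 1 ∧ 1 ≤ q.1) := by
    intro q hq
    have hd := hbU q hq
    obtain ⟨x, y⟩ := q
    simp only at *
    rcases Nat.lt_or_ge y (n + 1) with h | h
    · exact Or.inl ⟨tfun_eq1 (by omega) (by omega), by omega⟩
    · have hy : y = n + 1 := by omega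
      subst hy
      exact Or.inr ⟨tfun_eq2 (by omega), rfl, by omega⟩
  refine ⟨⟨?_, ?_, ?_⟩, (hmem _).mpr (Or.inl rfl), ?_⟩
  · -- diagonals
    intro p hp
    rw [hmem] at hp
    rcases hp with rfl | hp | ⟨q, hq, rfl⟩
    · unfold NDiag
      refine ⟨by omega, by omega, by omega, by omega⟩
    · have := hbU p hp
      unfold NDiag
      omega
    · have hd := hbU q hq
      have hs := himg q hq
      obtain ⟨x, y⟩ := q
      simp only at hd
      unfold NDiag
      rcases hs with ⟨he, h2⟩ | ⟨he, h2, h3⟩ <;> rw [he] <;> simp only <;> omega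
  · -- non-crossing
    intro p hp q hq
    rw [hmem] at hp hq
    rcases hp with rfl | hp | ⟨p', hp', rfl⟩ <;> rcases hq with rfl | hq | ⟨q', hq', rfl⟩
    · exact NCross_irrefl _
    · have := hbU q hq
      obtain ⟨u, v⟩ := q
      rw [NCross_mk]
      simp only at *
      omega
    · have hd := hbU q' hq'
      have hs := himg q' hq'
      obtain ⟨u, v⟩ := q'
      simp only at hd
      rcases hs with ⟨he, h2⟩ | ⟨he, h2, h3⟩ <;> rw [he, NCross_mk] <;> omega
    · have := hbU p hp
      obtain ⟨u, v⟩ := p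
      rw [NCross_mk]
      simp only at *
      omega
    · exact hU.2.1 p hp q hq
    · have hd := hbU q' hq'
      have hs := himg q' hq'
      have hdp := hbU p hp
      obtain ⟨u, v⟩ := q'
      obtain ⟨x, y⟩ := p
      simp only at hd hdp
      rcases hs with ⟨he, h2⟩ | ⟨he, h2, h3⟩ <;> rw [he, NCross_mk] <;> omega
    · have hd := hbU p' hp'
      have hs := himg p' hp'
      obtain ⟨u, v⟩ := p'
      simp only at hd
      rcases hs with ⟨he, h2⟩ | ⟨he, h2, h3⟩ <;> rw [he, NCross_mk] <;> omega
    · have hd := hbU p' hp'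
      have hs := himg p' hp'
      have hdq := hbU q hq
      obtain ⟨u, v⟩ := p'
      obtain ⟨x, y⟩ := q
      simp only at hd hdq
      rcases hs with ⟨he, h2⟩ | ⟨he, h2, h3⟩ <;> rw [he, NCross_mk] <;> omega
    · have hd1 := hbU p' hp'
      have hd2 := hbU q' hq'
      rw [NCross_tfun (by omega) (by omega) (by omega) (by omega)]
      exact hU.2.1 p' hp' q' hq'
  · -- maximality
    intro p hpd hpn
    rw [hmem] at hpn
    push_neg at hpn
    obtain ⟨hp0, hpU, hpim⟩ := hpn
    obtain ⟨x, y⟩ := p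
    have hd := hpd
    unfold NDiag at hd
    simp only at hd
    by_cases hstr : 0 < x ∧ x < n + 1 ∧ n + 1 < y
    · refine ⟨(0, n + 1), (hmem _).mpr (Or.inl rfl), ?_⟩
      rw [NCross_mk]
      omega
    · have hne : ¬(x = 0 ∧ y = n + 1) := by
        intro hc
        exact hp0 (by rw [Prod.ext_iff]; exact hc)
      rcases (by omega : y ≤ n + 1 ∨ (n + 1 ≤ x) ∨ (x = 0 ∧ n + 1 < y)) with hA | hB | hB2
      · have hpd' : NDiag 0 (n + 1) (x, y) := by unfold NDiag; simp only; omega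
        obtain ⟨q, hq, hcr⟩ := hU.2.2 _ hpd' (hpU)
        exact ⟨q, (hmem _).mpr (Or.inr (Or.inl hq)), hcr⟩
      · set p' : ℕ × ℕ := (x - (n + 1), y - (n + 1)) with hp'def
        have htp : tfun n p' = (x, y) := by
          have : tfun n (x, y) = p' := tfun_eq3 hB (by omega) (by omega)
          rw [← this]
          exact tfun_tfun (by simp only; omega) (by simp only; omega)
        have hpd' : NDiag 0 (n + 1) p' := by unfold NDiag; simp only [hp'def]; omega
        have hpU' : p' ∉ U := by
          intro hc
          exact hpim p' hc htp
        obtain ⟨q, hq, hcr⟩ := hU.2.2 _ hpd' hpU'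
        refine ⟨tfun n q, (hmem _).mpr (Or.inr (Or.inr ⟨q, hq, rfl⟩)), ?_⟩
        have hdq := hbU q hq
        have := (NCross_tfun (n := n) (p := p') (q := q) (by simp only [hp'def]; omega)
          (by omega) (by simp only [hp'def]; omega) (by omega)).mpr hcr
        rwa [htp] at this
      · obtain ⟨rfl, hy⟩ := hB2
        set p' : ℕ × ℕ := (y - (n + 1), n + 1) with hp'def
        have htp : tfun n p' = (0, y) := by
          have : tfun n (0, y) = p' := tfun_eq4 hy (by omega)
          rw [← this]
          exact tfun_tfun (by simp only; omega) (by simp only; omega)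
        have hpd' : NDiag 0 (n + 1) p' := by
          unfold NDiag
          simp only [hp'def]
          omega
        have hpU' : p' ∉ U := fun hc => hpim p' hc htp
        obtain ⟨q, hq, hcr⟩ := hU.2.2 _ hpd' hpU'
        refine ⟨tfun n q, (hmem _).mpr (Or.inr (Or.inr ⟨q, hq, rfl⟩)), ?_⟩
        have hdq := hbU q hq
        have := (NCross_tfun (n := n) (p := p') (q := q) (by simp only [hp'def]; omega)
          (by omega) (by simp only [hp'def]; omega) (by omega)).mpr hcr
        rwa [htp] at this
  · -- central symmetry
    intro p hp
    rw [hmem] at hp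
    rcases hp with rfl | hp | ⟨q, hq, rfl⟩
    · refine (hmem _).mpr (Or.inl ?_)
      rw [tfun_eq2 (by omega)]
      norm_num
    · exact (hmem _).mpr (Or.inr (Or.inr ⟨p, hp, rfl⟩))
    · have hd := hbU q hq
      have : tfun n (tfun n q) = q := tfun_tfun (by omega) (by omega)
      rw [this]
      exact (hmem _).mpr (Or.inr (Or.inl hq))

lemma QS_merge_filter {U : Finset (ℕ × ℕ)} (hn : 1 ≤ n) (hU : NTri 0 (n + 1) U) :
    (insert (0, n + 1) (U ∪ U.image (tfun n))).filter
      (fun p => p.2 ≤ n + 1 ∧ p ≠ (0, n + 1)) = U := by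
  classical
  ext p
  simp only [Finset.mem_filter, Finset.mem_insert, Finset.mem_union, Finset.mem_image]
  constructor
  · rintro ⟨rfl | hp | ⟨q, hq, rfl⟩, h2, h3⟩
    · exact absurd rfl h3
    · exact hp
    · exfalso
      have hd := hU.1 q hq
      obtain ⟨x, y⟩ := q
      unfold NDiag at hd
      simp only at hd
      rcases Nat.lt_or_ge y (n + 1) with h | h
      · rw [tfun_eq1 (by omega) (by omega)] at h2
        simp only at h2
        omega
      · have hy : y = n + 1 := by omega
        subst hy
        rw [tfun_eq2 (by omega)] at h2
        simp only at h2
        omega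
  · intro hp
    have hd := hU.1 p hp
    refine ⟨Or.inr (Or.inl hp), by unfold NDiag at hd; omega, ?_⟩
    intro hc
    rw [hc] at hd
    exact hd.2.2.2 ⟨rfl, rfl⟩

end CSPairs

section Glue

variable {m : ℕ}

lemma arcMem_add (c a b x : ZMod m) : arcMem m (a + c) (b + c) (x + c) ↔ arcMem m a b x := by
  unfold arcMem
  rw [add_sub_add_right_eq_sub, add_sub_add_right_eq_sub]

lemma crossPairs_add (c a b x y : ZMod m) :
    crossPairs m (a + c) (b + c) (x + c) (y + c) ↔ crossPairs m a b x y := by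
  unfold crossPairs
  rw [arcMem_add, arcMem_add, arcMem_add, arcMem_add]

lemma rot_cancel (c : ZMod m) (e : Sym2 (ZMod m)) :
    Sym2.map (· + c) (Sym2.map (· + (-c)) e) = e := by
  induction e using Sym2.ind with | _ a b => ?_
  rw [Sym2.map_pair_eq, Sym2.map_pair_eq, neg_add_cancel_right, neg_add_cancel_right]

lemma rot_cancel' (c : ZMod m) (e : Sym2 (ZMod m)) :
    Sym2.map (· + (-c)) (Sym2.map (· + c) e) = e := by
  induction e using Sym2.ind with | _ a b => ?_
  rw [Sym2.map_pair_eq, Sym2.map_pair_eq, add_neg_cancel_right, add_neg_cancel_right]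

lemma Crosses_rot_mpr (c : ZMod m) {e f : Sym2 (ZMod m)} (h : Crosses m e f) :
    Crosses m (Sym2.map (· + c) e) (Sym2.map (· + c) f) := by
  obtain ⟨a, b, x, y, rfl, rfl, hcp⟩ := h
  exact ⟨a + c, b + c, x + c, y + c, by rw [Sym2.map_pair_eq], by rw [Sym2.map_pair_eq],
    (crossPairs_add c a b x y).mpr hcp⟩

lemma Crosses_rot (c : ZMod m) (e f : Sym2 (ZMod m)) :
    Crosses m (Sym2.map (· + c) e) (Sym2.map (· + c) f) ↔ Crosses m e f := by
  constructor
  · intro h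
    have := Crosses_rot_mpr (-c) h
    rwa [rot_cancel', rot_cancel'] at this
  · exact Crosses_rot_mpr c

lemma IsDiagonal_rot_mpr (c : ZMod m) {e : Sym2 (ZMod m)} (h : IsDiagonal m e) :
    IsDiagonal m (Sym2.map (· + c) e) := by
  obtain ⟨a, b, rfl, h1, h2, h3⟩ := h
  refine ⟨a + c, b + c, by rw [Sym2.map_pair_eq], ?_, ?_, ?_⟩
  · simpa using h1
  · intro hc
    apply h2
    have hb : b + c = (a + 1) + c := by rw [hc]; ring
    exact add_right_cancel hb
  · intro hc
    apply h3
    have hb : a + c = (b + 1) + c := by rw [hc]; ring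
    exact add_right_cancel hb

lemma IsDiagonal_rot (c : ZMod m) (e : Sym2 (ZMod m)) :
    IsDiagonal m (Sym2.map (· + c) e) ↔ IsDiagonal m e := by
  constructor
  · intro h
    have := IsDiagonal_rot_mpr (-c) h
    rwa [rot_cancel'] at this
  · exact IsDiagonal_rot_mpr c

lemma image_rot_rot (c : ZMod m) (T : Finset (Sym2 (ZMod m))) :
    (T.image (Sym2.map (· + (-c)))).image (Sym2.map (· + c)) = T := by
  classical
  rw [Finset.image_image]
  have h : ∀ e ∈ T, (Sym2.map (· + c) ∘ Sym2.map (· + (-c))) e = id e :=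
    fun e _ => rot_cancel c e
  rw [Finset.image_congr h, Finset.image_id]

lemma image_rot_rot' (c : ZMod m) (T : Finset (Sym2 (ZMod m))) :
    (T.image (Sym2.map (· + c))).image (Sym2.map (· + (-c))) = T := by
  classical
  rw [Finset.image_image]
  have h : ∀ e ∈ T, (Sym2.map (· + (-c)) ∘ Sym2.map (· + c)) e = id e :=
    fun e _ => rot_cancel' c e
  rw [Finset.image_congr h, Finset.image_id]

lemma IsTriangulation_rot_map (c : ZMod m) {T : Finset (Sym2 (ZMod m))}
    (hT : IsTriangulation m T) : IsTriangulation m (T.image (Sym2.map (· + c))) := by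
  classical
  obtain ⟨hdiag, hcross, hmax⟩ := hT
  refine ⟨?_, ?_, ?_⟩
  · intro e he
    rw [Finset.mem_image] at he
    obtain ⟨f, hf, rfl⟩ := he
    exact IsDiagonal_rot_mpr c (hdiag f hf)
  · intro e he f hf
    rw [Finset.mem_image] at he hf
    obtain ⟨e', he', rfl⟩ := he
    obtain ⟨f', hf', rfl⟩ := hf
    rw [Crosses_rot]
    exact hcross _ he' _ hf'
  · intro e hed hen
    have hed' : IsDiagonal m (Sym2.map (· + (-c)) e) := IsDiagonal_rot_mpr (-c) hed
    have hen' : Sym2.map (· + (-c)) e ∉ T := by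
      intro hc
      apply hen
      rw [← rot_cancel c e]
      exact Finset.mem_image_of_mem _ hc
    obtain ⟨f, hf, hcr⟩ := hmax _ hed' hen'
    refine ⟨Sym2.map (· + c) f, Finset.mem_image_of_mem _ hf, ?_⟩
    have := Crosses_rot_mpr c hcr
    rwa [rot_cancel] at this

lemma rot_comm (c d : ZMod m) (e : Sym2 (ZMod m)) :
    Sym2.map (· + d) (Sym2.map (· + c) e) = Sym2.map (· + c) (Sym2.map (· + d) e) := by
  induction e using Sym2.ind with | _ a b => ?_
  simp only [Sym2.map_pair_eq]
  rw [add_right_comm a, add_right_comm b]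

lemma CST_rot (n : ℕ) (c : ZMod (2*n+2)) {T : Finset (Sym2 (ZMod (2*n+2)))}
    (hT : CSTriangulation n T) : CSTriangulation n (T.image (Sym2.map (· + c))) := by
  classical
  refine ⟨IsTriangulation_rot_map c hT.1, ?_⟩
  intro e he
  rw [Finset.mem_image] at he
  obtain ⟨f, hf, rfl⟩ := he
  rw [rot_comm]
  exact Finset.mem_image_of_mem _ (hT.2 f hf)

lemma rot_centralDiag (n : ℕ) (a c : ZMod (2*n+2)) :
    Sym2.map (· + c) (centralDiag n a) = centralDiag n (a + c) := by
  unfold centralDiag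
  rw [Sym2.map_pair_eq]
  have h : a + (n : ZMod (2*n+2)) + 1 + c = a + c + (n : ZMod (2*n+2)) + 1 := by ring
  rw [h]

noncomputable def rotEquiv (n : ℕ) (a₀ : ZMod (2*n+2)) :
    {T : Finset (Sym2 (ZMod (2*n+2))) // CSTriangulation n T ∧ centralDiag n a₀ ∈ T} ≃
      {T : Finset (Sym2 (ZMod (2*n+2))) // CSTriangulation n T ∧ centralDiag n 0 ∈ T} := by
  classical
  refine
    { toFun := fun T => ⟨T.1.image (Sym2.map (· + (-a₀))), CST_rot n (-a₀) T.2.1, ?_⟩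
      invFun := fun T => ⟨T.1.image (Sym2.map (· + a₀)), CST_rot n a₀ T.2.1, ?_⟩
      left_inv := ?_
      right_inv := ?_ }
  · have h : centralDiag n 0 = Sym2.map (· + (-a₀)) (centralDiag n a₀) := by
      rw [rot_centralDiag, add_neg_cancel]
    rw [h]
    exact Finset.mem_image_of_mem _ T.2.2
  · have h : centralDiag n a₀ = Sym2.map (· + a₀) (centralDiag n 0) := by
      rw [rot_centralDiag, zero_add]
    rw [h]
    exact Finset.mem_image_of_mem _ T.2.2
  · rintro ⟨T, hT⟩
    exact Subtype.ext (image_rot_rot a₀ T)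
  · rintro ⟨T, hT⟩
    exact Subtype.ext (image_rot_rot' a₀ T)

lemma val_add_half (n : ℕ) (hn : 1 ≤ n) (a : ZMod (2*n+2)) :
    (a + ((n : ZMod (2*n+2)) + 1)).val = ft n a.val := by
  haveI : NeZero (2*n+2) := ⟨by omega⟩
  have hs : ((n : ZMod (2*n+2)) + 1).val = n + 1 := by
    rw [ZMod.val_add, ZMod.val_cast_of_lt (by omega), ZMod.val_one'' (by omega)]
    exact Nat.mod_eq_of_lt (by omega)
  have ha := ZMod.val_lt a
  rw [ZMod.val_add, hs]
  unfold ft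
  split_ifs with h
  · exact Nat.mod_eq_of_lt (by omega)
  · have he : a.val + (n + 1) = (a.val - (n + 1)) + (2*n+2) := by omega
    rw [he, Nat.add_mod_right]
    exact Nat.mod_eq_of_lt (by omega)

lemma toPair_rot_half (n : ℕ) (hn : 1 ≤ n) (e : Sym2 (ZMod (2*n+2))) :
    toPair (Sym2.map (· + ((n : ZMod (2*n+2)) + 1)) e) = tfun n (toPair e) := by
  haveI : NeZero (2*n+2) := ⟨by omega⟩
  induction e using Sym2.ind with | _ a b => ?_
  rw [Sym2.map_pair_eq, toPair_mk, toPair_mk, val_add_half n hn, val_add_half n hn]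
  rcases le_total a.val b.val with h | h
  · rw [min_eq_left h, max_eq_right h, tfun_mk]
  · rw [min_eq_right h, max_eq_left h, tfun_mk,
      min_comm (ft n b.val) (ft n a.val), max_comm (ft n b.val) (ft n a.val)]

lemma CST_iff_QS (n : ℕ) (hn : 1 ≤ n) (T : Finset (Sym2 (ZMod (2*n+2)))) :
    (CSTriangulation n T ∧ centralDiag n 0 ∈ T) ↔ QS n (T.image toPair) := by
  classical
  haveI : NeZero (2*n+2) := ⟨by omega⟩
  have h21 : 2*n+2-1 = 2*n+1 := by omega
  have htp0 : toPair (centralDiag n 0) = ((0 : ℕ), n+1) := by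
    unfold centralDiag
    rw [toPair_mk]
    have h1 : (0 : ZMod (2*n+2)).val = 0 := ZMod.val_zero
    have h2 : ((0 : ZMod (2*n+2)) + (n : ZMod (2*n+2)) + 1).val = n + 1 := by
      rw [zero_add, ZMod.val_add, ZMod.val_cast_of_lt (by omega), ZMod.val_one'' (by omega)]
      exact Nat.mod_eq_of_lt (by omega)
    rw [h1, h2, Prod.ext_iff]
    exact ⟨min_eq_left (Nat.zero_le _), max_eq_right (Nat.zero_le _)⟩
  constructor
  · rintro ⟨⟨hTri, hCS⟩, hD⟩
    refine ⟨?_, ?_, ?_⟩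
    · have h := (IsTriangulation_iff_NTri (by omega) T).mp hTri
      rwa [h21] at h
    · rw [← htp0]
      exact Finset.mem_image_of_mem _ hD
    · intro p hp
      rw [Finset.mem_image] at hp
      obtain ⟨e, he, rfl⟩ := hp
      rw [← toPair_rot_half n hn]
      exact Finset.mem_image_of_mem _ (hCS e he)
  · rintro ⟨hN, hd0, hcs⟩
    have hTri : IsTriangulation (2*n+2) T := by
      rw [IsTriangulation_iff_NTri (by omega), h21]
      exact hN
    refine ⟨⟨hTri, ?_⟩, ?_⟩
    · intro e he
      have h1 : tfun n (toPair e) ∈ T.image toPair := hcs _ (Finset.mem_image_of_mem _ he)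
      rw [← toPair_rot_half n hn] at h1
      rw [Finset.mem_image] at h1
      obtain ⟨f, hf, hfe⟩ := h1
      rwa [toPair_injective hfe] at hf
    · rw [← htp0] at hd0
      rw [Finset.mem_image] at hd0
      obtain ⟨f, hf, hfe⟩ := hd0
      rwa [toPair_injective hfe] at hf

noncomputable def csEquiv (n : ℕ) (hn : 1 ≤ n) :
    {T : Finset (Sym2 (ZMod (2*n+2))) // CSTriangulation n T ∧ centralDiag n 0 ∈ T} ≃
      {S : Finset (ℕ × ℕ) // QS n S} := by
  classical
  haveI : NeZero (2*n+2) := ⟨by omega⟩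
  refine
    { toFun := fun T => ⟨T.1.image toPair, (CST_iff_QS n hn T.1).mp T.2⟩
      invFun := fun S => ⟨S.1.image (pairToChord (2*n+2)), ?_⟩
      left_inv := ?_
      right_inv := ?_ }
  · have himg : (S.1.image (pairToChord (2*n+2))).image toPair = S.1 := by
      apply image_pairToChord_image (m := 2*n+2) (by omega)
      intro p hp
      have h := S.2.1.1 p hp
      unfold NDiag at *
      omega
    rw [CST_iff_QS n hn, himg]
    exact S.2
  · rintro ⟨T, hT⟩
    apply Subtype.ext
    show (T.image toPair).image (pairToChord (2*n+2)) = T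
    rw [Finset.image_image]
    have h : ∀ e ∈ T, (pairToChord (2*n+2) ∘ toPair) e = id e := fun e _ => pairToChord_toPair e
    rw [Finset.image_congr h, Finset.image_id]
  · rintro ⟨S, hS⟩
    apply Subtype.ext
    show (S.image (pairToChord (2*n+2))).image toPair = S
    apply image_pairToChord_image (m := 2*n+2) (by omega)
    intro p hp
    have h := hS.1.1 p hp
    unfold NDiag at *
    omega

noncomputable def qsEquiv (n : ℕ) (hn : 1 ≤ n) :
    {S : Finset (ℕ × ℕ) // QS n S} ≃ {U : Finset (ℕ × ℕ) // NTri 0 (n+1) U} := by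
  classical
  exact
    { toFun := fun S => ⟨S.1.filter (fun p => p.2 ≤ n + 1 ∧ p ≠ (0, n + 1)), QS_split hn S.2⟩
      invFun := fun U => ⟨insert (0, n + 1) (U.1 ∪ U.1.image (tfun n)), QS_merge hn U.2⟩
      left_inv := fun S => Subtype.ext (QS_recon hn S.2).symm
      right_inv := fun U => Subtype.ext (QS_merge_filter hn U.2) }

end Glue

/-- For a fixed central diagonal `D` of a regular `(2n+2)`-gon, the set of centrally-symmetric
triangulations containing `D` is in bijection with the triangulations of a convex `(n+2)`-gon,
and its cardinality is the Catalan number `Cₙ`. -/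
theorem psi_equiv_and_card (n : ℕ) (hn : 1 ≤ n)
    (D : Sym2 (ZMod (2 * n + 2))) (hD : IsCentral n D) :
    Nonempty ({T : Finset (Sym2 (ZMod (2 * n + 2))) // CSTriangulation n T ∧ D ∈ T} ≃
        {T : Finset (Sym2 (ZMod (n + 2))) // IsTriangulation (n + 2) T}) ∧
      Nat.card {T : Finset (Sym2 (ZMod (2 * n + 2))) // CSTriangulation n T ∧ D ∈ T} =
        catalan n := by
  classical
  obtain ⟨a₀, hD0⟩ := hD
  have hDc : D = centralDiag n a₀ := hD0
  subst hDc
  have E1 := rotEquiv n a₀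
  have E2 := csEquiv n hn
  have E3 := qsEquiv n hn
  have E4 : {U : Finset (ℕ × ℕ) // NTri 0 (n+1) U} ≃
      {T : Finset (Sym2 (ZMod (n+2))) // IsTriangulation (n+2) T} := by
    have h := (triEquiv (m := n+2) (by omega)).symm
    have hn1 : (n+2) - 1 = n+1 := by omega
    rwa [hn1] at h
  have E := (E1.trans E2).trans E3
  constructor
  · exact ⟨E.trans E4⟩
  · rw [Nat.card_congr E]
    have h := NTri_card (n+1) 0 (n+1) (by omega) (by omega)
    simpa using h
end

section
/- For n >= 1, the minimum over all pairs (k_1, k_2) of positive integers with k_1 + k_2 = n + 1 of the product C_{k_1 - 1} * C_{k_2 - 1} of Catalan numbers is attained at k_1 = floor((n+1)/2), k_2 = ceil((n+1)/2); that is, min_{k_1 + k_2 = n+1, k_1,k_2 >= 1} C_{k_1-1} C_{k_2-1} = C_{floor((n+1)/2)-1} * C_{ceil((n+1)/2)-1}. -/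
open scoped BigOperators

lemma catalan_key (m : ℕ) : (m + 2) * catalan (m + 1) = 2 * (2 * m + 1) * catalan m := by
  have h1 := Nat.succ_mul_centralBinom_succ m
  have h2 := succ_mul_catalan_eq_centralBinom m
  have h3 := succ_mul_catalan_eq_centralBinom (m + 1)
  have : (m + 1) * ((m + 2) * catalan (m + 1)) = (m + 1) * (2 * (2 * m + 1) * catalan m) := by
    calc (m + 1) * ((m + 2) * catalan (m + 1)) = (m + 1) * Nat.centralBinom (m + 1) := by
          rw [← h3]
      _ = 2 * (2 * m + 1) * Nat.centralBinom m := h1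
      _ = 2 * (2 * m + 1) * ((m + 1) * catalan m) := by rw [h2]
      _ = (m + 1) * (2 * (2 * m + 1) * catalan m) := by ring
  exact Nat.eq_of_mul_eq_mul_left (Nat.succ_pos m) this

lemma catalan_step (a b : ℕ) (h : b ≤ a) :
    catalan a * catalan (b + 1) ≤ catalan (a + 1) * catalan b := by
  have key : ((a + 2) * (b + 2)) * (catalan a * catalan (b + 1)) ≤
      ((a + 2) * (b + 2)) * (catalan (a + 1) * catalan b) := by
    calc ((a + 2) * (b + 2)) * (catalan a * catalan (b + 1))
        = (a + 2) * (2 * (2 * b + 1)) * (catalan a * catalan b) := by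
          rw [show ((a + 2) * (b + 2)) * (catalan a * catalan (b + 1))
            = (a + 2) * ((b + 2) * catalan (b + 1)) * catalan a by ring, catalan_key b]; ring
      _ ≤ (b + 2) * (2 * (2 * a + 1)) * (catalan a * catalan b) := by
          apply Nat.mul_le_mul_right
          nlinarith
      _ = ((a + 2) * (b + 2)) * (catalan (a + 1) * catalan b) := by
          rw [show ((a + 2) * (b + 2)) * (catalan (a + 1) * catalan b)
            = (b + 2) * ((a + 2) * catalan (a + 1)) * catalan b by ring, catalan_key a]; ring
  exact Nat.le_of_mul_le_mul_left key (by positivity)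

lemma catalan_shift (d a b : ℕ) (h : b ≤ a) :
    catalan a * catalan (b + d) ≤ catalan (a + d) * catalan b := by
  induction d generalizing a b with
  | zero => simp
  | succ d ih =>
    rcases Nat.lt_or_ge b a with hba | hba
    · have h1 : catalan a * catalan (b + (d + 1)) ≤ catalan (a + d) * catalan (b + 1) := by
        have := ih a (b + 1) hba
        calc catalan a * catalan (b + (d + 1)) = catalan a * catalan ((b + 1) + d) := by ring_nf
          _ ≤ catalan (a + d) * catalan (b + 1) := this
      calc catalan a * catalan (b + (d + 1)) ≤ catalan (a + d) * catalan (b + 1) := h1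
        _ ≤ catalan (a + d + 1) * catalan b := catalan_step (a + d) b (by omega)
        _ = catalan (a + (d + 1)) * catalan b := by ring_nf
    · have hab : a = b := le_antisymm hba h
      subst hab
      exact (mul_comm _ _).le
/-- For `n ≥ 1`, the minimum of `C_{k₁-1} · C_{k₂-1}` over positive integers with
`k₁ + k₂ = n + 1` is attained at the balanced split `k₁ = ⌊(n+1)/2⌋`, `k₂ = ⌈(n+1)/2⌉`. -/
theorem catalan_product_min (n k₁ k₂ : ℕ) (hn : 1 ≤ n) (h1 : 1 ≤ k₁) (h2 : 1 ≤ k₂)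
    (hsum : k₁ + k₂ = n + 1) :
    catalan ((n + 1) / 2 - 1) * catalan ((n + 2) / 2 - 1) ≤
      catalan (k₁ - 1) * catalan (k₂ - 1) := by
  set p := (n + 1) / 2 - 1 with hp
  set q := (n + 2) / 2 - 1 with hq
  have hpq : p ≤ q := by omega
  have hpqsum : p + q = n - 1 := by omega
  -- reduce to a := max(k₁-1, k₂-1), b := min
  rcases Nat.le_total (k₂ - 1) (k₁ - 1) with hle | hle
  · -- b = k₂ - 1 ≤ a = k₁ - 1
    have hbp : k₂ - 1 ≤ p := by omega
    have hd : k₁ - 1 = q + (p - (k₂ - 1)) := by omega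
    have := catalan_shift (p - (k₂ - 1)) q (k₂ - 1) (by omega)
    have h2' : (k₂ - 1) + (p - (k₂ - 1)) = p := by omega
    rw [h2', ← hd] at this
    calc catalan p * catalan q = catalan q * catalan p := mul_comm _ _
      _ ≤ catalan (k₁ - 1) * catalan (k₂ - 1) := this
  · -- b = k₁ - 1 ≤ a = k₂ - 1
    have hbp : k₁ - 1 ≤ p := by omega
    have hd : k₂ - 1 = q + (p - (k₁ - 1)) := by omega
    have := catalan_shift (p - (k₁ - 1)) q (k₁ - 1) (by omega)
    have h2' : (k₁ - 1) + (p - (k₁ - 1)) = p := by omega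
    rw [h2', ← hd] at this
    calc catalan p * catalan q = catalan q * catalan p := mul_comm _ _
      _ ≤ catalan (k₂ - 1) * catalan (k₁ - 1) := this
      _ = catalan (k₁ - 1) * catalan (k₂ - 1) := mul_comm _ _
end
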